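/- arXiv:2510.05380 — 10 statements merged into one kernel-verified Lean document; each statement's English description precedes it below -/
import Mathlib

section
/- Let A and B be finite posets and let g : A → B and f : B → A be order-preserving maps forming a Galois connection g ⊣ f (i.e. for all a ∈ A and b ∈ B, g(a) ≤ b if and only if a ≤ f(b)). Then for every b ∈ A and every a ∈ B, Σ_{b' ∈ B with f(b') = b} μ_B(a, b') = Σ_{a' ∈ A with g(a') = a} μ_A(a', b). -/
-- `μ` is the Möbius function of the finite poset `P`: `μ x y` (for `y ≤ x`) is the unique
-- integer-valued function such that `μ x y = 0` whenever `¬ y ≤ x`, and for all `c ≤ a`,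
-- `∑_{b : c ≤ b ≤ a} μ b c = δ_{a,c}` and `∑_{b : c ≤ b ≤ a} μ a b = δ_{a,c}`.
open Classical in
def IsMobiusFn {P : Type*} [PartialOrder P] [Fintype P] (μ : P → P → ℤ) : Prop :=
  (∀ x y : P, ¬ y ≤ x → μ x y = 0) ∧
  (∀ a c : P, c ≤ a →
    (∑ b ∈ Finset.univ.filter (fun b => c ≤ b ∧ b ≤ a), μ b c) = if a = c then 1 else 0) ∧
  (∀ a c : P, c ≤ a →
    (∑ b ∈ Finset.univ.filter (fun b => c ≤ b ∧ b ≤ a), μ a b) = if a = c then 1 else 0)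

/-!
Both sides equal the double sum of `μ_A a' b * μ_B a b'` over the pairs with `g a' ≤ b'`,
equivalently `a' ≤ f b'`. Summing first over `a' ≤ f b'` collapses the `μ_A`-column to the
indicator of `f b' = b`; summing first over `b' ≥ g a'` collapses the `μ_B`-row to the
indicator of `g a' = a`.
-/

open Finset

namespace IsMobiusFn

variable {P : Type*} [PartialOrder P] [Fintype P] {μ : P → P → ℤ}

open Classical in
theorem sum_filter_le (hμ : IsMobiusFn μ) (a c : P) :
    ∑ x ∈ univ.filter (· ≤ a), μ x c = if a = c then 1 else 0 := by
  by_cases hca : c ≤ a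
  · rw [← hμ.2.1 a c hca]
    refine (sum_subset (fun x hx => ?_) fun x hx hx' => hμ.1 x c ?_).symm <;> simp_all
  · rw [if_neg (by rintro rfl; exact hca le_rfl)]
    exact sum_eq_zero fun x hx => hμ.1 x c fun hcx => hca (hcx.trans (by simpa using hx))

open Classical in
theorem sum_filter_ge (hμ : IsMobiusFn μ) (a c : P) :
    ∑ y ∈ univ.filter (c ≤ ·), μ a y = if a = c then 1 else 0 := by
  by_cases hca : c ≤ a
  · rw [← hμ.2.2 a c hca]
    refine (sum_subset (fun y hy => ?_) fun y hy hy' => hμ.1 a y ?_).symm <;> simp_all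
  · rw [if_neg (by rintro rfl; exact hca le_rfl)]
    exact sum_eq_zero fun y hy => hμ.1 a y fun hya => hca ((by simpa using hy : c ≤ y).trans hya)

end IsMobiusFn

open Classical in
-- Let `A` and `B` be finite posets and `g : A → B`, `f : B → A` order-preserving maps
-- forming a Galois connection `g ⊣ f`.  Then for every `b ∈ A` and every `a ∈ B`,
-- `∑_{b' ∈ B, f b' = b} μ_B a b' = ∑_{a' ∈ A, g a' = a} μ_A a' b`.
theorem stmt0_general {A B : Type*} [PartialOrder A] [Fintype A] [PartialOrder B] [Fintype B]
    (g : A → B) (f : B → A)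
    (hgal : ∀ (a : A) (b : B), g a ≤ b ↔ a ≤ f b)
    (μA : A → A → ℤ) (hμA : IsMobiusFn μA)
    (μB : B → B → ℤ) (hμB : IsMobiusFn μB)
    (b : A) (a : B) :
    (∑ b' ∈ Finset.univ.filter (fun b' : B => f b' = b), μB a b') =
      (∑ a' ∈ Finset.univ.filter (fun a' : A => g a' = a), μA a' b) := by
  calc ∑ b' ∈ univ.filter (fun b' : B => f b' = b), μB a b'
      = ∑ b', (if f b' = b then 1 else 0) * μB a b' := by simp [sum_filter]
    _ = ∑ b', ∑ a' ∈ univ.filter (· ≤ f b'), μA a' b * μB a b' := by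
        simp_rw [← hμA.sum_filter_le, sum_mul]
    _ = ∑ a', ∑ b' ∈ univ.filter (g a' ≤ ·), μA a' b * μB a b' :=
        sum_comm' fun b' a' => by simp [hgal]
    _ = ∑ a', if a = g a' then μA a' b else 0 := by
        simp_rw [← mul_sum, hμB.sum_filter_ge, mul_ite, mul_one, mul_zero]
    _ = ∑ a' ∈ univ.filter (fun a' : A => g a' = a), μA a' b := by simp [sum_filter, eq_comm]

open Classical in
theorem stmt0 {A B : Type*} [PartialOrder A] [Fintype A] [PartialOrder B] [Fintype B]
    (g : A → B) (f : B → A) (hg : Monotone g) (hf : Monotone f)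
    (hgal : ∀ (a : A) (b : B), g a ≤ b ↔ a ≤ f b)
    (μA : A → A → ℤ) (hμA : IsMobiusFn μA)
    (μB : B → B → ℤ) (hμB : IsMobiusFn μB)
    (b : A) (a : B) :
    (∑ b' ∈ Finset.univ.filter (fun b' : B => f b' = b), μB a b') =
      (∑ a' ∈ Finset.univ.filter (fun a' : A => g a' = a), μA a' b) :=
  stmt0_general g f hgal μA hμA μB hμB b a
end

section
/- Let A and B be finite posets and let g : A → B and f : B → A be order-preserving maps forming a Galois connection g ⊣ f. Then for every b ∈ A, c_A(b) = Σ_{b' ∈ B with f(b') = b} c_B(b'). -/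
-- `c_P(x) = ∑_{y ∈ P, y ≥ x} μ_P(y, x)`.
open Classical in
noncomputable def coefCFn {P : Type*} [PartialOrder P] [Fintype P] (μ : P → P → ℤ) (x : P) : ℤ :=
  ∑ y ∈ Finset.univ.filter (fun y => x ≤ y), μ y x

open Finset

open Classical

theorem filter_le_and_le_eq_empty {P : Type*} [Preorder P] [Fintype P] {a c : P}
    (hca : ¬ c ≤ a) : univ.filter (fun b => c ≤ b ∧ b ≤ a) = ∅ :=
  filter_false_of_mem fun _ _ h => hca (h.1.trans h.2)

namespace IsMobiusFn

variable {P : Type*} [PartialOrder P] [Fintype P] {μ : P → P → ℤ}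

theorem sum_left_eq_ite (hμ : IsMobiusFn μ) (a c : P) :
    ∑ b ∈ univ.filter (fun b => c ≤ b ∧ b ≤ a), μ b c = if a = c then 1 else 0 := by
  by_cases hca : c ≤ a
  · exact hμ.2.1 a c hca
  · rw [filter_le_and_le_eq_empty hca, sum_empty, if_neg (by rintro rfl; exact hca le_rfl)]

theorem sum_right_eq_ite (hμ : IsMobiusFn μ) (a c : P) :
    ∑ b ∈ univ.filter (fun b => c ≤ b ∧ b ≤ a), μ a b = if a = c then 1 else 0 := by
  by_cases hca : c ≤ a
  · exact hμ.2.2 a c hca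
  · rw [filter_le_and_le_eq_empty hca, sum_empty, if_neg (by rintro rfl; exact hca le_rfl)]

theorem sum_coefCFn_ge_eq_one (hμ : IsMobiusFn μ) (x : P) :
    ∑ y ∈ univ.filter (x ≤ ·), coefCFn μ y = 1 := by
  unfold coefCFn
  calc ∑ y ∈ univ.filter (x ≤ ·), ∑ z ∈ univ.filter (y ≤ ·), μ z y
      = ∑ z, ∑ y ∈ univ.filter (fun y => x ≤ y ∧ y ≤ z), μ z y :=
        sum_comm' fun y z => by simp
    _ = 1 := by simp_rw [hμ.sum_right_eq_ite, sum_ite_eq', mem_univ, if_true]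

end IsMobiusFn

open Classical in
-- Let `A` and `B` be finite posets and `g : A → B`, `f : B → A` order-preserving maps
-- forming a Galois connection `g ⊣ f`.  Then for every `b ∈ A`,
-- `c_A(b) = ∑_{b' ∈ B, f b' = b} c_B(b')`.
theorem stmt1_general {A B : Type*} [PartialOrder A] [Fintype A] [PartialOrder B] [Fintype B]
    (g : A → B) (f : B → A)
    (hgal : ∀ (a : A) (b : B), g a ≤ b ↔ a ≤ f b)
    (μA : A → A → ℤ) (hμA : IsMobiusFn μA)
    (μB : B → B → ℤ) (hμB : IsMobiusFn μB)
    (b : A) :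
    coefCFn μA b = ∑ b' ∈ Finset.univ.filter (fun b' : B => f b' = b), coefCFn μB b' := by
  calc coefCFn μA b
      = ∑ a ∈ univ.filter (b ≤ ·), μA a b * ∑ b' ∈ univ.filter (g a ≤ ·), coefCFn μB b' := by
        simp only [hμB.sum_coefCFn_ge_eq_one, mul_one]
        rfl
    _ = ∑ a ∈ univ.filter (b ≤ ·), ∑ b' ∈ univ.filter (a ≤ f ·), μA a b * coefCFn μB b' := by
        simp_rw [mul_sum, hgal]
    _ = ∑ b', (∑ a ∈ univ.filter (fun a => b ≤ a ∧ a ≤ f b'), μA a b) * coefCFn μB b' := by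
        simp_rw [sum_mul]
        exact sum_comm' fun a b' => by simp
    _ = ∑ b' ∈ univ.filter (fun b' => f b' = b), coefCFn μB b' := by
        simp_rw [hμA.sum_left_eq_ite, ite_mul, one_mul, zero_mul, ← sum_filter]

open Classical in
theorem stmt1 {A B : Type*} [PartialOrder A] [Fintype A] [PartialOrder B] [Fintype B]
    (g : A → B) (f : B → A) (hg : Monotone g) (hf : Monotone f)
    (hgal : ∀ (a : A) (b : B), g a ≤ b ↔ a ≤ f b)
    (μA : A → A → ℤ) (hμA : IsMobiusFn μA)
    (μB : B → B → ℤ) (hμB : IsMobiusFn μB)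
    (b : A) :
    coefCFn μA b = ∑ b' ∈ Finset.univ.filter (fun b' : B => f b' = b), coefCFn μB b' :=
  stmt1_general g f hgal μA hμA μB hμB b
end

section
/- Let A be a finite poset and let a ∈ A be a linear point with witness a↑. Let r_{a↑} : A → A∖{a} be the map sending every b ≠ a to itself and a to a↑, and let i : A∖{a} → A be the inclusion. Then r_{a↑} is order-preserving, r_{a↑} ∘ i = id, and i ∘ r_{a↑} is homotopic to the identity of X_A; that is, A∖{a} is a deformation retract of A. -/
/-!
The underlying map of the retraction is `Function.update id a aUp`; linearity of `a` is exactly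
what makes it monotone. It lies above the identity, and in the lower set topology `b ≤ c` means
`b ⤳ c`, i.e. every open set containing `c` contains `b`. Hence the homotopy that is the
retraction at time `0` and the identity at all later times is continuous.
-/

open Topology

namespace ContinuousMap

theorem Homotopic.of_specializes {X Y : Type*} [TopologicalSpace X] [TopologicalSpace Y]
    {f g : C(X, Y)} (h : ∀ x, g x ⤳ f x) : f.Homotopic g := by
  classical
  let H : unitInterval × X → Y := fun p => if p.1 = 0 then f p.2 else g p.2
  have hH : Continuous H := by
    refine continuous_def.2 fun U hU => ?_
    have hpre : H ⁻¹' U = (Set.univ ×ˢ (f ⁻¹' U)) ∪ ({t | t ≠ 0} ×ˢ (g ⁻¹' U)) := by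
      ext ⟨t, x⟩
      by_cases ht : t = 0
      · subst ht
        simp [H]
      · simp only [Set.mem_preimage, H, if_neg ht, Set.mem_union, Set.mem_prod, Set.mem_univ,
          true_and]
        exact ⟨fun hx => Or.inr ⟨ht, hx⟩, fun hx => hx.elim ((h x).mem_open hU) And.right⟩
    rw [hpre]
    exact (isOpen_univ.prod (hU.preimage f.continuous)).union
      (isOpen_ne.prod (hU.preimage g.continuous))
  exact ⟨{ toFun := H
           continuous_toFun := hH
           map_zero_left := fun x => if_pos rfl
           map_one_left := fun x => if_neg one_ne_zero }⟩

end ContinuousMap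

namespace Topology.WithLowerSet

theorem map_homotopic_id_of_le {A : Type*} [Preorder A] {f : A →o A} (h : ∀ b, b ≤ f b) :
    (map f).Homotopic (ContinuousMap.id (WithLowerSet A)) :=
  ContinuousMap.Homotopic.of_specializes fun b => toLowerSet_specializes_toLowerSet.2 (h b)

end Topology.WithLowerSet

section LinearPoint

variable {A : Type*} [PartialOrder A] [DecidableEq A] {a aUp : A}

theorem le_update_id (h : a ≤ aUp) (b : A) : b ≤ Function.update id a aUp b := by
  rcases eq_or_ne b a with rfl | hb
  · simpa using h
  · simp [hb]

theorem monotone_update_id_of_linear (h1 : a ≤ aUp) (h2 : ∀ b, a < b → aUp ≤ b) :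
    Monotone (Function.update id a aUp) := by
  intro b c hbc
  by_cases hb : b = a <;> by_cases hc : c = a
  · subst hb hc
    exact le_rfl
  · subst hb
    simpa [hc] using h2 c (hbc.lt_of_ne (Ne.symm hc))
  · subst hc
    simpa [hb] using hbc.trans h1
  · simpa [hb, hc] using hbc

end LinearPoint

theorem stmt3_general {A : Type*} [PartialOrder A] (a aUp : A)
    (h1 : a < aUp) (h2 : ∀ b : A, a < b → aUp ≤ b)
    (r : A → {b : A // b ≠ a})
    (hrne : ∀ (b : A) (hb : b ≠ a), r b = ⟨b, hb⟩)
    (hra : r a = ⟨aUp, h1.ne'⟩) :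
    ∃ hmono : Monotone r,
      (∀ b : {b : A // b ≠ a}, r (b : A) = b) ∧
        ContinuousMap.Homotopic
          (WithLowerSet.map ⟨fun b : A => ((r b : A)), fun _ _ h => hmono h⟩)
          (ContinuousMap.id (WithLowerSet A)) := by
  classical
  have hr : ∀ b, (r b : A) = Function.update id a aUp b := fun b => by
    rcases eq_or_ne b a with rfl | hb
    · simp [hra]
    · simp [hrne b hb, hb]
  have hmono : Monotone r := fun b c hbc => by
    simpa only [← Subtype.coe_le_coe, hr] using monotone_update_id_of_linear h1.le h2 hbc
  refine ⟨hmono, fun b => hrne b b.2, WithLowerSet.map_homotopic_id_of_le fun b => ?_⟩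
  exact (le_update_id h1.le b).trans_eq (hr b).symm

theorem stmt3 {A : Type*} [PartialOrder A] [Fintype A] (a aUp : A)
    (h1 : a < aUp) (h2 : ∀ b : A, a < b → aUp ≤ b)
    (r : A → {b : A // b ≠ a})
    (hrne : ∀ (b : A) (hb : b ≠ a), r b = ⟨b, hb⟩)
    (hra : r a = ⟨aUp, h1.ne'⟩) :
    ∃ hmono : Monotone r,
      (∀ b : {b : A // b ≠ a}, r (b : A) = b) ∧
        ContinuousMap.Homotopic
          (WithLowerSet.map ⟨fun b : A => ((r b : A)), fun _ _ h => hmono h⟩)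
          (ContinuousMap.id (WithLowerSet A)) :=
  stmt3_general a aUp h1 h2 r hrne hra
end

section
/- Let A be a finite poset and let a ∈ A be a colinear point with witness a↓. Let r_{a↓} : A → A∖{a} be the map sending every b ≠ a to itself and a to a↓, and let i : A∖{a} → A be the inclusion. Then r_{a↓} is order-preserving, r_{a↓} ∘ i = id, and i ∘ r_{a↓} is homotopic to the identity of X_A; that is, A∖{a} is a deformation retract of A. -/
open Topology

/-- The homotopy jumps from `f` to `g` at time `1`; it is continuous because open sets are lower
sets, so `g x ∈ U` forces `f x ∈ U`. -/
theorem ContinuousMap.homotopic_of_le {X α : Type*} [TopologicalSpace X] [Preorder α]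
    (f g : C(X, WithLowerSet α)) (hfg : ∀ x, f x ≤ g x) : f.Homotopic g := by
  refine ⟨⟨⟨fun p => if p.1 = 1 then g p.2 else f p.2, ?_⟩, fun x => by simp, fun x => by simp⟩⟩
  refine continuous_def.mpr fun U hU => ?_
  have hUl : IsLowerSet U := IsLowerSet.isOpen_iff_isLowerSet.mp hU
  have hpre : (fun p : unitInterval × X => if p.1 = 1 then g p.2 else f p.2) ⁻¹' U =
      (Set.univ ×ˢ (g ⁻¹' U)) ∪ ({1}ᶜ ×ˢ (f ⁻¹' U)) := by
    ext ⟨t, x⟩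
    have hgf : g x ∈ U → f x ∈ U := hUl (hfg x)
    by_cases ht : t = 1
    · simp [ht]
    · simp [ht]; tauto
  rw [hpre]
  exact (isOpen_univ.prod (hU.preimage g.continuous)).union
    (isOpen_compl_singleton.prod (hU.preimage f.continuous))

theorem stmt4_general {A : Type*} [PartialOrder A] (a aDn : A)
    (h1 : aDn < a) (h2 : ∀ b : A, b < a → b ≤ aDn)
    (r : A → {b : A // b ≠ a})
    (hrne : ∀ (b : A) (hb : b ≠ a), r b = ⟨b, hb⟩)
    (hra : r a = ⟨aDn, h1.ne⟩) :
    ∃ hmono : Monotone r,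
      (∀ b : {b : A // b ≠ a}, r (b : A) = b) ∧
        ContinuousMap.Homotopic
          (WithLowerSet.map ⟨fun b : A => ((r b : A)), fun _ _ h => hmono h⟩)
          (ContinuousMap.id (WithLowerSet A)) := by
  have hr_le : ∀ b, (r b : A) ≤ b := fun b => by
    by_cases hb : b = a
    · subst hb; rw [hra]; exact h1.le
    · rw [hrne b hb]
  have hmono : Monotone r := fun b c hbc => by
    rw [← Subtype.coe_le_coe]
    by_cases hc : c = a
    · subst hc
      rw [hra]
      by_cases hb : b = c
      · subst hb; rw [hra]
      · exact (hr_le b).trans (h2 b (lt_of_le_of_ne hbc hb))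
    · rw [hrne c hc]
      exact (hr_le b).trans hbc
  exact ⟨hmono, fun b => hrne b.1 b.2, ContinuousMap.homotopic_of_le _ _ hr_le⟩

theorem stmt4 {A : Type*} [PartialOrder A] [Fintype A] (a aDn : A)
    (h1 : aDn < a) (h2 : ∀ b : A, b < a → b ≤ aDn)
    (r : A → {b : A // b ≠ a})
    (hrne : ∀ (b : A) (hb : b ≠ a), r b = ⟨b, hb⟩)
    (hra : r a = ⟨aDn, h1.ne⟩) :
    ∃ hmono : Monotone r,
      (∀ b : {b : A // b ≠ a}, r (b : A) = b) ∧
        ContinuousMap.Homotopic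
          (WithLowerSet.map ⟨fun b : A => ((r b : A)), fun _ _ h => hmono h⟩)
          (ContinuousMap.id (WithLowerSet A)) :=
  stmt4_general a aDn h1 h2 r hrne hra
end

section
/- Let A be a finite poset, a ∈ A, and let j : A∖{a} → A be the inclusion. Then: (1) a is a linear point of A if and only if j admits a left adjoint, i.e. there exists an order-preserving r : A → A∖{a} with r ⊣ j; moreover in that case r = r_{a↑} (the map fixing every b ≠ a and sending a to a↑). (2) a is a colinear point of A if and only if j admits a right adjoint, i.e. there exists an order-preserving r : A → A∖{a} with j ⊣ r; moreover in that case r = r_{a↓} (the map fixing every b ≠ a and sending a to a↓). -/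
/-! The left adjoint `r` of the inclusion `A ∖ {a} → A`, if it exists, sends `a` to the least
element strictly above `a`: `r a ≤ y ↔ a ≤ y` for every `y ≠ a`, i.e. `r a` is the minimum of
`{b | a < b}`. Conversely, if that minimum `a↑` exists, collapsing `a` onto `a↑` is left adjoint
to the inclusion, and by uniqueness of adjoints it is the only one. The colinear case is dual. -/

namespace PointRemoval

variable {A : Type*} {a c : A}

open Classical in
/-- The paper's `r_c`, used with `c = a↑` and `c = a↓`. -/
noncomputable def collapse (a c : A) (hc : c ≠ a) : A → {b : A // b ≠ a} :=
  fun x => if h : x = a then ⟨c, hc⟩ else ⟨x, h⟩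

@[simp]
lemma collapse_self (hc : c ≠ a) : collapse a c hc a = ⟨c, hc⟩ := by
  simp [collapse]

@[simp]
lemma collapse_of_ne (hc : c ≠ a) {b : A} (hb : b ≠ a) : collapse a c hc b = ⟨b, hb⟩ := by
  simp [collapse, hb]

variable [PartialOrder A]

lemma gc_collapse_val (h : IsLeast (Set.Ioi a) c) :
    GaloisConnection (collapse a c h.1.ne') Subtype.val := by
  intro x y
  by_cases hx : x = a
  · subst hx
    rw [collapse_self, ← Subtype.coe_le_coe]
    exact ⟨h.1.le.trans, fun hy => h.2 (hy.lt_of_ne (Ne.symm y.2))⟩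
  · rw [collapse_of_ne _ hx, ← Subtype.coe_le_coe]

lemma gc_val_collapse (h : IsGreatest (Set.Iio a) c) :
    GaloisConnection Subtype.val (collapse a c h.1.ne) := by
  intro y x
  by_cases hx : x = a
  · subst hx
    rw [collapse_self, ← Subtype.coe_le_coe]
    exact ⟨fun hy => h.2 (hy.lt_of_ne y.2), (·.trans h.1.le)⟩
  · rw [collapse_of_ne _ hx, ← Subtype.coe_le_coe]

lemma isLeast_Ioi_of_gc_val {r : A → {b : A // b ≠ a}} (gc : GaloisConnection r Subtype.val) :
    IsLeast (Set.Ioi a) (r a) :=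
  ⟨(gc.le_u_l a).lt_of_ne (Ne.symm (r a).2), fun b hb => (gc a ⟨b, hb.ne'⟩).mpr hb.le⟩

lemma isGreatest_Iio_of_val_gc {r : A → {b : A // b ≠ a}} (gc : GaloisConnection Subtype.val r) :
    IsGreatest (Set.Iio a) (r a) :=
  ⟨(gc.l_u_le a).lt_of_ne (r a).2, fun b hb => (gc ⟨b, hb.ne⟩ a).mp hb.le⟩

lemma eq_collapse_of_gc_val (h : IsLeast (Set.Ioi a) c)
    {r : A → {b : A // b ≠ a}} (gc : GaloisConnection r Subtype.val) :
    r = collapse a c h.1.ne' :=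
  funext fun _ => gc.l_unique (gc_collapse_val h) fun _ => rfl

lemma eq_collapse_of_val_gc (h : IsGreatest (Set.Iio a) c)
    {r : A → {b : A // b ≠ a}} (gc : GaloisConnection Subtype.val r) :
    r = collapse a c h.1.ne :=
  funext fun _ => gc.u_unique (gc_val_collapse h) fun _ => rfl

end PointRemoval

open PointRemoval in
theorem stmt5_general {A : Type*} [PartialOrder A] (a : A) :
    ((∃ aUp : A, a < aUp ∧ ∀ b : A, a < b → aUp ≤ b) ↔
      ∃ r : A → {b : A // b ≠ a}, Monotone r ∧
        ∀ (x : A) (y : {b : A // b ≠ a}), r x ≤ y ↔ x ≤ (y : A)) ∧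
    (∀ (aUp : A), a < aUp → (∀ b : A, a < b → aUp ≤ b) →
      ∀ r : A → {b : A // b ≠ a},
        (∀ (x : A) (y : {b : A // b ≠ a}), r x ≤ y ↔ x ≤ (y : A)) →
        (∀ (b : A) (_ : b ≠ a), ((r b : A)) = b) ∧ ((r a : A)) = aUp) ∧
    ((∃ aDn : A, aDn < a ∧ ∀ b : A, b < a → b ≤ aDn) ↔
      ∃ r : A → {b : A // b ≠ a}, Monotone r ∧
        ∀ (y : {b : A // b ≠ a}) (x : A), (y : A) ≤ x ↔ y ≤ r x) ∧
    (∀ (aDn : A), aDn < a → (∀ b : A, b < a → b ≤ aDn) →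
      ∀ r : A → {b : A // b ≠ a},
        (∀ (y : {b : A // b ≠ a}) (x : A), (y : A) ≤ x ↔ y ≤ r x) →
        (∀ (b : A) (_ : b ≠ a), ((r b : A)) = b) ∧ ((r a : A)) = aDn) := by
  refine ⟨⟨fun ⟨aUp, hlt, hmin⟩ => ?_, fun ⟨r, _, gc⟩ => ⟨r a, isLeast_Ioi_of_gc_val gc⟩⟩,
    fun aUp hlt hmin r gc => ?_,
    ⟨fun ⟨aDn, hlt, hmax⟩ => ?_, fun ⟨r, _, gc⟩ => ⟨r a, isGreatest_Iio_of_val_gc gc⟩⟩,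
    fun aDn hlt hmax r gc => ?_⟩
  · exact ⟨_, (gc_collapse_val ⟨hlt, hmin⟩).monotone_l, gc_collapse_val ⟨hlt, hmin⟩⟩
  · exact eq_collapse_of_gc_val ⟨hlt, hmin⟩ gc ▸ ⟨fun b hb => by simp [hb], by simp⟩
  · exact ⟨_, (gc_val_collapse ⟨hlt, hmax⟩).monotone_u, gc_val_collapse ⟨hlt, hmax⟩⟩
  · exact eq_collapse_of_val_gc ⟨hlt, hmax⟩ gc ▸ ⟨fun b hb => by simp [hb], by simp⟩

theorem stmt5 {A : Type*} [PartialOrder A] [Fintype A] (a : A) :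
    ((∃ aUp : A, a < aUp ∧ ∀ b : A, a < b → aUp ≤ b) ↔
      ∃ r : A → {b : A // b ≠ a}, Monotone r ∧
        ∀ (x : A) (y : {b : A // b ≠ a}), r x ≤ y ↔ x ≤ (y : A)) ∧
    (∀ (aUp : A), a < aUp → (∀ b : A, a < b → aUp ≤ b) →
      ∀ r : A → {b : A // b ≠ a},
        (∀ (x : A) (y : {b : A // b ≠ a}), r x ≤ y ↔ x ≤ (y : A)) →
        (∀ (b : A) (_ : b ≠ a), ((r b : A)) = b) ∧ ((r a : A)) = aUp) ∧
    ((∃ aDn : A, aDn < a ∧ ∀ b : A, b < a → b ≤ aDn) ↔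
      ∃ r : A → {b : A // b ≠ a}, Monotone r ∧
        ∀ (y : {b : A // b ≠ a}) (x : A), (y : A) ≤ x ↔ y ≤ r x) ∧
    (∀ (aDn : A), aDn < a → (∀ b : A, b < a → b ≤ aDn) →
      ∀ r : A → {b : A // b ≠ a},
        (∀ (y : {b : A // b ≠ a}) (x : A), (y : A) ≤ x ↔ y ≤ r x) →
        (∀ (b : A) (_ : b ≠ a), ((r b : A)) = b) ∧ ((r a : A)) = aDn) :=
  stmt5_general a
end

section
/- For every log-message family M, every hyperedge a ∈ A, every i ∈ a, and all x, z ∈ E_i, one has |(logBP(M))_{a→i}(x) − (logBP(M))_{a→i}(z)| ≤ (max_{u∈E_i} H_i(u) − min_{u∈E_i} H_i(u)) + (max_{y∈E_a} H_a(y) − min_{y∈E_a} H_a(y)). In particular this bound is independent of M. -/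
-- Setup: `I` a finite index set, `E i` nonempty finite sets, `A : Finset (Finset I)` a set of
-- hyperedges.  For `a ∈ A`, `E_a = ∏_{i ∈ a} E i`.  Hamiltonians `HI i : E i → ℝ` and
-- `HA a : E_a → ℝ` are given.  A log-message family is
-- `M : (b : A) → (j : b) → E j → ℝ`.  The log belief propagation operator is
-- `(logBP M)_{a→i}(x) = HI i x + ln ∑_{y ∈ E_a, y_i = x} exp(−HA a y + Σ_{j ∈ a, j ≠ i} Σ_{b ∈ A, j ∈ b, b ≠ a} M_{b→j}(y_j))`.
noncomputable def logBP {I : Type} [DecidableEq I] (E : I → Type)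
    [∀ i, Fintype (E i)] [∀ i, DecidableEq (E i)]
    (A : Finset (Finset I))
    (HI : (i : I) → E i → ℝ) (HA : (a : Finset I) → ((i : a) → E i) → ℝ)
    (M : (b : A) → (j : (b : Finset I)) → E j → ℝ)
    (a : A) (i : (a : Finset I)) (x : E i) : ℝ :=
  HI i x + Real.log (∑ y ∈ Finset.univ.filter (fun y : (j : (a : Finset I)) → E j => y i = x),
    Real.exp (-(HA a y) + ∑ j : (a : Finset I), ∑ b : A,
      if h : (j : I) ∈ (b : Finset I) ∧ b ≠ a ∧ j ≠ i
      then M b ⟨j, h.1⟩ (y j) else 0))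

section aux

variable {I : Type} [Fintype I] [DecidableEq I] (E : I → Type)
    [∀ i, Fintype (E i)] [∀ i, DecidableEq (E i)] [∀ i, Nonempty (E i)]
    (A : Finset (Finset I))
    (HI : (i : I) → E i → ℝ) (HA : (a : Finset I) → ((i : a) → E i) → ℝ)
    (M : (b : A) → (j : (b : Finset I)) → E j → ℝ)
    (a : A) (i : (a : Finset I))

/-- the message part of the exponent -/
noncomputable def Taux (y : (j : (a : Finset I)) → E j) : ℝ :=
  ∑ j : (a : Finset I), ∑ b : A,
      if h : (j : I) ∈ (b : Finset I) ∧ b ≠ a ∧ j ≠ i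
      then M b ⟨j, h.1⟩ (y j) else 0

lemma Taux_update (y : (j : (a : Finset I)) → E j) (z : E i) :
    Taux E A M a i (Function.update y i z) = Taux E A M a i y := by
  unfold Taux
  refine Finset.sum_congr rfl fun j _ => Finset.sum_congr rfl fun b _ => ?_
  by_cases h : (j : I) ∈ (b : Finset I) ∧ b ≠ a ∧ j ≠ i
  · rw [dif_pos h, dif_pos h, Function.update_of_ne h.2.2]
  · rw [dif_neg h, dif_neg h]

lemma logBP_eq (x : E i) :
    logBP E A HI HA M a i x = HI i x +
      Real.log (∑ y ∈ Finset.univ.filter (fun y : (j : (a : Finset I)) → E j => y i = x),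
        Real.exp (-(HA a y) + Taux E A M a i y)) := rfl

lemma key_sum_le (x z : E i) :
    (∑ y ∈ Finset.univ.filter (fun y : (j : (a : Finset I)) → E j => y i = x),
        Real.exp (-(HA a y) + Taux E A M a i y)) ≤
    Real.exp (Finset.univ.sup' Finset.univ_nonempty (HA a)
        - Finset.univ.inf' Finset.univ_nonempty (HA a)) *
      (∑ y ∈ Finset.univ.filter (fun y : (j : (a : Finset I)) → E j => y i = z),
        Real.exp (-(HA a y) + Taux E A M a i y)) := by
  rw [Finset.mul_sum]
  rw [show (∑ y ∈ Finset.univ.filter (fun y : (j : (a : Finset I)) → E j => y i = z),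
        Real.exp (Finset.univ.sup' Finset.univ_nonempty (HA a)
        - Finset.univ.inf' Finset.univ_nonempty (HA a)) *
        Real.exp (-(HA a y) + Taux E A M a i y)) =
      (∑ y ∈ Finset.univ.filter (fun y : (j : (a : Finset I)) → E j => y i = x),
        Real.exp (Finset.univ.sup' Finset.univ_nonempty (HA a)
        - Finset.univ.inf' Finset.univ_nonempty (HA a)) *
        Real.exp (-(HA a (Function.update y i z)) + Taux E A M a i y)) from ?_]
  · refine Finset.sum_le_sum fun y _ => ?_
    rw [← Real.exp_add]
    apply Real.exp_le_exp.2
    have h1 : HA a (Function.update y i z) ≤ Finset.univ.sup' Finset.univ_nonempty (HA a) :=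
      Finset.le_sup' _ (Finset.mem_univ _)
    have h2 : Finset.univ.inf' Finset.univ_nonempty (HA a) ≤ HA a y :=
      Finset.inf'_le _ (Finset.mem_univ _)
    linarith
  · refine (Finset.sum_nbij' (fun y => Function.update y i z)
      (fun y => Function.update y i x) ?_ ?_ ?_ ?_ ?_).symm
    · intro y hy
      simp [Function.update_self]
    · intro y hy
      simp [Function.update_self]
    · intro y hy
      simp only [Finset.mem_filter, Finset.mem_univ, true_and] at hy
      rw [Function.update_idem, ← hy, Function.update_eq_self]
    · intro y hy
      simp only [Finset.mem_filter, Finset.mem_univ, true_and] at hy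
      rw [Function.update_idem, ← hy, Function.update_eq_self]
    · intro y hy
      simp only [Finset.mem_filter, Finset.mem_univ, true_and] at hy
      rw [Taux_update]

lemma sum_pos' (x : E i) :
    0 < ∑ y ∈ Finset.univ.filter (fun y : (j : (a : Finset I)) → E j => y i = x),
        Real.exp (-(HA a y) + Taux E A M a i y) := by
  refine Finset.sum_pos (fun y _ => Real.exp_pos _) ?_
  refine ⟨Function.update (fun j => Classical.arbitrary (E j)) i x, ?_⟩
  simp [Function.update_self]

lemma one_side (x z : E i) :
    logBP E A HI HA M a i x - logBP E A HI HA M a i z ≤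
      (Finset.univ.sup' Finset.univ_nonempty (HI i)
        - Finset.univ.inf' Finset.univ_nonempty (HI i))
      + (Finset.univ.sup' Finset.univ_nonempty (HA a)
        - Finset.univ.inf' Finset.univ_nonempty (HA a)) := by
  rw [logBP_eq, logBP_eq]
  have hx : HI i x ≤ Finset.univ.sup' Finset.univ_nonempty (HI i) :=
    Finset.le_sup' _ (Finset.mem_univ _)
  have hz : Finset.univ.inf' Finset.univ_nonempty (HI i) ≤ HI i z :=
    Finset.inf'_le _ (Finset.mem_univ _)
  have hlog : Real.log (∑ y ∈ Finset.univ.filter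
        (fun y : (j : (a : Finset I)) → E j => y i = x),
        Real.exp (-(HA a y) + Taux E A M a i y)) ≤
      (Finset.univ.sup' Finset.univ_nonempty (HA a)
        - Finset.univ.inf' Finset.univ_nonempty (HA a)) +
      Real.log (∑ y ∈ Finset.univ.filter
        (fun y : (j : (a : Finset I)) → E j => y i = z),
        Real.exp (-(HA a y) + Taux E A M a i y)) := by
    have := Real.log_le_log (sum_pos' E A HA M a i x) (key_sum_le E A HA M a i x z)
    rwa [Real.log_mul (Real.exp_ne_zero _) (ne_of_gt (sum_pos' E A HA M a i z)),
      Real.log_exp] at this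
  linarith

end aux

-- For every log-message family `M`, every `a ∈ A`, `i ∈ a`, and all `x z ∈ E i`,
-- `|(logBP M)_{a→i}(x) − (logBP M)_{a→i}(z)|
--    ≤ (max HI i − min HI i) + (max HA a − min HA a)`;
-- in particular the bound does not depend on `M`.
theorem stmt10 {I : Type} [Fintype I] [DecidableEq I] (E : I → Type)
    [∀ i, Fintype (E i)] [∀ i, DecidableEq (E i)] [∀ i, Nonempty (E i)]
    (A : Finset (Finset I))
    (HI : (i : I) → E i → ℝ) (HA : (a : Finset I) → ((i : a) → E i) → ℝ)
    (M : (b : A) → (j : (b : Finset I)) → E j → ℝ)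
    (a : A) (i : (a : Finset I)) (x z : E i) :
    |logBP E A HI HA M a i x - logBP E A HI HA M a i z| ≤
      (Finset.univ.sup' Finset.univ_nonempty (HI i)
        - Finset.univ.inf' Finset.univ_nonempty (HI i))
      + (Finset.univ.sup' Finset.univ_nonempty (HA a)
        - Finset.univ.inf' Finset.univ_nonempty (HA a)) := by
  rw [abs_sub_le_iff]
  exact ⟨one_side E A HI HA M a i x z, one_side E A HI HA M a i z x⟩
end

section
/- There exists a log-message family M* and real constants C_{a→i} (one for each pair a ∈ A, i ∈ a) such that for all a ∈ A, i ∈ a and x ∈ E_i, (logBP(M*))_{a→i}(x) = M*_{a→i}(x) + C_{a→i}. Equivalently, the belief propagation operator on strictly positive messages has a fixed point up to multiplication of each message by a strictly positive constant. -/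
open Finset Real
set_option linter.unusedSectionVars false
set_option maxHeartbeats 1000000
open Finset Real

set_option linter.unusedSectionVars false

section Aux
variable {I : Type} [Fintype I] [DecidableEq I] {E : I → Type}
  [∀ i, Fintype (E i)] [∀ i, DecidableEq (E i)]

lemma sum_prod_site (a : Finset I) (g : (k : I) → E k → ℝ) :
    ∑ y : (j : a) → E j, ∏ j : a, g j (y j) = ∏ j : a, ∑ z, g (j : I) z := by
  rw [Finset.prod_univ_sum (fun j : a => (univ : Finset (E (j : I))))
    (fun j z => g (j : I) z), Fintype.piFinset_univ]

lemma sum_fiber_total (a : Finset I) (i : a) (f : ((j : a) → E j) → ℝ) :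
    ∑ x : E i, ∑ y ∈ univ.filter (fun y : (j : a) → E j => y i = x), f y = ∑ y, f y := by
  simp_rw [Finset.sum_filter]
  rw [Finset.sum_comm]
  refine Finset.sum_congr rfl fun y _ => ?_
  rw [Finset.sum_ite_eq univ (y i) (fun _ => f y)]
  simp

lemma sum_fiber_mul (a : Finset I) (i : a) (x : E i) (h : E i → ℝ)
    (f : ((j : a) → E j) → ℝ) :
    ∑ y ∈ univ.filter (fun y : (j : a) → E j => y i = x), h (y i) * f y
      = h x * ∑ y ∈ univ.filter (fun y : (j : a) → E j => y i = x), f y := by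
  rw [Finset.mul_sum]
  refine Finset.sum_congr rfl fun y hy => ?_
  rw [(Finset.mem_filter.1 hy).2]

lemma sum_fiber_prod (a : Finset I) (i : a) (x : E i) (g : (k : I) → E k → ℝ) :
    ∑ y ∈ univ.filter (fun y : (j : a) → E j => y i = x), ∏ j : a, g j (y j)
      = g i x * ∏ j ∈ univ.erase i, ∑ z, g (j : I) z := by
  classical
  set upd : (k : I) → E k → ℝ :=
    Function.update g (i : I) (fun z => if z = x then g (i : I) z else 0) with hupd
  have hpoint : ∀ y : (j : a) → E j,
      (if y i = x then ∏ j : a, g j (y j) else 0) = ∏ j : a, upd j (y j) := by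
    intro y
    by_cases hyx : y i = x
    · rw [if_pos hyx]
      refine Finset.prod_congr rfl fun j _ => ?_
      by_cases hj : j = i
      · subst hj
        simp [hupd, Function.update_self, hyx]
      · have : (j : I) ≠ (i : I) := fun h => hj (Subtype.ext h)
        simp [hupd, Function.update_of_ne this]
    · rw [if_neg hyx]
      have : upd i (y i) = 0 := by
        simp [hupd, Function.update_self, hyx]
      exact (Finset.prod_eq_zero (Finset.mem_univ i) this).symm
  rw [Finset.sum_filter]
  simp_rw [hpoint]
  rw [sum_prod_site]
  rw [← Finset.mul_prod_erase univ _ (Finset.mem_univ i)]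
  congr 1
  · simp [hupd, Function.update_self]
  · refine Finset.prod_congr rfl fun j hj => ?_
    have hj' : j ≠ i := (Finset.mem_erase.1 hj).1
    have : (j : I) ≠ (i : I) := fun h => hj' (Subtype.ext h)
    refine Finset.sum_congr rfl fun z _ => ?_
    simp [hupd, Function.update_of_ne this]

end Aux
set_option linter.unusedSectionVars false

section Main
variable {I : Type} [Fintype I] [DecidableEq I] (E : I → Type)
  [∀ i, Fintype (E i)] [∀ i, DecidableEq (E i)] [∀ i, Nonempty (E i)]
  (A : Finset (Finset I)) (HI : (i : I) → E i → ℝ)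
  (HA : (a : Finset I) → ((i : a) → E i) → ℝ)

abbrev QSp := ((a : A) → ((j : (a : Finset I)) → E j) → ℝ) × ((i : I) → E i → ℝ)

def degA (i : I) : ℕ := (A.filter (fun b => i ∈ b)).card

def feas : Set (QSp E A) := {q |
  (∀ a y, 0 ≤ q.1 a y) ∧ (∀ i x, 0 ≤ q.2 i x) ∧
  (∀ a, ∑ y, q.1 a y = 1) ∧ (∀ i, ∑ x, q.2 i x = 1) ∧
  (∀ (a : A) (i : (a : Finset I)) (x : E i),
     ∑ y ∈ univ.filter (fun y : (j : (a : Finset I)) → E j => y i = x), q.1 a y = q.2 i x)}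

noncomputable def freeE (q : QSp E A) : ℝ :=
  (∑ a : A, ∑ y, (q.1 a y * HA a y + q.1 a y * Real.log (q.1 a y)))
  + ∑ i : I, (1 - (degA A i : ℝ)) *
      ∑ x, (q.2 i x * HI i x + q.2 i x * Real.log (q.2 i x))

lemma contEval1 (a : A) (y : (j : (a : Finset I)) → E j) :
    Continuous fun q : QSp E A => q.1 a y := by fun_prop

lemma contEval2 (i : I) (x : E i) :
    Continuous fun q : QSp E A => q.2 i x := by fun_prop

lemma cont_freeE : Continuous (freeE E A HI HA) := by
  unfold freeE
  refine Continuous.add ?_ ?_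
  · refine continuous_finset_sum _ fun a _ => continuous_finset_sum _ fun y _ => ?_
    exact ((contEval1 E A a y).mul continuous_const).add
      (Real.continuous_mul_log.comp (contEval1 E A a y))
  · refine continuous_finset_sum _ fun i _ => Continuous.mul continuous_const ?_
    refine continuous_finset_sum _ fun x _ => ?_
    exact ((contEval2 E A i x).mul continuous_const).add
      (Real.continuous_mul_log.comp (contEval2 E A i x))

lemma closed_feas : IsClosed (feas E A) := by
  unfold feas
  simp only [Set.setOf_and]
  refine IsClosed.inter ?_ (IsClosed.inter ?_ (IsClosed.inter ?_ (IsClosed.inter ?_ ?_)))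
  · rw [Set.setOf_forall]
    refine isClosed_iInter fun a => ?_
    rw [Set.setOf_forall]
    exact isClosed_iInter fun y => isClosed_le continuous_const (contEval1 E A a y)
  · rw [Set.setOf_forall]
    refine isClosed_iInter fun i => ?_
    rw [Set.setOf_forall]
    exact isClosed_iInter fun x => isClosed_le continuous_const (contEval2 E A i x)
  · rw [Set.setOf_forall]
    exact isClosed_iInter fun a =>
      isClosed_eq (continuous_finset_sum _ fun y _ => contEval1 E A a y) continuous_const
  · rw [Set.setOf_forall]
    exact isClosed_iInter fun i =>
      isClosed_eq (continuous_finset_sum _ fun x _ => contEval2 E A i x) continuous_const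
  · rw [Set.setOf_forall]
    refine isClosed_iInter fun a => ?_
    rw [Set.setOf_forall]
    refine isClosed_iInter fun i => ?_
    rw [Set.setOf_forall]
    refine isClosed_iInter fun x => ?_
    exact isClosed_eq (continuous_finset_sum _ fun y _ => contEval1 E A a y) (contEval2 E A i x)

lemma compact_feas : IsCompact (feas E A) := by
  have hbox : IsCompact ((Set.univ.pi fun (a : A) => Set.univ.pi
        fun (y : (j : (a : Finset I)) → E j) => Set.Icc (0:ℝ) 1) ×ˢ
      (Set.univ.pi fun (i : I) => Set.univ.pi fun (x : E i) => Set.Icc (0:ℝ) 1)) := by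
    exact IsCompact.prod
      (isCompact_univ_pi fun a => isCompact_univ_pi fun y => isCompact_Icc)
      (isCompact_univ_pi fun i => isCompact_univ_pi fun x => isCompact_Icc)
  refine IsCompact.of_isClosed_subset hbox (closed_feas E A) ?_
  rintro q ⟨h1, h2, h3, h4, _⟩
  constructor
  · intro a _
    intro y _
    refine ⟨h1 a y, ?_⟩
    calc q.1 a y ≤ ∑ y', q.1 a y' :=
          Finset.single_le_sum (fun y' _ => h1 a y') (Finset.mem_univ y)
      _ = 1 := h3 a
  · intro i _
    intro x _
    refine ⟨h2 i x, ?_⟩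
    calc q.2 i x ≤ ∑ x', q.2 i x' :=
          Finset.single_le_sum (fun x' _ => h2 i x') (Finset.mem_univ x)
      _ = 1 := h4 i

lemma card_pos' (i : I) : (0:ℝ) < (Fintype.card (E i) : ℝ) := by
  exact_mod_cast Fintype.card_pos

noncomputable def unifQ : QSp E A :=
  (fun a y => ∏ j : (a : Finset I), ((Fintype.card (E j) : ℝ))⁻¹,
   fun i _ => (Fintype.card (E i) : ℝ)⁻¹)

lemma unifQ_mem : unifQ E A ∈ feas E A := by
  have hsum1 : ∀ i : I, ∑ _z : E i, ((Fintype.card (E i) : ℝ))⁻¹ = 1 := by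
    intro i
    rw [Finset.sum_const, Finset.card_univ, nsmul_eq_mul,
      mul_inv_cancel₀ (card_pos' E i).ne']
  refine ⟨?_, ?_, ?_, ?_, ?_⟩
  · intro a y
    exact Finset.prod_nonneg fun j _ => inv_nonneg.2 (card_pos' E (j:I)).le
  · intro i x
    exact inv_nonneg.2 (card_pos' E i).le
  · intro a
    show ∑ y : (j : (a : Finset I)) → E j, ∏ j : (a : Finset I), ((Fintype.card (E (j:I)) : ℝ))⁻¹ = 1
    rw [sum_prod_site (a : Finset I) (fun k _ => ((Fintype.card (E k) : ℝ))⁻¹)]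
    exact Finset.prod_eq_one fun j _ => hsum1 (j : I)
  · intro i
    exact hsum1 i
  · intro a i x
    show ∑ y ∈ univ.filter (fun y : (j : (a : Finset I)) → E j => y i = x),
        ∏ j : (a : Finset I), ((Fintype.card (E (j:I)) : ℝ))⁻¹ = (Fintype.card (E (i:I)) : ℝ)⁻¹
    rw [sum_fiber_prod (a : Finset I) i x (fun k _ => ((Fintype.card (E k) : ℝ))⁻¹)]
    simp [hsum1]

lemma exists_minimizer : ∃ q ∈ feas E A, IsMinOn (freeE E A HI HA) (feas E A) q :=
  (compact_feas E A).exists_isMinOn ⟨unifQ E A, unifQ_mem E A⟩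
    (cont_freeE E A HI HA).continuousOn

end Main
section Deriv

lemma hderiv_term (P δ h : ℝ) (hP : 0 < P) :
    HasDerivAt (fun t => (P + t * δ) * h + (P + t * δ) * Real.log (P + t * δ))
      (δ * (h + 1 + Real.log P)) 0 := by
  have hl : HasDerivAt (fun t : ℝ => P + t * δ) δ 0 := by
    simpa using ((hasDerivAt_id (0:ℝ)).mul_const δ).const_add P
  have hne : P + 0 * δ ≠ 0 := by simpa using hP.ne'
  have hlog : HasDerivAt (fun t => Real.log (P + t * δ)) (δ / (P + 0 * δ)) 0 := hl.log hne
  have hmul := (hl.mul_const h).fun_add (hl.fun_mul hlog)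
  refine hmul.congr_deriv ?_
  simp only [zero_mul, add_zero]
  field_simp
  ring

variable {I : Type} [Fintype I] [DecidableEq I] (E : I → Type)
  [∀ i, Fintype (E i)] [∀ i, DecidableEq (E i)] [∀ i, Nonempty (E i)]
  (A : Finset (Finset I)) (HI : (i : I) → E i → ℝ)
  (HA : (a : Finset I) → ((i : a) → E i) → ℝ)

/-- the straight line through `q` in direction `v`, coordinatewise. -/
def lineF (q v : QSp E A) (t : ℝ) : QSp E A :=
  (fun a y => q.1 a y + t * v.1 a y, fun i x => q.2 i x + t * v.2 i x)

lemma lineF_zero (q v : QSp E A) : lineF E A q v 0 = q := by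
  unfold lineF
  ext <;> simp

lemma lineF_mem_feas (q v : QSp E A) (hq : q ∈ feas E A)
    (hvsum1 : ∀ a, ∑ y, v.1 a y = 0) (hvsum2 : ∀ i, ∑ x, v.2 i x = 0)
    (hvmarg : ∀ (a : A) (i : (a : Finset I)) (x : E i),
      ∑ y ∈ univ.filter (fun y : (j : (a : Finset I)) → E j => y i = x), v.1 a y = v.2 i x)
    (t : ℝ)
    (h1 : ∀ a y, 0 ≤ q.1 a y + t * v.1 a y)
    (h2 : ∀ i x, 0 ≤ q.2 i x + t * v.2 i x) :
    lineF E A q v t ∈ feas E A := by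
  obtain ⟨-, -, hq3, hq4, hq5⟩ := hq
  refine ⟨h1, h2, ?_, ?_, ?_⟩
  · intro a
    show ∑ y, (q.1 a y + t * v.1 a y) = 1
    rw [Finset.sum_add_distrib, hq3, ← Finset.mul_sum, hvsum1, mul_zero, add_zero]
  · intro i
    show ∑ x, (q.2 i x + t * v.2 i x) = 1
    rw [Finset.sum_add_distrib, hq4, ← Finset.mul_sum, hvsum2, mul_zero, add_zero]
  · intro a i x
    show ∑ y ∈ _, (q.1 a y + t * v.1 a y) = q.2 i x + t * v.2 i x
    rw [Finset.sum_add_distrib, hq5 a i x, ← Finset.mul_sum, hvmarg a i x]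

lemma hasDeriv_line (q v : QSp E A)
    (hpos1 : ∀ a y, 0 < q.1 a y) (hpos2 : ∀ i x, 0 < q.2 i x) :
    HasDerivAt (fun t => freeE E A HI HA (lineF E A q v t))
      ((∑ a : A, ∑ y, v.1 a y * (HA a y + 1 + Real.log (q.1 a y)))
        + ∑ i : I, (1 - (degA A i : ℝ)) *
            ∑ x, v.2 i x * (HI i x + 1 + Real.log (q.2 i x))) 0 := by
  unfold freeE lineF
  refine HasDerivAt.add ?_ ?_
  · refine HasDerivAt.fun_sum fun a _ => HasDerivAt.fun_sum fun y _ => ?_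
    exact hderiv_term _ _ _ (hpos1 a y)
  · refine HasDerivAt.fun_sum fun i _ => ?_
    have := HasDerivAt.fun_sum (x := (0:ℝ)) fun (x : E i) (_ : x ∈ univ) =>
      hderiv_term (q.2 i x) (v.2 i x) (HI i x) (hpos2 i x)
    exact this.const_mul _

lemma stationarity (q : QSp E A) (hq : q ∈ feas E A)
    (hmin : IsMinOn (freeE E A HI HA) (feas E A) q)
    (hpos1 : ∀ a y, 0 < q.1 a y) (hpos2 : ∀ i x, 0 < q.2 i x)
    (v : QSp E A)
    (hvsum1 : ∀ a, ∑ y, v.1 a y = 0) (hvsum2 : ∀ i, ∑ x, v.2 i x = 0)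
    (hvmarg : ∀ (a : A) (i : (a : Finset I)) (x : E i),
      ∑ y ∈ univ.filter (fun y : (j : (a : Finset I)) → E j => y i = x), v.1 a y = v.2 i x) :
    (∑ a : A, ∑ y, v.1 a y * (HA a y + 1 + Real.log (q.1 a y)))
      + ∑ i : I, (1 - (degA A i : ℝ)) *
          ∑ x, v.2 i x * (HI i x + 1 + Real.log (q.2 i x)) = 0 := by
  have hev : ∀ᶠ t in nhds (0:ℝ), lineF E A q v t ∈ feas E A := by
    have hev1 : ∀ᶠ t in nhds (0:ℝ), ∀ (a : A) (y : (j : (a : Finset I)) → E j),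
        0 ≤ q.1 a y + t * v.1 a y := by
      rw [Filter.eventually_all]
      intro a
      rw [Filter.eventually_all]
      intro y
      have hc : Continuous (fun t : ℝ => q.1 a y + t * v.1 a y) := by fun_prop
      have hconv : Filter.Tendsto (fun t : ℝ => q.1 a y + t * v.1 a y) (nhds 0)
          (nhds (q.1 a y)) := by simpa using hc.tendsto 0
      exact (hconv.eventually (eventually_gt_nhds (hpos1 a y))).mono fun t ht => ht.le
    have hev2 : ∀ᶠ t in nhds (0:ℝ), ∀ (i : I) (x : E i), 0 ≤ q.2 i x + t * v.2 i x := by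
      rw [Filter.eventually_all]
      intro i
      rw [Filter.eventually_all]
      intro x
      have hc : Continuous (fun t : ℝ => q.2 i x + t * v.2 i x) := by fun_prop
      have hconv : Filter.Tendsto (fun t : ℝ => q.2 i x + t * v.2 i x) (nhds 0)
          (nhds (q.2 i x)) := by simpa using hc.tendsto 0
      exact (hconv.eventually (eventually_gt_nhds (hpos2 i x))).mono fun t ht => ht.le
    filter_upwards [hev1, hev2] with t h1 h2
    exact lineF_mem_feas E A q v hq hvsum1 hvsum2 hvmarg t h1 h2
  have hloc : IsLocalMin (fun t => freeE E A HI HA (lineF E A q v t)) 0 := by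
    refine hev.mono fun t ht => ?_
    show freeE E A HI HA (lineF E A q v 0) ≤ freeE E A HI HA (lineF E A q v t)
    rw [lineF_zero]
    exact hmin ht
  exact hloc.hasDerivAt_eq_zero (hasDeriv_line E A HI HA q v hpos1 hpos2)

end Deriv
section Interior
variable {I : Type} [Fintype I] [DecidableEq I] (E : I → Type)
  [∀ i, Fintype (E i)] [∀ i, DecidableEq (E i)] [∀ i, Nonempty (E i)]
  (A : Finset (Finset I)) (HI : (i : I) → E i → ℝ)
  (HA : (a : Finset I) → ((i : a) → E i) → ℝ)

noncomputable def wPt (q : QSp E A) (ε : ℝ) : QSp E A :=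
  (fun a y => ∏ j : (a : Finset I), ((1-ε) * q.2 j (y j) + ε * (Fintype.card (E (j:I)) : ℝ)⁻¹),
   fun i x => (1-ε) * q.2 i x + ε * (Fintype.card (E i) : ℝ)⁻¹)

variable (q : QSp E A) (ε : ℝ)

lemma wPt_pos2 (hq : ∀ i x, 0 ≤ q.2 i x) (hε0 : 0 < ε) (hε1 : ε ≤ 1) (i : I) (x : E i) :
    0 < (wPt E A q ε).2 i x := by
  have h1 : 0 ≤ (1-ε) * q.2 i x := mul_nonneg (by linarith) (hq i x)
  have h2 : 0 < ε * (Fintype.card (E i) : ℝ)⁻¹ :=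
    mul_pos hε0 (inv_pos.2 (card_pos' E i))
  show 0 < (1-ε) * q.2 i x + ε * (Fintype.card (E i) : ℝ)⁻¹
  linarith

lemma wPt_pos1 (hq : ∀ i x, 0 ≤ q.2 i x) (hε0 : 0 < ε) (hε1 : ε ≤ 1) (a : A)
    (y : (j : (a : Finset I)) → E j) : 0 < (wPt E A q ε).1 a y :=
  Finset.prod_pos fun j _ => wPt_pos2 E A q ε hq hε0 hε1 (j : I) (y j)

lemma wPt_mem (hq : q ∈ feas E A) (hε0 : 0 < ε) (hε1 : ε ≤ 1) :
    wPt E A q ε ∈ feas E A := by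
  obtain ⟨hq1, hq2, hq3, hq4, hq5⟩ := hq
  have hsum : ∀ i : I, ∑ z, ((1-ε) * q.2 i z + ε * (Fintype.card (E i) : ℝ)⁻¹) = 1 := by
    intro i
    rw [Finset.sum_add_distrib, ← Finset.mul_sum, hq4, ← Finset.mul_sum,
      Finset.sum_const, Finset.card_univ, nsmul_eq_mul,
      mul_inv_cancel₀ (card_pos' E i).ne']
    ring
  refine ⟨fun a y => (wPt_pos1 E A q ε hq2 hε0 hε1 a y).le,
    fun i x => (wPt_pos2 E A q ε hq2 hε0 hε1 i x).le, ?_, ?_, ?_⟩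
  · intro a
    show ∑ y : (j : (a : Finset I)) → E j, ∏ j : (a : Finset I),
      ((1-ε) * q.2 j (y j) + ε * (Fintype.card (E (j:I)) : ℝ)⁻¹) = 1
    rw [sum_prod_site (a : Finset I)
      (fun k z => (1-ε) * q.2 k z + ε * (Fintype.card (E k) : ℝ)⁻¹)]
    exact Finset.prod_eq_one fun j _ => hsum (j : I)
  · intro i
    exact hsum i
  · intro a i x
    show ∑ y ∈ univ.filter (fun y : (j : (a : Finset I)) → E j => y i = x),
        ∏ j : (a : Finset I), ((1-ε) * q.2 j (y j) + ε * (Fintype.card (E (j:I)) : ℝ)⁻¹)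
      = (1-ε) * q.2 i x + ε * (Fintype.card (E (i:I)) : ℝ)⁻¹
    rw [sum_fiber_prod (a : Finset I) i x
      (fun k z => (1-ε) * q.2 k z + ε * (Fintype.card (E k) : ℝ)⁻¹)]
    have hone : ∏ j ∈ univ.erase i, ∑ z, ((1-ε) * q.2 (j:I) z
        + ε * (Fintype.card (E (j:I)) : ℝ)⁻¹) = 1 :=
      Finset.prod_eq_one fun j _ => hsum (j : I)
    rw [hone, mul_one]

lemma degA_le : ∀ i : I, (degA A i : ℝ) ≤ (A.card : ℝ) := by
  intro i
  exact_mod_cast Finset.card_le_card (Finset.filter_subset _ _)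

lemma B_pos (hq : q ∈ feas E A) (hε0 : 0 < ε) (hε1 : ε ≤ 1)
    (hεκ : (Fintype.card I : ℝ) * ε ≤ 1/(2*((A.card : ℝ)+1)))
    (hzero : (∃ (a : A) (y : (j : (a : Finset I)) → E j), q.1 a y = 0)
      ∨ (∃ (i : I) (x : E i), q.2 i x = 0)) :
    0 < (∑ a : A, ∑ y, (if q.1 a y = 0 then (wPt E A q ε).1 a y else 0))
      + ∑ i : I, (1 - (degA A i : ℝ)) *
          ∑ x, (if q.2 i x = 0 then (wPt E A q ε).2 i x else 0) := by
  obtain ⟨hq1, hq2, hq3, hq4, hq5⟩ := hq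
  set w := wPt E A q ε with hw
  set κ : ℝ := 1/(2*((A.card : ℝ)+1)) with hκ
  have hκ0 : 0 < κ := by positivity
  have hκhalf : κ * (A.card : ℝ) ≤ 1/2 := by
    rw [hκ]
    rw [div_mul_eq_mul_div, one_mul]
    rw [div_le_div_iff₀ (by positivity) (by norm_num)]
    ring_nf
    nlinarith [Finset.card_le_card (Finset.empty_subset A)]
  set s : I → ℝ := fun i => ∑ x, (if q.2 i x = 0 then w.2 i x else 0) with hs
  have hs_nonneg : ∀ i, 0 ≤ s i := by
    intro i
    refine Finset.sum_nonneg fun x _ => ?_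
    split_ifs
    · exact (wPt_pos2 E A q ε hq2 hε0 hε1 i x).le
    · exact le_refl 0

  have hκle : κ ≤ 1/2 := by
    rw [hκ]
    rw [div_le_div_iff₀ (by positivity) (by norm_num)]
    nlinarith [Finset.card_le_card (Finset.empty_subset A)]
  have hwprod : ∀ (a : A) (y : (j : (a : Finset I)) → E j),
      w.1 a y = ∏ j : (a : Finset I), w.2 (j : I) (y j) := fun a y => rfl
  have hwsum : ∀ i : I, ∑ z, w.2 i z = 1 := by
    intro i
    show ∑ z, ((1-ε) * q.2 i z + ε * (Fintype.card (E i) : ℝ)⁻¹) = 1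
    rw [Finset.sum_add_distrib, ← Finset.mul_sum, hq4, ← Finset.mul_sum,
      Finset.sum_const, Finset.card_univ, nsmul_eq_mul,
      mul_inv_cancel₀ (card_pos' E i).ne']
    ring
  have hw2pos : ∀ (i : I) (x : E i), 0 < w.2 i x :=
    fun i x => wPt_pos2 E A q ε hq2 hε0 hε1 i x
  have hszero_le : ∀ i, s i ≤ ε := by
    intro i
    have hle : ∀ x : E i, (if q.2 i x = 0 then w.2 i x else 0)
        ≤ ε * (Fintype.card (E i) : ℝ)⁻¹ := by
      intro x
      split_ifs with h
      · show (1-ε) * q.2 i x + ε * (Fintype.card (E i) : ℝ)⁻¹ ≤ _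
        rw [h, mul_zero, zero_add]
      · positivity
    calc s i ≤ ∑ _x : E i, ε * (Fintype.card (E i) : ℝ)⁻¹ :=
          Finset.sum_le_sum fun x _ => hle x
      _ = ε := by
          rw [Finset.sum_const, Finset.card_univ, nsmul_eq_mul, ← mul_assoc,
            mul_comm ((Fintype.card (E i)):ℝ) ε, mul_assoc,
            mul_inv_cancel₀ (card_pos' E i).ne', mul_one]
  have hgPsum : ∀ i : I, ∑ z, (if q.2 i z = 0 then 0 else w.2 i z) = 1 - s i := by
    intro i
    have hsplit : ∑ z, (if q.2 i z = 0 then 0 else w.2 i z)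
        + ∑ z, (if q.2 i z = 0 then w.2 i z else 0) = 1 := by
      rw [← Finset.sum_add_distrib, ← hwsum i]
      refine Finset.sum_congr rfl fun z _ => ?_
      split_ifs <;> ring
    have hsi : s i = ∑ z, (if q.2 i z = 0 then w.2 i z else 0) := rfl
    rw [hsi]
    linarith
  have hprod_lb : ∀ (a : A) (i : (a : Finset I)),
      1 - κ ≤ ∏ j ∈ univ.erase i, ∑ z, (if q.2 (j:I) z = 0 then 0 else w.2 (j:I) z) := by
    intro a i
    have hfac : ∀ j : (a : Finset I), (1 - ε) ≤ ∑ z, (if q.2 (j:I) z = 0 then 0 else w.2 (j:I) z)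
        ∧ ∑ z, (if q.2 (j:I) z = 0 then 0 else w.2 (j:I) z) ≤ 1 := by
      intro j
      rw [hgPsum (j:I)]
      constructor
      · linarith [hszero_le (j:I)]
      · linarith [hs_nonneg (j:I)]
    have hmle : (univ.erase i).card ≤ Fintype.card I := by
      calc (univ.erase i).card ≤ (univ : Finset ((a : Finset I) : Type)).card :=
            Finset.card_le_card (Finset.erase_subset _ _)
        _ = Fintype.card ((a : Finset I) : Type) := Finset.card_univ
        _ = (a : Finset I).card := Fintype.card_coe _
        _ ≤ Fintype.card I := by
            rw [← Finset.card_univ]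
            exact Finset.card_le_card (Finset.subset_univ _)
    have h1 : (1 - ε) ^ (univ.erase i).card
        ≤ ∏ j ∈ univ.erase i, ∑ z, (if q.2 (j:I) z = 0 then 0 else w.2 (j:I) z) := by
      rw [← Finset.prod_const]
      exact Finset.prod_le_prod (fun j _ => by linarith) (fun j _ => (hfac j).1)
    have h2 : (1 - ε) ^ (Fintype.card I) ≤ (1 - ε) ^ (univ.erase i).card :=
      pow_le_pow_of_le_one (by linarith) (by linarith) hmle
    have h3 : (1:ℝ) - (Fintype.card I : ℝ) * ε ≤ (1 - ε) ^ (Fintype.card I) := by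
      have := one_add_mul_le_pow (a := -ε) (by linarith) (Fintype.card I)
      calc (1:ℝ) - (Fintype.card I : ℝ) * ε = 1 + (Fintype.card I : ℝ) * (-ε) := by ring
        _ ≤ (1 + -ε) ^ (Fintype.card I) := this
        _ = (1 - ε) ^ (Fintype.card I) := by ring_nf
    have h4 : 1 - κ ≤ 1 - (Fintype.card I : ℝ) * ε := by
      rw [hκ]
      linarith [hεκ]
    rw [hκ] at h4 ⊢
    linarith
  -- per-factor bound
  have hfactor : ∀ a : A, (1 - κ) * (∑ i : (a : Finset I), s (i : I))
      ≤ ∑ y, (if q.1 a y = 0 then w.1 a y else 0) := by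
    intro a
    set g : {v // v ∈ (a : Finset I)} → (k : I) → E k → ℝ := fun i k z =>
      if k = (i : I) then (if q.2 k z = 0 then w.2 k z else 0)
      else (if q.2 k z = 0 then 0 else w.2 k z) with hg
    have hpoint : ∀ y : (j : (a : Finset I)) → E j,
        ∑ i : (a : Finset I), ∏ j : (a : Finset I), g i (j : I) (y j)
          ≤ (if q.1 a y = 0 then w.1 a y else 0) := by
      intro y
      by_cases hex : ∃ j : (a : Finset I), q.2 (j : I) (y j) = 0
      · obtain ⟨j₀, hj₀⟩ := hex
        have hq10 : q.1 a y = 0 := by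
          have hm := hq5 a j₀ (y j₀)
          rw [hj₀] at hm
          exact (Finset.sum_eq_zero_iff_of_nonneg (fun y' _ => hq1 a y')).1 hm y
            (Finset.mem_filter.2 ⟨Finset.mem_univ y, rfl⟩)
        rw [if_pos hq10]
        have hzero' : ∀ i : (a : Finset I), i ∈ univ → i ≠ j₀ →
            ∏ j : (a : Finset I), g i (j : I) (y j) = 0 := by
          intro i _ hne
          refine Finset.prod_eq_zero (Finset.mem_univ j₀) ?_
          have : (j₀ : I) ≠ (i : I) := fun h => hne (Subtype.ext h).symm
          simp only [hg, if_neg this, if_pos hj₀]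
        rw [Finset.sum_eq_single_of_mem j₀ (Finset.mem_univ j₀) hzero']
        rw [hwprod a y]
        refine Finset.prod_le_prod (fun j _ => ?_) (fun j _ => ?_)
        · simp only [hg]; split_ifs <;> first | exact le_refl 0 | exact (hw2pos _ _).le
        · simp only [hg]; split_ifs <;> first | exact le_refl _ | exact (hw2pos _ _).le
      · push_neg at hex
        have hall : ∀ i : (a : Finset I), ∏ j : (a : Finset I), g i (j : I) (y j) = 0 := by
          intro i
          refine Finset.prod_eq_zero (Finset.mem_univ i) ?_
          simp only [hg, if_pos rfl, if_neg (hex i)]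
        have hssum : ∑ i : (a : Finset I), ∏ j : (a : Finset I), g i (j : I) (y j) = 0 :=
          Finset.sum_eq_zero fun i _ => hall i
        rw [hssum]
        split_ifs
        · exact (wPt_pos1 E A q ε hq2 hε0 hε1 a y).le
        · exact le_refl 0
    have hswap : ∑ i : (a : Finset I), ∑ y : (j : (a : Finset I)) → E j,
        ∏ j : (a : Finset I), g i (j : I) (y j)
        ≤ ∑ y, (if q.1 a y = 0 then w.1 a y else 0) := by
      rw [Finset.sum_comm]
      exact Finset.sum_le_sum fun y _ => hpoint y
    refine le_trans ?_ hswap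
    rw [Finset.mul_sum]
    refine Finset.sum_le_sum fun i _ => ?_
    rw [sum_prod_site (a : Finset I) (g i)]
    rw [← Finset.mul_prod_erase univ _ (Finset.mem_univ i)]
    have hi : ∑ z, g i (i : I) z = s (i : I) := by
      simp only [hg, hs, if_pos rfl]
    have herase : ∏ j ∈ univ.erase i, ∑ z, g i (j : I) z
        = ∏ j ∈ univ.erase i, ∑ z, (if q.2 (j:I) z = 0 then 0 else w.2 (j:I) z) := by
      refine Finset.prod_congr rfl fun j hj => ?_
      have hne : (j : I) ≠ (i : I) := fun h => (Finset.mem_erase.1 hj).1 (Subtype.ext h)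
      refine Finset.sum_congr rfl fun z _ => ?_
      simp only [hg, if_neg hne]
    rw [hi, herase, mul_comm ((1:ℝ) - κ) (s (i:I))]
    have hpl := hprod_lb a i
    have hprod_nonneg : (0:ℝ) ≤ ∏ j ∈ univ.erase i,
        ∑ z, (if q.2 (j:I) z = 0 then 0 else w.2 (j:I) z) := by
      refine Finset.prod_nonneg fun j _ => Finset.sum_nonneg fun z _ => ?_
      split_ifs
      · exact le_refl 0
      · exact (hw2pos _ _).le
    exact mul_le_mul_of_nonneg_left hpl (hs_nonneg (i:I))
  -- double counting
  have hdc : ∑ a : A, ∑ i : ((a : Finset I) : Type), s (i : I)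
      = ∑ i : I, (degA A i : ℝ) * s i := by
    have h1 : ∀ a : A, ∑ i : ((a : Finset I) : Type), s (i : I)
        = ∑ i : I, (if i ∈ (a : Finset I) then s i else 0) := by
      intro a
      rw [Finset.univ_eq_attach, Finset.sum_attach (a : Finset I) s]
      rw [← Finset.sum_filter, Finset.filter_mem_eq_inter, Finset.univ_inter]
    simp_rw [h1]
    rw [Finset.sum_comm]
    refine Finset.sum_congr rfl fun i _ => ?_
    rw [Finset.univ_eq_attach, Finset.sum_attach A (fun b => if i ∈ b then s i else 0),
      ← Finset.sum_filter, Finset.sum_const, nsmul_eq_mul]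
    simp [degA]
  have hB2 : ∑ i : I, (1 - κ) * ((degA A i : ℝ) * s i)
      ≤ ∑ a : A, ∑ y, (if q.1 a y = 0 then w.1 a y else 0) := by
    calc ∑ i : I, (1 - κ) * ((degA A i : ℝ) * s i)
        = (1 - κ) * ∑ i : I, (degA A i : ℝ) * s i := by rw [Finset.mul_sum]
      _ = (1 - κ) * ∑ a : A, ∑ i : ((a : Finset I) : Type), s (i : I) := by rw [hdc]
      _ = ∑ a : A, (1 - κ) * ∑ i : ((a : Finset I) : Type), s (i : I) := by
          rw [Finset.mul_sum]
      _ ≤ _ := Finset.sum_le_sum fun a _ => hfactor a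
  have hcoeff : ∀ i : I, (1:ℝ)/2 * s i
      ≤ (1 - κ) * ((degA A i : ℝ) * s i) + (1 - (degA A i : ℝ)) * s i := by
    intro i
    have h1 : (1 - κ) * ((degA A i : ℝ) * s i) + (1 - (degA A i : ℝ)) * s i
        = (1 - κ * (degA A i : ℝ)) * s i := by ring
    rw [h1]
    refine mul_le_mul_of_nonneg_right ?_ (hs_nonneg i)
    have h2 : κ * (degA A i : ℝ) ≤ κ * (A.card : ℝ) :=
      mul_le_mul_of_nonneg_left (degA_le A i) hκ0.le
    linarith [hκhalf]
  have hBbound : ∑ i : I, (1:ℝ)/2 * s i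
      ≤ (∑ a : A, ∑ y, (if q.1 a y = 0 then w.1 a y else 0))
        + ∑ i : I, (1 - (degA A i : ℝ)) * s i := by
    calc ∑ i : I, (1:ℝ)/2 * s i
        ≤ ∑ i : I, ((1 - κ) * ((degA A i : ℝ) * s i) + (1 - (degA A i : ℝ)) * s i) :=
          Finset.sum_le_sum fun i _ => hcoeff i
      _ = (∑ i : I, (1 - κ) * ((degA A i : ℝ) * s i))
            + ∑ i : I, (1 - (degA A i : ℝ)) * s i := Finset.sum_add_distrib
      _ ≤ _ := by linarith [hB2]
  have hite_nonneg : ∀ (i : I) (x : E i), (0:ℝ) ≤ (if q.2 i x = 0 then w.2 i x else 0) := by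
    intro i x
    split_ifs
    · exact (hw2pos i x).le
    · exact le_refl 0
  have hhalf : ∀ i0 : I, (1:ℝ)/2 * s i0 ≤ ∑ i : I, (1:ℝ)/2 * s i :=
    fun i0 => Finset.single_le_sum (f := fun i => (1:ℝ)/2 * s i)
      (fun i _ => mul_nonneg (by norm_num) (hs_nonneg i)) (Finset.mem_univ i0)
  have hnodecase : ∀ (i0 : I) (x0 : E i0), q.2 i0 x0 = 0 →
      (0:ℝ) < ∑ i : I, (1:ℝ)/2 * s i := by
    intro i0 x0 hi0
    have hsi : w.2 i0 x0 ≤ s i0 := by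
      have h := Finset.single_le_sum (f := fun x => if q.2 i0 x = 0 then w.2 i0 x else 0)
        (fun x _ => hite_nonneg i0 x) (Finset.mem_univ x0)
      calc w.2 i0 x0 = (if q.2 i0 x0 = 0 then w.2 i0 x0 else 0) := by rw [if_pos hi0]
        _ ≤ s i0 := h
    have hwp := hw2pos i0 x0
    have h05 : (0:ℝ) < (1:ℝ)/2 * s i0 := by nlinarith
    exact lt_of_lt_of_le h05 (hhalf i0)
  rcases hzero with ⟨a0, y0, ha0⟩ | ⟨i0, x0, hi0⟩
  · by_cases hnode : ∃ (i : I) (x : E i), q.2 i x = 0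
    · obtain ⟨i0, x0, hi0⟩ := hnode
      have := hnodecase i0 x0 hi0
      linarith [hBbound]
    · push_neg at hnode
      have hs0 : ∀ i, s i = 0 := by
        intro i
        show ∑ x, (if q.2 i x = 0 then w.2 i x else 0) = 0
        exact Finset.sum_eq_zero fun x _ => if_neg (hnode i x)
      have hnodepart : ∑ i : I, (1 - (degA A i : ℝ)) * s i = 0 :=
        Finset.sum_eq_zero fun i _ => by rw [hs0 i, mul_zero]
      have hfpos : (0:ℝ) < ∑ a : A, ∑ y, (if q.1 a y = 0 then w.1 a y else 0) := by
        have hterm : (0:ℝ) < (if q.1 a0 y0 = 0 then w.1 a0 y0 else 0) := by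
          rw [if_pos ha0]
          exact wPt_pos1 E A q ε hq2 hε0 hε1 a0 y0
        have hin_nonneg : ∀ (a : A) (y : (j : (a : Finset I)) → E j),
            (0:ℝ) ≤ (if q.1 a y = 0 then w.1 a y else 0) := by
          intro a y
          split_ifs
          · exact (wPt_pos1 E A q ε hq2 hε0 hε1 a y).le
          · exact le_refl 0
        have hinner : (if q.1 a0 y0 = 0 then w.1 a0 y0 else 0)
            ≤ ∑ y, (if q.1 a0 y = 0 then w.1 a0 y else 0) :=
          Finset.single_le_sum (fun y _ => hin_nonneg a0 y) (Finset.mem_univ y0)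
        have houter : ∑ y, (if q.1 a0 y = 0 then w.1 a0 y else 0)
            ≤ ∑ a : A, ∑ y, (if q.1 a y = 0 then w.1 a y else 0) :=
          Finset.single_le_sum (f := fun a => ∑ y, (if q.1 a y = 0 then w.1 a y else 0))
            (fun a _ => Finset.sum_nonneg fun y _ => hin_nonneg a y) (Finset.mem_univ a0)
        linarith
      rw [hnodepart]
      linarith
  · have := hnodecase i0 x0 hi0
    linarith [hBbound]

end Interior
section MinPos
variable {I : Type} [Fintype I] [DecidableEq I] (E : I → Type)
  [∀ i, Fintype (E i)] [∀ i, DecidableEq (E i)] [∀ i, Nonempty (E i)]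
  (A : Finset (Finset I)) (HI : (i : I) → E i → ℝ)
  (HA : (a : Finset I) → ((i : a) → E i) → ℝ)

lemma key_decomp (P δv h : ℝ) (hδ : P = 0 → δv ≠ 0) (t : ℝ) :
    (P + t*δv)*h + (P+t*δv)*Real.log (P+t*δv)
    = (if P = 0 then t*(δv*h) + t*(δv*Real.log δv)
        else (P+t*δv)*h + (P+t*δv)*Real.log (P+t*δv))
      + (if P = 0 then δv else 0) * (t*Real.log t) := by
  by_cases hP : P = 0
  · rw [if_pos hP, if_pos hP, hP]
    simp only [zero_add]
    rcases eq_or_ne t 0 with ht | ht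
    · simp [ht]
    · rw [Real.log_mul ht (hδ hP)]
      ring
  · simp only [if_neg hP]
    ring

lemma hderiv_branch (P δv h : ℝ) :
    HasDerivAt (fun t => if P = 0 then t*(δv*h) + t*(δv*Real.log δv)
        else ((P + t*δv)*h + (P+t*δv)*Real.log (P+t*δv)))
      (if P = 0 then δv*h + δv*Real.log δv else δv*(h+1+Real.log P)) 0 ∨ ¬ (0 ≤ P) := by
  by_cases hP0 : 0 ≤ P
  · left
    by_cases hP : P = 0
    · simp only [if_pos hP]
      simpa using (((hasDerivAt_id (0:ℝ)).mul_const (δv*h)).fun_add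
        ((hasDerivAt_id (0:ℝ)).mul_const (δv*Real.log δv)))
    · simp only [if_neg hP]
      exact hderiv_term P δv h (lt_of_le_of_ne hP0 (Ne.symm hP))
  · right; exact hP0

lemma hderiv_branch' (P δv h : ℝ) (hP0 : 0 ≤ P) :
    HasDerivAt (fun t => if P = 0 then t*(δv*h) + t*(δv*Real.log δv)
        else ((P + t*δv)*h + (P+t*δv)*Real.log (P+t*δv)))
      (if P = 0 then δv*h + δv*Real.log δv else δv*(h+1+Real.log P)) 0 := by
  rcases hderiv_branch P δv h with h | h
  · exact h
  · exact absurd hP0 h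

lemma minimizer_pos (q : QSp E A) (hq : q ∈ feas E A)
    (hmin : IsMinOn (freeE E A HI HA) (feas E A) q) :
    (∀ a y, 0 < q.1 a y) ∧ (∀ (i : I) (x : E i), 0 < q.2 i x) := by
  by_contra hcon
  -- extract a zero coordinate
  have hzero : (∃ (a : A) (y : (j : (a : Finset I)) → E j), q.1 a y = 0)
      ∨ (∃ (i : I) (x : E i), q.2 i x = 0) := by
    obtain ⟨hq1, hq2, -, -, -⟩ := hq
    by_contra hz
    push_neg at hz
    exact hcon ⟨fun a y => lt_of_le_of_ne (hq1 a y) (Ne.symm (hz.1 a y)),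
      fun i x => lt_of_le_of_ne (hq2 i x) (Ne.symm (hz.2 i x))⟩
  obtain ⟨hq1, hq2, hq3, hq4, hq5⟩ := hq
  -- choose epsilon
  set ε : ℝ := 1/(((Fintype.card I : ℝ) + 1) * (2*((A.card : ℝ)+1))) with hε
  have hε0 : 0 < ε := by positivity
  have hε1 : ε ≤ 1 := by
    rw [hε]
    rw [div_le_one (by positivity)]
    nlinarith [Nat.cast_nonneg (α := ℝ) (Fintype.card I), Nat.cast_nonneg (α := ℝ) A.card]
  have hεκ : (Fintype.card I : ℝ) * ε ≤ 1/(2*((A.card : ℝ)+1)) := by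
    rw [hε, mul_one_div, div_le_div_iff₀ (by positivity) (by positivity)]
    nlinarith [Nat.cast_nonneg (α := ℝ) (Fintype.card I), Nat.cast_nonneg (α := ℝ) A.card]
  set w : QSp E A := wPt E A q ε with hw
  have hwmem : w ∈ feas E A := wPt_mem E A q ε ⟨hq1, hq2, hq3, hq4, hq5⟩ hε0 hε1
  obtain ⟨hw1, hw2, hw3, hw4, hw5⟩ := hwmem
  have hw1pos : ∀ a y, 0 < w.1 a y := fun a y => wPt_pos1 E A q ε hq2 hε0 hε1 a y
  have hw2pos : ∀ i x, 0 < w.2 i x := fun i x => wPt_pos2 E A q ε hq2 hε0 hε1 i x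
  -- direction
  set v : QSp E A := (fun a y => w.1 a y - q.1 a y, fun i x => w.2 i x - q.2 i x) with hv
  have hvsum1 : ∀ a, ∑ y, v.1 a y = 0 := by
    intro a
    show ∑ y, (w.1 a y - q.1 a y) = 0
    rw [Finset.sum_sub_distrib, hw3 a, hq3 a, sub_self]
  have hvsum2 : ∀ i, ∑ x, v.2 i x = 0 := by
    intro i
    show ∑ x, (w.2 i x - q.2 i x) = 0
    rw [Finset.sum_sub_distrib, hw4 i, hq4 i, sub_self]
  have hvmarg : ∀ (a : A) (i : (a : Finset I)) (x : E i),
      ∑ y ∈ univ.filter (fun y : (j : (a : Finset I)) → E j => y i = x), v.1 a y = v.2 i x := by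
    intro a i x
    show ∑ y ∈ _, (w.1 a y - q.1 a y) = w.2 i x - q.2 i x
    rw [Finset.sum_sub_distrib, hw5 a i x, hq5 a i x]
  -- membership on [0,1]
  have hfeas_t : ∀ t : ℝ, 0 ≤ t → t ≤ 1 → lineF E A q v t ∈ feas E A := by
    intro t ht0 ht1
    refine lineF_mem_feas E A q v ⟨hq1, hq2, hq3, hq4, hq5⟩ hvsum1 hvsum2 hvmarg t ?_ ?_
    · intro a y
      show 0 ≤ q.1 a y + t * (w.1 a y - q.1 a y)
      nlinarith [hq1 a y, (hw1pos a y).le]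
    · intro i x
      show 0 ≤ q.2 i x + t * (w.2 i x - q.2 i x)
      nlinarith [hq2 i x, (hw2pos i x).le]
  -- decomposition  φ(t) = R(t) + B·t·log t
  have hδ1 : ∀ (a : A) y, q.1 a y = 0 → v.1 a y ≠ 0 := by
    intro a y h
    show w.1 a y - q.1 a y ≠ 0
    rw [h, sub_zero]
    exact (hw1pos a y).ne'
  have hδ2 : ∀ (i : I) (x : E i), q.2 i x = 0 → v.2 i x ≠ 0 := by
    intro i x h
    show w.2 i x - q.2 i x ≠ 0
    rw [h, sub_zero]
    exact (hw2pos i x).ne'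
  set R : ℝ → ℝ := fun t =>
    (∑ a : A, ∑ y, (if q.1 a y = 0
        then t*(v.1 a y*HA a y) + t*(v.1 a y*Real.log (v.1 a y))
        else ((q.1 a y + t*v.1 a y)*HA a y
          + (q.1 a y + t*v.1 a y)*Real.log (q.1 a y + t*v.1 a y))))
    + ∑ i : I, (1 - (degA A i : ℝ)) * ∑ x, (if q.2 i x = 0
        then t*(v.2 i x*HI i x) + t*(v.2 i x*Real.log (v.2 i x))
        else ((q.2 i x + t*v.2 i x)*HI i x
          + (q.2 i x + t*v.2 i x)*Real.log (q.2 i x + t*v.2 i x))) with hR_def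
  set B : ℝ := (∑ a : A, ∑ y, (if q.1 a y = 0 then v.1 a y else 0))
    + ∑ i : I, (1 - (degA A i : ℝ)) * ∑ x, (if q.2 i x = 0 then v.2 i x else 0) with hB_def
  have hsum_split : ∀ {α : Type} (sfin : Finset α) (f g : α → ℝ) (T : ℝ),
      ∑ x ∈ sfin, (f x + g x * T) = (∑ x ∈ sfin, f x) + (∑ x ∈ sfin, g x) * T := by
    intro α sfin f g T
    rw [Finset.sum_add_distrib, Finset.sum_mul]
  have hdecomp : ∀ t, freeE E A HI HA (lineF E A q v t) = R t + B * (t * Real.log t) := by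
    intro t
    show (∑ a : A, ∑ y, ((q.1 a y + t*v.1 a y) * HA a y
          + (q.1 a y + t*v.1 a y) * Real.log (q.1 a y + t*v.1 a y)))
        + ∑ i : I, (1 - (degA A i : ℝ)) * ∑ x, ((q.2 i x + t*v.2 i x) * HI i x
          + (q.2 i x + t*v.2 i x) * Real.log (q.2 i x + t*v.2 i x))
      = R t + B * (t * Real.log t)
    have e1 : ∑ a : A, ∑ y, ((q.1 a y + t*v.1 a y) * HA a y
          + (q.1 a y + t*v.1 a y) * Real.log (q.1 a y + t*v.1 a y))
        = (∑ a : A, ∑ y, (if q.1 a y = 0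
            then t*(v.1 a y*HA a y) + t*(v.1 a y*Real.log (v.1 a y))
            else ((q.1 a y + t*v.1 a y)*HA a y
              + (q.1 a y + t*v.1 a y)*Real.log (q.1 a y + t*v.1 a y))))
          + (∑ a : A, ∑ y, (if q.1 a y = 0 then v.1 a y else 0)) * (t * Real.log t) := by
      rw [← hsum_split]
      refine Finset.sum_congr rfl fun a _ => ?_
      rw [← hsum_split]
      refine Finset.sum_congr rfl fun y _ => ?_
      exact key_decomp _ _ _ (hδ1 a y) t
    have e2 : ∑ i : I, (1 - (degA A i : ℝ)) * ∑ x, ((q.2 i x + t*v.2 i x) * HI i x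
          + (q.2 i x + t*v.2 i x) * Real.log (q.2 i x + t*v.2 i x))
        = (∑ i : I, (1 - (degA A i : ℝ)) * ∑ x, (if q.2 i x = 0
            then t*(v.2 i x*HI i x) + t*(v.2 i x*Real.log (v.2 i x))
            else ((q.2 i x + t*v.2 i x)*HI i x
              + (q.2 i x + t*v.2 i x)*Real.log (q.2 i x + t*v.2 i x))))
          + (∑ i : I, (1 - (degA A i : ℝ)) * ∑ x, (if q.2 i x = 0 then v.2 i x else 0))
              * (t * Real.log t) := by
      rw [← hsum_split]
      refine Finset.sum_congr rfl fun i _ => ?_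
      have einner : ∑ x, ((q.2 i x + t*v.2 i x) * HI i x
            + (q.2 i x + t*v.2 i x) * Real.log (q.2 i x + t*v.2 i x))
          = (∑ x, (if q.2 i x = 0
              then t*(v.2 i x*HI i x) + t*(v.2 i x*Real.log (v.2 i x))
              else ((q.2 i x + t*v.2 i x)*HI i x
                + (q.2 i x + t*v.2 i x)*Real.log (q.2 i x + t*v.2 i x))))
            + (∑ x, (if q.2 i x = 0 then v.2 i x else 0)) * (t * Real.log t) := by
        rw [← hsum_split]
        refine Finset.sum_congr rfl fun x _ => ?_
        exact key_decomp _ _ _ (hδ2 i x) t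
      rw [einner]
      ring
    rw [e1, e2, hR_def, hB_def]
    ring
  -- B is positive
  have hB : 0 < B := by
    have hBeq : B = (∑ a : A, ∑ y, (if q.1 a y = 0 then (wPt E A q ε).1 a y else 0))
        + ∑ i : I, (1 - (degA A i : ℝ)) *
            ∑ x, (if q.2 i x = 0 then (wPt E A q ε).2 i x else 0) := by
      rw [hB_def]
      congr 1
      · refine Finset.sum_congr rfl fun a _ => Finset.sum_congr rfl fun y _ => ?_
        split_ifs with h
        · show w.1 a y - q.1 a y = _
          rw [h, sub_zero, hw]
        · rfl
      · refine Finset.sum_congr rfl fun i _ => ?_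
        congr 1
        refine Finset.sum_congr rfl fun x _ => ?_
        split_ifs with h
        · show w.2 i x - q.2 i x = _
          rw [h, sub_zero, hw]
        · rfl
    rw [hBeq]
    exact B_pos E A q ε ⟨hq1, hq2, hq3, hq4, hq5⟩ hε0 hε1 hεκ hzero
  -- derivative of R at 0
  obtain ⟨r0, hRderiv⟩ : ∃ r0, HasDerivAt R r0 0 := by
    have hd1 := HasDerivAt.fun_sum (x := (0:ℝ)) fun (a : A) (_ : a ∈ univ) =>
      HasDerivAt.fun_sum fun y (_ : y ∈ univ) =>
        hderiv_branch' (q.1 a y) (v.1 a y) (HA a y) (hq1 a y)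
    have hd2 := HasDerivAt.fun_sum (x := (0:ℝ)) fun (i : I) (_ : i ∈ univ) =>
      HasDerivAt.const_mul (1 - (degA A i : ℝ))
        (HasDerivAt.fun_sum fun (x : E i) (_ : x ∈ univ) =>
          hderiv_branch' (q.2 i x) (v.2 i x) (HI i x) (hq2 i x))
    exact ⟨_, hd1.add hd2⟩
  -- contradiction
  have hslope : Filter.Tendsto (fun t => (R t - R 0)/t) (nhdsWithin 0 (Set.Ioi 0)) (nhds r0) := by
    have h1 := hasDerivAt_iff_tendsto_slope.1 hRderiv
    have h2 : Filter.Tendsto (slope R 0) (nhdsWithin 0 (Set.Ioi 0)) (nhds r0) :=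
      h1.mono_left (nhdsWithin_mono 0 (fun t ht => ne_of_gt ht))
    refine h2.congr fun t => ?_
    rw [slope_def_field, sub_zero]
  have hlogB : Filter.Tendsto (fun t => B * Real.log t) (nhdsWithin 0 (Set.Ioi 0))
      Filter.atBot :=
    Filter.Tendsto.const_mul_atBot hB Real.tendsto_log_nhdsGT_zero
  have hsum := hslope.add_atBot hlogB
  have hev := hsum.eventually (Filter.eventually_lt_atBot (0:ℝ))
  have h01 : ∀ᶠ t in nhdsWithin (0:ℝ) (Set.Ioi 0), t < 1 :=
    Filter.Eventually.filter_mono nhdsWithin_le_nhds (eventually_lt_nhds zero_lt_one)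
  have hpos : ∀ᶠ t in nhdsWithin (0:ℝ) (Set.Ioi 0), 0 < t :=
    eventually_nhdsWithin_of_forall fun t ht => ht
  obtain ⟨t, hlt, ht1, ht0⟩ := (hev.and (h01.and hpos)).exists
  have h3 : t * ((R t - R 0)/t + B * Real.log t) < 0 := mul_neg_of_pos_of_neg ht0 hlt
  have h4 : t * ((R t - R 0)/t + B * Real.log t) = R t - R 0 + B * (t * Real.log t) := by
    field_simp
  have hminle := hmin (hfeas_t t ht0.le ht1.le)
  have hfq : freeE E A HI HA q = R 0 := by
    have h0 := hdecomp 0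
    rw [lineF_zero] at h0
    simpa using h0
  have hft := hdecomp t
  have hml : freeE E A HI HA q ≤ freeE E A HI HA (lineF E A q v t) := hminle
  rw [h4] at h3
  linarith [hml, hft, hfq, h3]

end MinPos
section Mult
variable {I : Type} [Fintype I] [DecidableEq I] (E : I → Type)
  [∀ i, Fintype (E i)] [∀ i, DecidableEq (E i)] [∀ i, Nonempty (E i)]

/-- The linear map sending a family of single-site functions to their sum. -/
noncomputable def siteMap (a0 : Finset I) :
    ((i : {x // x ∈ a0}) → E i → ℝ) →ₗ[ℝ] EuclideanSpace ℝ ((j : a0) → E j) where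
  toFun := fun l => WithLp.toLp 2 (fun y => ∑ i, l i (y i))
  map_add' := by
    intro l1 l2
    ext y
    exact Finset.sum_add_distrib
  map_smul' := by
    intro c l
    ext y
    show ∑ i, c * l i (y i) = c * ∑ i, l i (y i)
    rw [Finset.mul_sum]

variable (A : Finset (Finset I)) (HI : (i : I) → E i → ℝ)
  (HA : (a : Finset I) → ((i : a) → E i) → ℝ)

lemma type1 (q : QSp E A) (hq : q ∈ feas E A)
    (hmin : IsMinOn (freeE E A HI HA) (feas E A) q)
    (hpos1 : ∀ a y, 0 < q.1 a y) (hpos2 : ∀ (i : I) (x : E i), 0 < q.2 i x)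
    (a0 : A) (i0 : ((a0 : Finset I) : Type)) :
    ∃ l : (i : ((a0 : Finset I) : Type)) → E i → ℝ,
      ∀ y : (j : (a0 : Finset I)) → E j,
        HA a0 y + 1 + Real.log (q.1 a0 y) = ∑ i, l i (y i) := by
  classical
  have hΦapp : ∀ (l : (i : ((a0 : Finset I) : Type)) → E i → ℝ) y,
      siteMap E (a0 : Finset I) l y = ∑ i, l i (y i) := fun l y => rfl
  set Φ := siteMap E (a0 : Finset I) with hΦ
  set W := LinearMap.range Φ with hW
  set g : EuclideanSpace ℝ ((j : (a0 : Finset I)) → E j) :=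
    (WithLp.equiv 2 (((j : (a0 : Finset I)) → E j) → ℝ)).symm
      (fun y => HA a0 y + 1 + Real.log (q.1 a0 y)) with hg
  have hginW : g ∈ W := by
    rw [← Submodule.orthogonal_orthogonal W]
    rw [Submodule.mem_orthogonal]
    intro u hu
    -- marginals of u vanish
    have hmarg : ∀ (i : ((a0 : Finset I) : Type)) (x : E i),
        ∑ y ∈ univ.filter (fun y : (j : (a0 : Finset I)) → E j => y i = x), u y = 0 := by
      intro i x
      set indVec : EuclideanSpace ℝ ((j : (a0 : Finset I)) → E j) :=
        (WithLp.equiv 2 (((j : (a0 : Finset I)) → E j) → ℝ)).symm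
          (fun y => if y i = x then 1 else 0) with hind
      have hindapp : ∀ y, indVec y = (if y i = x then 1 else 0) := fun y => rfl
      have hl0 : Φ (Function.update (0 : (i : ((a0 : Finset I) : Type)) → E i → ℝ) i
          (fun z => if z = x then 1 else 0)) = indVec := by
        ext y
        rw [hΦapp, hindapp]
        rw [Finset.sum_eq_single i]
        · rw [Function.update_self]
        · intro i' _ hne
          rw [Function.update_of_ne hne]
          rfl
        · intro h
          exact absurd (Finset.mem_univ i) h
      have h0 := hu (Φ (Function.update (0 : (i : ((a0 : Finset I) : Type)) → E i → ℝ) i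
          (fun z => if z = x then 1 else 0))) (LinearMap.mem_range_self Φ _)
      rw [hl0] at h0
      have hinner : (inner ℝ indVec u : ℝ)
          = ∑ y ∈ univ.filter (fun y : (j : (a0 : Finset I)) → E j => y i = x), u y := by
        rw [PiLp.inner_apply]
        rw [Finset.sum_filter]
        refine Finset.sum_congr rfl fun y _ => ?_
        rw [RCLike.inner_apply, conj_trivial, hindapp]
        by_cases hy : y i = x
        · simp [hy]
        · simp [hy]
      rw [hinner] at h0
      exact h0
    -- direction supported on a0
    set vA : (a : A) → ((j : (a : Finset I)) → E j) → ℝ :=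
      fun a y => if h : a = a0 then u (h ▸ y) else 0 with hvA
    have hstat := stationarity E A HI HA q hq hmin hpos1 hpos2 (vA, 0)
      (by
        intro a
        show ∑ y, vA a y = 0
        by_cases h : a = a0
        · subst h
          have : ∀ y, vA a y = u y := by
            intro y
            simp [hvA]
          rw [Finset.sum_congr rfl fun y _ => this y]
          rw [← sum_fiber_total (a : Finset I) i0 u]
          exact Finset.sum_eq_zero fun x _ => hmarg i0 x
        · exact Finset.sum_eq_zero fun y _ => by simp [hvA, h])
      (by intro i; simp)
      (by
        intro a i x
        show ∑ y ∈ _, vA a y = (0 : (i : I) → E i → ℝ) i x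
        by_cases h : a = a0
        · subst h
          have : ∀ y ∈ univ.filter (fun y : (j : (a : Finset I)) → E j => y i = x),
              vA a y = u y := fun y _ => by simp [hvA]
          rw [Finset.sum_congr rfl this, hmarg i x]
          rfl
        · rw [Finset.sum_eq_zero fun y _ => by simp [hvA, h]]
          rfl)
    -- extract: sum over a0 only
    have hsum0 : ∑ a : A, ∑ y, vA a y * (HA a y + 1 + Real.log (q.1 a y))
        = ∑ y, u y * (HA a0 y + 1 + Real.log (q.1 a0 y)) := by
      rw [Finset.sum_eq_single a0]
      · refine Finset.sum_congr rfl fun y _ => ?_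
        simp [hvA]
      · intro a _ hne
        exact Finset.sum_eq_zero fun y _ => by simp [hvA, hne]
      · intro h
        exact absurd (Finset.mem_univ a0) h
    rw [hsum0] at hstat
    have hzero2 : ∑ i : I, (1 - (degA A i : ℝ)) *
        ∑ x, (0 : (i : I) → E i → ℝ) i x * (HI i x + 1 + Real.log (q.2 i x)) = 0 := by
      refine Finset.sum_eq_zero fun i _ => ?_
      rw [Finset.sum_eq_zero fun x _ => by simp]
      exact mul_zero _
    rw [hzero2, add_zero] at hstat
    rw [PiLp.inner_apply]
    simpa [hg, RCLike.inner_apply, mul_comm] using hstat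
  obtain ⟨l, hl⟩ := hginW
  exact ⟨l, fun y => (congrFun (congrArg WithLp.ofLp hl) y).symm⟩

end Mult
section Mult2
variable {I : Type} [Fintype I] [DecidableEq I] (E : I → Type)
  [∀ i, Fintype (E i)] [∀ i, DecidableEq (E i)] [∀ i, Nonempty (E i)]
  (A : Finset (Finset I)) (HI : (i : I) → E i → ℝ)
  (HA : (a : Finset I) → ((i : a) → E i) → ℝ)

lemma const_of_sum_zero {β : Type} [Fintype β] [DecidableEq β] (G : β → ℝ)
    (h : ∀ f : β → ℝ, ∑ z, f z = 0 → ∑ z, f z * G z = 0) :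
    ∀ x1 x2, G x1 = G x2 := by
  intro x1 x2
  by_cases hx : x1 = x2
  · rw [hx]
  · have hf : ∑ z, ((if z = x1 then (1:ℝ) else 0) - (if z = x2 then 1 else 0)) = 0 := by
      rw [Finset.sum_sub_distrib]
      simp
    have := h _ hf
    have hexp : ∑ z, ((if z = x1 then (1:ℝ) else 0) - (if z = x2 then 1 else 0)) * G z
        = G x1 - G x2 := by
      have : ∀ z, ((if z = x1 then (1:ℝ) else 0) - (if z = x2 then 1 else 0)) * G z
          = (if z = x1 then G z else 0) - (if z = x2 then G z else 0) := by
        intro z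
        split_ifs <;> ring
      rw [Finset.sum_congr rfl fun z _ => this z, Finset.sum_sub_distrib]
      simp
    rw [hexp] at this
    linarith

lemma type2 (q : QSp E A) (hq : q ∈ feas E A)
    (hmin : IsMinOn (freeE E A HI HA) (feas E A) q)
    (hpos1 : ∀ a y, 0 < q.1 a y) (hpos2 : ∀ (i : I) (x : E i), 0 < q.2 i x)
    (L : (a : A) → (i : ((a : Finset I) : Type)) → E i → ℝ)
    (hL : ∀ (a : A) (y : (j : (a : Finset I)) → E j), ((a : Finset I)).Nonempty →
      HA a y + 1 + Real.log (q.1 a y) = ∑ i, L a i (y i))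
    (i0 : I) :
    ∀ x1 x2 : E i0,
      ((∑ a : A, if h : i0 ∈ (a : Finset I) then L a ⟨i0, h⟩ x1 else 0)
        + (1 - (degA A i0 : ℝ)) * (HI i0 x1 + 1 + Real.log (q.2 i0 x1)))
      = ((∑ a : A, if h : i0 ∈ (a : Finset I) then L a ⟨i0, h⟩ x2 else 0)
        + (1 - (degA A i0 : ℝ)) * (HI i0 x2 + 1 + Real.log (q.2 i0 x2))) := by
  classical
  refine const_of_sum_zero _ ?_
  intro f hf
  -- the direction
  set base : (k : I) → E k → ℝ := fun k _ => (Fintype.card (E k) : ℝ)⁻¹ with hbase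
  set gg : (k : I) → E k → ℝ := Function.update base i0 f with hgg
  set vA : (a : A) → ((j : (a : Finset I)) → E j) → ℝ :=
    fun a y => if h : i0 ∈ (a : Finset I) then ∏ j : (a : Finset I), gg (j : I) (y j) else 0
    with hvA
  set vI : (i : I) → E i → ℝ := Function.update (0 : (i : I) → E i → ℝ) i0 f with hvI
  have hggsum : ∀ k : I, k ≠ i0 → ∑ z, gg k z = 1 := by
    intro k hk
    rw [hgg, Function.update_of_ne hk, hbase]
    rw [Finset.sum_const, Finset.card_univ, nsmul_eq_mul,
      mul_inv_cancel₀ (card_pos' E k).ne']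
  have hggsum0 : ∑ z, gg i0 z = 0 := by
    rw [hgg, Function.update_self]
    exact hf
  have hvsum1 : ∀ a, ∑ y, vA a y = 0 := by
    intro a
    by_cases h : i0 ∈ (a : Finset I)
    · have : ∀ y, vA a y = ∏ j : (a : Finset I), gg (j : I) (y j) := fun y => by
        simp [hvA, h]
      rw [Finset.sum_congr rfl fun y _ => this y, sum_prod_site]
      exact Finset.prod_eq_zero (Finset.mem_univ (⟨i0, h⟩ : ((a : Finset I) : Type)))
        hggsum0
    · exact Finset.sum_eq_zero fun y _ => by simp [hvA, h]
  have hvsum2 : ∀ i, ∑ x, vI i x = 0 := by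
    intro i
    by_cases h : i = i0
    · subst h
      have he : ∀ x : E i, vI i x = f x := fun x => by rw [hvI, Function.update_self]
      rw [Finset.sum_congr rfl fun x _ => he x]
      exact hf
    · have he : ∀ x : E i, vI i x = 0 := fun x => by rw [hvI, Function.update_of_ne h]; rfl
      exact Finset.sum_eq_zero fun x _ => he x
  have hvmarg : ∀ (a : A) (i : (a : Finset I)) (x : E i),
      ∑ y ∈ univ.filter (fun y : (j : (a : Finset I)) → E j => y i = x), vA a y
        = vI (i : I) x := by
    intro a i x
    by_cases h : i0 ∈ (a : Finset I)
    · have hva : ∀ y, vA a y = ∏ j : (a : Finset I), gg (j : I) (y j) := fun y => by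
        simp [hvA, h]
      rw [Finset.sum_congr rfl fun y _ => hva y]
      rw [sum_fiber_prod (a : Finset I) i x gg]
      by_cases hi : (i : I) = i0
      · subst hi
        have hfac : ∏ j ∈ univ.erase i, ∑ z, gg (j : I) z = 1 := by
          refine Finset.prod_eq_one fun j hj => ?_
          exact hggsum (j : I) fun hje => (Finset.mem_erase.1 hj).1 (Subtype.ext hje)
        rw [hfac, mul_one]
        rw [hgg, Function.update_self, hvI, Function.update_self]
      · have hj0 : (⟨i0, h⟩ : ((a : Finset I) : Type)) ∈ univ.erase i := by
          refine Finset.mem_erase.2 ⟨?_, Finset.mem_univ _⟩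
          intro heq
          exact hi (by rw [← heq])
        have hfac : ∏ j ∈ univ.erase i, ∑ z, gg (j : I) z = 0 :=
          Finset.prod_eq_zero hj0 hggsum0
        rw [hfac, mul_zero, hvI, Function.update_of_ne hi]
        rfl
    · have hva : ∀ y, vA a y = 0 := fun y => by simp [hvA, h]
      rw [Finset.sum_eq_zero fun y _ => hva y]
      have hi : (i : I) ≠ i0 := fun heq => h (heq ▸ i.2)
      rw [hvI, Function.update_of_ne hi]
      rfl
  obtain ⟨hq1, hq2, hq3, hq4, hq5⟩ := hq
  have hstat := stationarity E A HI HA q ⟨hq1, hq2, hq3, hq4, hq5⟩ hmin hpos1 hpos2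
    (vA, vI) hvsum1 hvsum2 hvmarg
  -- node part
  have hnode : ∑ i : I, (1 - (degA A i : ℝ)) *
      ∑ x, (vA, vI).2 i x * (HI i x + 1 + Real.log (q.2 i x))
      = (1 - (degA A i0 : ℝ)) * ∑ x, f x * (HI i0 x + 1 + Real.log (q.2 i0 x)) := by
    rw [Finset.sum_eq_single i0]
    · congr 1
      refine Finset.sum_congr rfl fun x _ => ?_
      show vI i0 x * _ = _
      rw [hvI, Function.update_self]
    · intro i _ hne
      have he : ∀ x : E i, vI i x = 0 := fun x => by
        rw [hvI, Function.update_of_ne hne]; rfl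
      rw [Finset.sum_eq_zero fun x _ => by rw [show (vA, vI).2 i x = vI i x from rfl, he x, zero_mul]]
      exact mul_zero _
    · intro hmem
      exact absurd (Finset.mem_univ i0) hmem
  -- factor part
  have hfact : ∑ a : A, ∑ y, (vA, vI).1 a y * (HA a y + 1 + Real.log (q.1 a y))
      = ∑ x, f x * (∑ a : A, if h : i0 ∈ (a : Finset I) then L a ⟨i0, h⟩ x else 0) := by
    have hswap : ∑ x, f x * (∑ a : A, if h : i0 ∈ (a : Finset I) then L a ⟨i0, h⟩ x else 0)
        = ∑ a : A, ∑ x, f x * (if h : i0 ∈ (a : Finset I) then L a ⟨i0, h⟩ x else 0) := by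
      rw [Finset.sum_comm]
      refine Finset.sum_congr rfl fun x _ => Finset.mul_sum _ _ _
    rw [hswap]
    refine Finset.sum_congr rfl fun a _ => ?_
    by_cases h : i0 ∈ (a : Finset I)
    · have hane : ((a : Finset I)).Nonempty := ⟨i0, h⟩
      have e1 : ∑ y, vA a y * (HA a y + 1 + Real.log (q.1 a y))
          = ∑ i : (a : Finset I), ∑ y, vA a y * L a i (y i) := by
        rw [← Finset.sum_comm]
        refine Finset.sum_congr rfl fun y _ => ?_
        rw [hL a y hane, Finset.mul_sum]
      have e2 : ∀ i : (a : Finset I), ∑ y, vA a y * L a i (y i)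
          = ∑ x', L a i x' * vI (i : I) x' := by
        intro i
        rw [← sum_fiber_total (a : Finset I) i (fun y => vA a y * L a i (y i))]
        refine Finset.sum_congr rfl fun x' _ => ?_
        have : ∀ y ∈ univ.filter (fun y : (j : (a : Finset I)) → E j => y i = x'),
            vA a y * L a i (y i) = L a i (y i) * vA a y := fun y _ => mul_comm _ _
        rw [Finset.sum_congr rfl this, sum_fiber_mul, hvmarg a i x']
      have e3 : ∑ i : (a : Finset I), ∑ x', L a i x' * vI (i : I) x'
          = ∑ x', L a ⟨i0, h⟩ x' * f x' := by
        rw [Finset.sum_eq_single (⟨i0, h⟩ : ((a : Finset I) : Type))]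
        · refine Finset.sum_congr rfl fun x' _ => ?_
          congr 1
          show vI i0 x' = f x'
          rw [hvI, Function.update_self]
        · intro i _ hne
          have hine : (i : I) ≠ i0 := fun heq => hne (Subtype.ext heq)
          refine Finset.sum_eq_zero fun x' _ => ?_
          have : vI (i : I) x' = 0 := by rw [hvI, Function.update_of_ne hine]; rfl
          rw [this, mul_zero]
        · intro hmem
          exact absurd (Finset.mem_univ _) hmem
      show ∑ y, vA a y * (HA a y + 1 + Real.log (q.1 a y)) = _
      rw [e1, Finset.sum_congr rfl fun i _ => e2 i, e3]
      refine Finset.sum_congr rfl fun x' _ => ?_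
      rw [dif_pos h, mul_comm]
    · have hva : ∀ y, vA a y = 0 := fun y => by simp [hvA, h]
      rw [Finset.sum_eq_zero fun y _ => by
        rw [show (vA, vI).1 a y = vA a y from rfl, hva y, zero_mul]]
      refine (Finset.sum_eq_zero fun x _ => ?_).symm
      rw [dif_neg h, mul_zero]
  rw [hfact, hnode] at hstat
  -- conclude
  have hgoal : ∑ z, f z * ((∑ a : A, if h : i0 ∈ (a : Finset I) then L a ⟨i0, h⟩ z else 0)
      + (1 - (degA A i0 : ℝ)) * (HI i0 z + 1 + Real.log (q.2 i0 z)))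
      = (∑ x, f x * (∑ a : A, if h : i0 ∈ (a : Finset I) then L a ⟨i0, h⟩ x else 0))
        + (1 - (degA A i0 : ℝ)) * ∑ x, f x * (HI i0 x + 1 + Real.log (q.2 i0 x)) := by
    rw [Finset.mul_sum]
    rw [← Finset.sum_add_distrib]
    refine Finset.sum_congr rfl fun z _ => ?_
    ring
  rw [hgoal]
  linarith [hstat]

end Mult2
section Final
variable {I : Type} [Fintype I] [DecidableEq I] (A : Finset (Finset I))

lemma deg_sum (j0 : I) :
    ∑ b : A, (if j0 ∈ (b : Finset I) then (1:ℝ) else 0) = (degA A j0 : ℝ) := by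
  rw [Finset.univ_eq_attach, Finset.sum_attach A (fun b => if j0 ∈ b then (1:ℝ) else 0),
    ← Finset.sum_filter, Finset.sum_const, nsmul_eq_mul, mul_one]
  simp [degA]

end Final

theorem stmt11 {I : Type} [Fintype I] [DecidableEq I] (E : I → Type)
    [∀ i, Fintype (E i)] [∀ i, DecidableEq (E i)] [∀ i, Nonempty (E i)]
    (A : Finset (Finset I))
    (HI : (i : I) → E i → ℝ) (HA : (a : Finset I) → ((i : a) → E i) → ℝ) :
    ∃ (M : (b : A) → (j : (b : Finset I)) → E j → ℝ)
      (C : (a : A) → (i : (a : Finset I)) → ℝ),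
      ∀ (a : A) (i : (a : Finset I)) (x : E i),
        logBP E A HI HA M a i x = M a i x + C a i := by
  classical
  obtain ⟨q, hqmem, hmin⟩ := exists_minimizer E A HI HA
  obtain ⟨hpos1, hpos2⟩ := minimizer_pos E A HI HA q hqmem hmin
  have hLex : ∀ a : A, ∃ l : (i : ((a : Finset I) : Type)) → E i → ℝ,
      ((a : Finset I).Nonempty → ∀ y : (j : (a : Finset I)) → E j,
        HA a y + 1 + Real.log (q.1 a y) = ∑ i, l i (y i)) := by
    intro a
    by_cases h : (a : Finset I).Nonempty
    · obtain ⟨i0v, hi0⟩ := h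
      obtain ⟨l, hl⟩ := type1 E A HI HA q hqmem hmin hpos1 hpos2 a ⟨i0v, hi0⟩
      exact ⟨l, fun _ => hl⟩
    · exact ⟨fun _ _ => 0, fun hne => absurd hne h⟩
  choose L hL using hLex
  have hκex : ∀ i0 : I, ∃ κ : ℝ, ∀ x : E i0,
      (∑ a : A, if h : i0 ∈ (a : Finset I) then L a ⟨i0, h⟩ x else 0)
        + (1 - (degA A i0 : ℝ)) * (HI i0 x + 1 + Real.log (q.2 i0 x)) = κ := by
    intro i0
    have hconst := type2 E A HI HA q hqmem hmin hpos1 hpos2 L (fun a y h => hL a h y) i0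
    have x0 : E i0 := Classical.arbitrary (E i0)
    exact ⟨_, fun x => hconst x x0⟩
  choose κ hκ using hκex
  refine ⟨fun b j x => HI j x + Real.log (q.2 j x) - L b j x,
    fun a i => 1 + ∑ j ∈ univ.erase i, (1 - (degA A (j : I) : ℝ) - κ (j : I)), ?_⟩
  intro a i x
  set M : (b : A) → (j : (b : Finset I)) → E j → ℝ :=
    fun b j x => HI j x + Real.log (q.2 j x) - L b j x with hM
  have hane : (a : Finset I).Nonempty := ⟨i, i.2⟩
  obtain ⟨hq1, hq2, hq3, hq4, hq5⟩ := hqmem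
  set Kc : ℝ := ∑ j ∈ univ.erase i, (1 - (degA A (j : I) : ℝ) - κ (j : I)) with hKc
  -- step 1 : per-site value of the inner message sum
  have hstep1 : ∀ (y : (j : (a : Finset I)) → E j) (j : ((a : Finset I) : Type)),
      (∑ b : A, if h : (j : I) ∈ (b : Finset I) ∧ b ≠ a ∧ j ≠ i
        then M b ⟨j, h.1⟩ (y j) else 0)
      = if j = i then 0
        else (L a j (y j) - κ (j : I) - ((degA A (j : I) : ℝ) - 1)) := by
    intro y j
    by_cases hji : j = i
    · rw [if_pos hji]
      exact Finset.sum_eq_zero fun b _ => dif_neg (fun hcon => hcon.2.2 hji)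
    · rw [if_neg hji]
      have hterm : ∀ b : A,
          (if h : (j : I) ∈ (b : Finset I) ∧ b ≠ a ∧ j ≠ i then M b ⟨j, h.1⟩ (y j) else 0)
          = (if h : (j : I) ∈ (b : Finset I)
              then (HI (j : I) (y j) + Real.log (q.2 (j : I) (y j)) - L b ⟨j, h⟩ (y j))
              else 0)
            - (if b = a
                then (HI (j : I) (y j) + Real.log (q.2 (j : I) (y j)) - L a j (y j))
                else 0) := by
        intro b
        by_cases hba : b = a
        · subst hba
          rw [if_pos rfl, dif_pos j.2, dif_neg (fun hcon => hcon.2.1 rfl)]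
          exact (sub_self _).symm
        · rw [if_neg hba, sub_zero]
          by_cases hjb : (j : I) ∈ (b : Finset I)
          · rw [dif_pos (⟨hjb, hba, hji⟩ : (j : I) ∈ (b : Finset I) ∧ b ≠ a ∧ j ≠ i),
              dif_pos hjb]
          · rw [dif_neg (fun hcon => hjb hcon.1), dif_neg hjb]
      rw [Finset.sum_congr rfl fun b _ => hterm b, Finset.sum_sub_distrib]
      have hsub : ∑ b : A, (if b = a then
          (HI (j : I) (y j) + Real.log (q.2 (j : I) (y j)) - L a j (y j)) else 0)
          = HI (j : I) (y j) + Real.log (q.2 (j : I) (y j)) - L a j (y j) := by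
        rw [Finset.sum_ite_eq' univ a]
        simp
      have hmain : ∑ b : A, (if h : (j : I) ∈ (b : Finset I)
            then (HI (j : I) (y j) + Real.log (q.2 (j : I) (y j)) - L b ⟨j, h⟩ (y j))
            else 0)
          = (degA A (j : I) : ℝ) * (HI (j : I) (y j) + Real.log (q.2 (j : I) (y j)))
            - ∑ b : A, (if h : (j : I) ∈ (b : Finset I) then L b ⟨j, h⟩ (y j) else 0) := by
        have hterm2 : ∀ b : A, (if h : (j : I) ∈ (b : Finset I)
              then (HI (j : I) (y j) + Real.log (q.2 (j : I) (y j)) - L b ⟨j, h⟩ (y j))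
              else 0)
            = (if (j : I) ∈ (b : Finset I) then (1:ℝ) else 0)
                * (HI (j : I) (y j) + Real.log (q.2 (j : I) (y j)))
              - (if h : (j : I) ∈ (b : Finset I) then L b ⟨j, h⟩ (y j) else 0) := by
          intro b
          by_cases hjb : (j : I) ∈ (b : Finset I)
          · rw [dif_pos hjb, if_pos hjb, dif_pos hjb, one_mul]
          · rw [dif_neg hjb, if_neg hjb, dif_neg hjb, zero_mul, sub_zero]
        rw [Finset.sum_congr rfl fun b _ => hterm2 b, Finset.sum_sub_distrib,
          ← Finset.sum_mul, deg_sum A (j : I)]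
      rw [hmain, hsub]
      have hS := hκ (j : I) (y j)
      nlinarith [hS]
  -- step 2 : total inner sum
  have hstep2 : ∀ y : (j : (a : Finset I)) → E j,
      (∑ j : ((a : Finset I) : Type), ∑ b : A,
        if h : (j : I) ∈ (b : Finset I) ∧ b ≠ a ∧ j ≠ i then M b ⟨j, h.1⟩ (y j) else 0)
      = (HA a y + 1 + Real.log (q.1 a y)) - L a i (y i) + Kc := by
    intro y
    rw [Finset.sum_congr rfl fun j _ => hstep1 y j]
    have hsplit : ∑ j : ((a : Finset I) : Type),
        (if j = i then 0 else (L a j (y j) - κ (j : I) - ((degA A (j : I) : ℝ) - 1)))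
        = ∑ j ∈ univ.erase i, (L a j (y j) - κ (j : I) - ((degA A (j : I) : ℝ) - 1)) := by
      rw [← Finset.add_sum_erase univ _ (Finset.mem_univ i), if_pos rfl, zero_add]
      exact Finset.sum_congr rfl fun j hj => if_neg (Finset.mem_erase.1 hj).1
    rw [hsplit]
    have h1 : ∑ j ∈ univ.erase i, (L a j (y j) - κ (j : I) - ((degA A (j : I) : ℝ) - 1))
        = (∑ j ∈ univ.erase i, L a j (y j)) + Kc := by
      rw [hKc, ← Finset.sum_add_distrib]
      exact Finset.sum_congr rfl fun j _ => by ring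
    have h2 : L a i (y i) + ∑ j ∈ univ.erase i, L a j (y j)
        = ∑ j : ((a : Finset I) : Type), L a j (y j) :=
      Finset.add_sum_erase univ (fun j => L a j (y j)) (Finset.mem_univ i)
    have h3 := hL a hane y
    rw [h1]
    linarith [h2, h3]
  -- step 3 : evaluate the fiber sum and conclude
  show HI (i : I) x + Real.log (∑ y ∈ univ.filter
      (fun y : (j : (a : Finset I)) → E j => y i = x),
      Real.exp (-(HA a y) + ∑ j : ((a : Finset I) : Type), ∑ b : A,
        if h : (j : I) ∈ (b : Finset I) ∧ b ≠ a ∧ j ≠ i then M b ⟨j, h.1⟩ (y j) else 0))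
    = M a i x + (1 + Kc)
  have hexp : ∀ y ∈ univ.filter (fun y : (j : (a : Finset I)) → E j => y i = x),
      Real.exp (-(HA a y) + ∑ j : ((a : Finset I) : Type), ∑ b : A,
        if h : (j : I) ∈ (b : Finset I) ∧ b ≠ a ∧ j ≠ i then M b ⟨j, h.1⟩ (y j) else 0)
      = Real.exp (1 - L a i x + Kc) * q.1 a y := by
    intro y hy
    have hyi := (Finset.mem_filter.1 hy).2
    rw [hstep2 y]
    have harg : -(HA a y) + ((HA a y + 1 + Real.log (q.1 a y)) - L a i (y i) + Kc)
        = (1 - L a i x + Kc) + Real.log (q.1 a y) := by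
      rw [hyi]
      ring
    rw [harg, Real.exp_add, Real.exp_log (hpos1 a y)]
  rw [Finset.sum_congr rfl hexp, ← Finset.mul_sum, hq5 a i x,
    Real.log_mul (Real.exp_ne_zero _) (hpos2 (i : I) x).ne', Real.log_exp]
  show _ = HI (i : I) x + Real.log (q.2 (i : I) x) - L a i x + (1 + Kc)
  ring
end

section
/- Let I be a finite nonempty set, let E_i (i ∈ I) be nonempty finite sets, let A₀ be a nonempty antichain of subsets of I each of cardinality at least 2, and let A = {{i} : i ∈ I} ∪ A₀ ⊆ P(I), ordered by inclusion (so every chain of A has length at most 1). Let H_c : E_c → ℝ (c ∈ A) be any family of Hamiltonians. Then the generalized Bethe free energy BT_{A,H} has at least one critical point in the interior L(A)° of the local polytope. -/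
/- Setup: `I` a finite index set, `E i` nonempty finite sets of values, `A : Finset (Finset I)`
a collection of subsets of `I` ordered by inclusion.  For `a : Finset I`,
`Ea E a = ∏_{i ∈ a} E i`, with coordinate projections `proj`.  A family of "local functions"
indexed by `A` is an element of `Fam E A`. -/

abbrev Ea {I : Type} (E : I → Type) (a : Finset I) : Type := (i : a) → E i

def proj {I : Type} (E : I → Type) {a b : Finset I} (h : b ⊆ a) (x : Ea E a) : Ea E b :=
  fun i => x ⟨i, h i.2⟩

abbrev Fam {I : Type} (E : I → Type) (A : Finset (Finset I)) : Type :=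
  (a : A) → Ea E (a : Finset I) → ℝ

-- The local polytope `L(A)`: families of probability distributions compatible by marginalization.
open Classical in
def MemL {I : Type} (E : I → Type) [∀ i, Fintype (E i)] (A : Finset (Finset I))
    (Q : Fam E A) : Prop :=
  (∀ a : A, (∀ x, 0 ≤ Q a x) ∧ (∑ x, Q a x) = 1) ∧
  (∀ (a b : A) (h : (b : Finset I) ⊆ (a : Finset I)) (x : Ea E (b : Finset I)),
    Q b x = ∑ y ∈ Finset.univ.filter (fun y : Ea E (a : Finset I) => proj E h y = x), Q a y)

-- The interior `L(A)°`: members of `L(A)` with all distributions strictly positive.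
def MemLInt {I : Type} (E : I → Type) [∀ i, Fintype (E i)] (A : Finset (Finset I))
    (Q : Fam E A) : Prop :=
  MemL E A Q ∧ ∀ (a : A) (x : Ea E (a : Finset I)), 0 < Q a x

-- The tangent space `TL(A)` of the local polytope.
open Classical in
def MemT {I : Type} (E : I → Type) [∀ i, Fintype (E i)] (A : Finset (Finset I))
    (u : Fam E A) : Prop :=
  (∀ a : A, (∑ x, u a x) = 0) ∧
  (∀ (a b : A) (h : (b : Finset I) ⊆ (a : Finset I)) (x : Ea E (b : Finset I)),
    u b x = ∑ y ∈ Finset.univ.filter (fun y : Ea E (a : Finset I) => proj E h y = x), u a y)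

-- `μ` is the Möbius function of the poset `A` (ordered by inclusion): `μ x y = 0` for
-- `x, y ∈ A` with `¬ y ⊆ x`, and `∑_{b ∈ A, c ⊆ b ⊆ a} μ b c = δ_{a,c}` for `c ⊆ a` in `A`.
open Classical in
def IsMobius {I : Type} (A : Finset (Finset I)) (μ : Finset I → Finset I → ℤ) : Prop :=
  (∀ x ∈ A, ∀ y ∈ A, ¬ y ⊆ x → μ x y = 0) ∧
  (∀ a ∈ A, ∀ c ∈ A, c ⊆ a →
    (∑ b ∈ A.filter (fun b => c ⊆ b ∧ b ⊆ a), μ b c) = if a = c then 1 else 0)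

-- `c_A(x) = ∑_{b ∈ A, b ⊇ x} μ_A(b, x)`.
open Classical in
noncomputable def coefC {I : Type} (A : Finset (Finset I)) (μ : Finset I → Finset I → ℤ)
    (x : Finset I) : ℤ :=
  ∑ b ∈ A.filter (fun b => x ⊆ b), μ b x

-- Shannon entropy `S(Q) = −∑_x Q x ln (Q x)` (with `0 ln 0 = 0`, as `Real.log 0 = 0`).
noncomputable def entropy {α : Type*} [Fintype α] (Q : α → ℝ) : ℝ :=
  -∑ x, Q x * Real.log (Q x)

-- The generalized Bethe free energy
-- `BT_{A,H}(Q) = ∑_{a ∈ A} c_A(a) (∑_x Q_a(x) H_a(x) − S(Q_a))`.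
open Classical in
noncomputable def BT {I : Type} (E : I → Type) [∀ i, Fintype (E i)]
    (A : Finset (Finset I)) (μ : Finset I → Finset I → ℤ)
    (H : (c : Finset I) → Ea E c → ℝ) (Q : Fam E A) : ℝ :=
  ∑ a : A, (coefC A μ (a : Finset I) : ℝ) *
    ((∑ x, Q a x * H (a : Finset I) x) - entropy (Q a))

-- A critical point of a functional `F` on `L(A)°`: a point `Q ∈ L(A)°` at which the
-- derivative at `t = 0` of `t ↦ F(Q + t u)` vanishes for every tangent vector `u ∈ TL(A)`.
open Classical in
def IsCritical {I : Type} (E : I → Type) [∀ i, Fintype (E i)]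
    (A : Finset (Finset I)) (F : Fam E A → ℝ) (Q : Fam E A) : Prop :=
  MemLInt E A Q ∧
  ∀ u : Fam E A, MemT E A u →
    deriv (fun t : ℝ => F (fun a x => Q a x + t * u a x)) 0 = 0

-- A global minimizer of `F` over `L(A)`.
def IsMinimizer {I : Type} (E : I → Type) [∀ i, Fintype (E i)]
    (A : Finset (Finset I)) (F : Fam E A → ℝ) (Q : Fam E A) : Prop :=
  MemL E A Q ∧ ∀ Q' : Fam E A, MemL E A Q' → F Q ≤ F Q'

-- Every chain of `A` has length at most 1: there is no chain `x ⊂ y ⊂ z` in `A`.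
def ChainsShort {I : Type} (A : Finset (Finset I)) : Prop :=
  ∀ x ∈ A, ∀ y ∈ A, ∀ z ∈ A, x ⊂ y → y ⊂ z → False

set_option linter.unusedSectionVars false
set_option linter.unusedVariables false
set_option maxHeartbeats 1000000

section Util
variable {I : Type} {E : I → Type} [∀ i, Fintype (E i)] [∀ i, Nonempty (E i)]

open Finset

open Classical in
noncomputable def glue {a b : Finset I} (_h : b ⊆ a) (x : Ea E b) (z : Ea E (a \ b)) : Ea E a :=
  fun j => if hj : (j : I) ∈ b then x ⟨j, hj⟩ else
    z ⟨j, Finset.mem_sdiff.mpr ⟨j.2, hj⟩⟩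

open Classical in
lemma sum_fiber {a b : Finset I} (h : b ⊆ a) (x : Ea E b) (F : Ea E a → ℝ) :
    ∑ y ∈ Finset.univ.filter (fun y : Ea E a => proj E h y = x), F y
      = ∑ z : Ea E (a \ b), F (glue h x z) := by
  have hglue : ∀ y ∈ Finset.univ.filter (fun y : Ea E a => proj E h y = x),
      glue h x (proj E Finset.sdiff_subset y) = y := by
    intro y hy
    have hyx : proj E h y = x := (Finset.mem_filter.mp hy).2
    funext k
    by_cases hk : (k : I) ∈ b
    · show (if hj : (k:I) ∈ b then x ⟨k, hj⟩ else _) = y k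
      rw [dif_pos hk]
      rw [← hyx]
      rfl
    · show (if hj : (k:I) ∈ b then x ⟨k, hj⟩ else _) = y k
      rw [dif_neg hk]
      rfl
  refine Finset.sum_nbij' (fun y => proj E (Finset.sdiff_subset) y)
    (fun z => glue h x z) ?_ ?_ ?_ ?_ ?_
  · intro y hy
    exact Finset.mem_univ _
  · intro z _
    refine Finset.mem_filter.mpr ⟨Finset.mem_univ _, ?_⟩
    funext k
    show glue h x z ⟨k, h k.2⟩ = x k
    unfold glue
    rw [dif_pos k.2]
  · exact hglue
  · intro z _
    funext k
    show glue h x z ⟨k, _⟩ = z k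
    unfold glue
    rw [dif_neg (Finset.mem_sdiff.mp k.2).2]
  · intro y hy
    rw [hglue y hy]

open Classical in
def prodm (c : Finset I) (f : (j : I) → E j → ℝ) : Ea E c → ℝ :=
  fun y => ∏ j : c, f j (y j)

open Classical in
lemma prodm_nonneg {c : Finset I} {f : (j : I) → E j → ℝ} (hf : ∀ j v, 0 ≤ f j v)
    (y : Ea E c) : 0 ≤ prodm c f y :=
  Finset.prod_nonneg fun j _ => hf _ _

open Classical in
lemma prodm_pos {c : Finset I} {f : (j : I) → E j → ℝ} (hf : ∀ j v, 0 < f j v)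
    (y : Ea E c) : 0 < prodm c f y :=
  Finset.prod_pos fun j _ => hf _ _

open Classical in
lemma prod_glue {a b : Finset I} (h : b ⊆ a) (f : (j : I) → E j → ℝ) (x : Ea E b)
    (z : Ea E (a \ b)) :
    prodm a f (glue h x z) = prodm b f x * prodm (a \ b) f z := by
  classical
  set g : I → ℝ := fun j => if hj : j ∈ b then f j (x ⟨j, hj⟩) else
    (if hj' : j ∈ a \ b then f j (z ⟨j, hj'⟩) else 1) with hg
  have h1 : prodm a f (glue h x z) = ∏ j ∈ a, g j := by
    rw [← Finset.prod_attach a g]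
    refine Finset.prod_congr rfl fun j _ => ?_
    by_cases hj : (j : I) ∈ b
    · show f j (glue h x z j) = g j
      unfold glue
      rw [hg]
      simp only
      rw [dif_pos hj, dif_pos hj]
    · show f j (glue h x z j) = g j
      have hj' : (j : I) ∈ a \ b := Finset.mem_sdiff.mpr ⟨j.2, hj⟩
      unfold glue
      rw [hg]
      simp only
      rw [dif_neg hj, dif_neg hj, dif_pos hj']
  have h2 : prodm b f x = ∏ j ∈ b, g j := by
    rw [← Finset.prod_attach b g]
    refine Finset.prod_congr rfl fun j _ => ?_
    show f j (x j) = g j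
    rw [hg]; simp only
    rw [dif_pos j.2]
  have h3 : prodm (a \ b) f z = ∏ j ∈ a \ b, g j := by
    rw [← Finset.prod_attach (a \ b) g]
    refine Finset.prod_congr rfl fun j _ => ?_
    show f j (z j) = g j
    rw [hg]; simp only
    rw [dif_neg (Finset.mem_sdiff.mp j.2).2, dif_pos j.2]
  rw [h1, h2, h3, ← Finset.prod_sdiff h, mul_comm]

open Classical in
lemma sum_prodm (c : Finset I) (f : (j : I) → E j → ℝ) :
    ∑ y : Ea E c, prodm c f y = ∏ j : c, ∑ v, f (j : I) v := by
  classical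
  rw [Finset.prod_univ_sum]
  rw [Fintype.piFinset_univ]
  rfl

open Classical in
lemma sum_prodm_one (c : Finset I) (f : (j : I) → E j → ℝ) (hf : ∀ j ∈ c, ∑ v, f j v = 1) :
    ∑ y : Ea E c, prodm c f y = 1 := by
  rw [sum_prodm]
  exact Finset.prod_eq_one fun j _ => hf j j.2

open Classical in
lemma prodm_marg {a b : Finset I} (h : b ⊆ a) (f : (j : I) → E j → ℝ)
    (hf : ∀ j ∈ a, j ∉ b → ∑ v, f j v = 1) (x : Ea E b) :
    ∑ y ∈ Finset.univ.filter (fun y : Ea E a => proj E h y = x), prodm a f y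
      = prodm b f x := by
  rw [sum_fiber h x]
  have : ∀ z : Ea E (a \ b), prodm a f (glue h x z) = prodm b f x * prodm (a \ b) f z :=
    prod_glue h f x
  rw [Finset.sum_congr rfl fun z _ => this z, ← Finset.mul_sum]
  rw [sum_prodm_one (a \ b) f (fun j hj => hf j (Finset.mem_sdiff.mp hj).1
    (Finset.mem_sdiff.mp hj).2), mul_one]

def imem (i : I) : ({i} : Finset I) := ⟨i, Finset.mem_singleton_self i⟩

open Classical in
lemma eq_imem {i : I} (j : ({i} : Finset I)) : j = imem i :=
  Subtype.ext (Finset.mem_singleton.mp j.2)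

open Classical in
instance uniqueSing (i : I) : Unique (({i} : Finset I) : Type) := ⟨⟨imem i⟩, eq_imem⟩

def sing (i : I) (v : E i) : Ea E {i} := fun j => (Finset.mem_singleton.mp j.2).symm ▸ v

open Classical in
lemma sing_imem (i : I) (v : E i) : sing i v (imem i) = v := rfl

open Classical in
lemma sing_eval {i : I} (x : Ea E {i}) : sing i (x (imem i)) = x := by
  funext j
  rcases j with ⟨j, hj⟩
  obtain rfl : j = i := Finset.mem_singleton.mp hj
  rfl

open Classical in
def singEquiv (i : I) : E i ≃ Ea E {i} :=
  ⟨sing i, fun x => x (imem i), fun v => sing_imem i v, fun x => sing_eval x⟩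

open Classical in
lemma sum_sing (i : I) (g : Ea E ({i} : Finset I) → ℝ) :
    ∑ x : Ea E ({i} : Finset I), g x = ∑ v : E i, g (sing i v) :=
  (Equiv.sum_comp (singEquiv i) g).symm

open Classical in
lemma prodm_singleton (i : I) (f : (j : I) → E j → ℝ) (x : Ea E ({i} : Finset I)) :
    prodm {i} f x = f i (x (imem i)) := by
  unfold prodm
  rw [Fintype.prod_unique]
  rfl

open Classical in
lemma sum_fiber_refl {a : Finset I} (h : a ⊆ a) (F : Ea E a → ℝ) (x : Ea E a) :
    ∑ y ∈ Finset.univ.filter (fun y : Ea E a => proj E h y = x), F y = F x := by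
  rw [sum_fiber h x]
  have he : IsEmpty ((a \ a : Finset I) : Type) :=
    ⟨fun j => absurd j.2 (by simp)⟩
  have hu : Unique ((Ea E (a \ a)) : Type) := by
    exact ⟨⟨fun j => (he.elim j)⟩, fun y => funext fun j => (he.elim j)⟩
  rw [letI := hu; Fintype.sum_unique]
  congr 1
  funext k
  show (if hj : (k : I) ∈ a then x ⟨k, hj⟩ else _) = x k
  rw [dif_pos k.2]

end Util
section Facts
variable {I : Type} {E : I → Type} [∀ i, Fintype (E i)]
  [∀ i, Nonempty (E i)] {A A0 : Finset (Finset I)}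
  {μ : Finset I → Finset I → ℤ}

open Finset

open Classical in
lemma MemL.nonneg {Q : Fam E A} (hQ : MemL E A Q) (a : A) (x : Ea E (a : Finset I)) :
    0 ≤ Q a x := (hQ.1 a).1 x

open Classical in
lemma MemL.sum_one {Q : Fam E A} (hQ : MemL E A Q) (a : A) : ∑ x, Q a x = 1 := (hQ.1 a).2

open Classical in
lemma MemL.le_one {Q : Fam E A} (hQ : MemL E A Q) (a : A) (x : Ea E (a : Finset I)) :
    Q a x ≤ 1 := by
  calc Q a x ≤ ∑ y, Q a y :=
        Finset.single_le_sum (fun y _ => hQ.nonneg a y) (Finset.mem_univ x)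
    _ = 1 := hQ.sum_one a

open Classical in
lemma memL_convex {Q R : Fam E A} (hQ : MemL E A Q) (hR : MemL E A R) {t : ℝ}
    (h0 : 0 ≤ t) (h1 : t ≤ 1) : MemL E A (fun a x => (1 - t) * Q a x + t * R a x) := by
  constructor
  · intro a
    constructor
    · intro x
      show 0 ≤ (1 - t) * Q a x + t * R a x
      have := hQ.nonneg a x
      have := hR.nonneg a x
      nlinarith
    · show (∑ x, ((1 - t) * Q a x + t * R a x)) = 1
      rw [Finset.sum_add_distrib, ← Finset.mul_sum, ← Finset.mul_sum,
        hQ.sum_one a, hR.sum_one a]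
      ring
  · intro a b h x
    show (1 - t) * Q b x + t * R b x = _
    rw [Finset.sum_add_distrib, ← Finset.mul_sum, ← Finset.mul_sum,
      ← hQ.2 a b h x, ← hR.2 a b h x]

section Poset
variable [Fintype I] [DecidableEq I] (hA : A = (Finset.univ.image fun i : I => ({i} : Finset I)) ∪ A0)
  (hcard : ∀ a ∈ A0, 2 ≤ a.card)
  (hantichain : ∀ a ∈ A0, ∀ b ∈ A0, a ⊆ b → a = b)
  (hμ : IsMobius A μ)

include hA in
lemma sing_mem_A (i : I) : ({i} : Finset I) ∈ A := by
  rw [hA]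
  exact Finset.mem_union_left _ (Finset.mem_image.mpr ⟨i, Finset.mem_univ i, rfl⟩)

include hA in
lemma mem_A_cases {s : Finset I} (hs : s ∈ A) : (∃ i, s = {i}) ∨ s ∈ A0 := by
  rw [hA] at hs
  rcases Finset.mem_union.mp hs with h | h
  · obtain ⟨i, _, hi⟩ := Finset.mem_image.mp h
    exact Or.inl ⟨i, hi.symm⟩
  · exact Or.inr h

include hcard in
lemma A0_not_sing {s : Finset I} (hs : s ∈ A0) (i : I) : s ≠ {i} := by
  intro h
  have := hcard s hs
  rw [h, Finset.card_singleton] at this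
  omega

include hA hcard hantichain in
lemma subset_cases {a b : Finset I} (ha : a ∈ A) (hb : b ∈ A) (hba : b ⊆ a) :
    b = a ∨ (∃ i, b = {i} ∧ i ∈ a ∧ a ∈ A0) := by
  rcases mem_A_cases hA hb with ⟨i, rfl⟩ | hb0
  · rcases mem_A_cases hA ha with ⟨j, rfl⟩ | ha0
    · left
      have : i = j := Finset.mem_singleton.mp (hba (Finset.mem_singleton_self i))
      rw [this]
    · exact Or.inr ⟨i, rfl, hba (Finset.mem_singleton_self i), ha0⟩
  · left
    rcases mem_A_cases hA ha with ⟨j, rfl⟩ | ha0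
    · exfalso
      have h1 := Finset.card_le_card hba
      rw [Finset.card_singleton] at h1
      have := hcard b hb0
      omega
    · exact hantichain b hb0 a ha0 hba

include hμ in
lemma mu_refl {s : Finset I} (hs : s ∈ A) : μ s s = 1 := by
  classical
  have h := hμ.2 s hs s hs (subset_refl s)
  rw [if_pos rfl] at h
  rw [Finset.filter_congr_decidable] at h
  have hf : (A.filter (fun b => s ⊆ b ∧ b ⊆ s)) = {s} := by
    ext b
    simp only [Finset.mem_filter, Finset.mem_singleton]
    constructor
    · rintro ⟨_, h1, h2⟩
      exact Finset.Subset.antisymm h2 h1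
    · rintro rfl
      exact ⟨hs, subset_refl _, subset_refl _⟩
  rw [hf, Finset.sum_singleton] at h
  exact h

include hA hcard hantichain hμ in
lemma coefC_factor {s : Finset I} (hs : s ∈ A0) : coefC A μ s = 1 := by
  classical
  have hsA : s ∈ A := by rw [hA]; exact Finset.mem_union_right _ hs
  unfold coefC
  rw [Finset.filter_congr_decidable]
  have hf : (A.filter (fun b => s ⊆ b)) = {s} := by
    ext b
    simp only [Finset.mem_filter, Finset.mem_singleton]
    constructor
    · rintro ⟨hbA, hsb⟩
      rcases mem_A_cases hA hbA with ⟨i, rfl⟩ | hb0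
      · exfalso
        have h1 := Finset.card_le_card hsb
        rw [Finset.card_singleton] at h1
        have := hcard s hs
        omega
      · exact (hantichain s hs b hb0 hsb).symm
    · rintro rfl
      exact ⟨hsA, subset_refl _⟩
  rw [hf, Finset.sum_singleton]
  exact mu_refl hμ hsA

include hA hcard hantichain hμ in
lemma mu_factor_sing {s : Finset I} (hs : s ∈ A0) {i : I} (hi : i ∈ s) : μ s {i} = -1 := by
  classical
  have hsA : s ∈ A := by rw [hA]; exact Finset.mem_union_right _ hs
  have h := hμ.2 s hsA {i} (sing_mem_A hA i) (Finset.singleton_subset_iff.mpr hi)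
  rw [if_neg (A0_not_sing hcard hs i)] at h
  rw [Finset.filter_congr_decidable] at h
  have hf : (A.filter (fun b => {i} ⊆ b ∧ b ⊆ s)) = {({i} : Finset I), s} := by
    ext b
    simp only [Finset.mem_filter, Finset.mem_insert, Finset.mem_singleton]
    constructor
    · rintro ⟨hbA, h1, h2⟩
      rcases mem_A_cases hA hbA with ⟨j, rfl⟩ | hb0
      · left
        have : i = j := Finset.mem_singleton.mp (h1 (Finset.mem_singleton_self i))
        rw [this]
      · exact Or.inr (hantichain b hb0 s hs h2)
    · rintro (rfl | rfl)
      · exact ⟨sing_mem_A hA i, subset_refl _, Finset.singleton_subset_iff.mpr hi⟩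
      · exact ⟨hsA, Finset.singleton_subset_iff.mpr hi, subset_refl _⟩
  rw [hf, Finset.sum_pair (Ne.symm (A0_not_sing hcard hs i))] at h
  have h1 : μ {i} {i} = 1 := mu_refl hμ (sing_mem_A hA i)
  omega

include hA hcard hantichain hμ in
lemma coefC_sing (i : I) :
    coefC A μ {i} = 1 - ((A0.filter (fun a => i ∈ a)).card : ℤ) := by
  classical
  unfold coefC
  rw [Finset.filter_congr_decidable]
  have hf : (A.filter (fun b => {i} ⊆ b)) = insert {i} (A0.filter (fun a => i ∈ a)) := by
    ext b
    simp only [Finset.mem_filter, Finset.mem_insert, Finset.singleton_subset_iff]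
    constructor
    · rintro ⟨hbA, hib⟩
      rcases mem_A_cases hA hbA with ⟨j, rfl⟩ | hb0
      · left
        have : i = j := Finset.mem_singleton.mp hib
        rw [this]
      · exact Or.inr ⟨hb0, hib⟩
    · rintro (rfl | ⟨hb0, hib⟩)
      · exact ⟨sing_mem_A hA i, Finset.mem_singleton_self i⟩
      · exact ⟨by rw [hA]; exact Finset.mem_union_right _ hb0, hib⟩
  rw [hf, Finset.sum_insert]
  · have h1 : μ {i} {i} = 1 := mu_refl hμ (sing_mem_A hA i)
    have h2 : ∀ b ∈ A0.filter (fun a => i ∈ a), μ b {i} = -1 := by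
      intro b hb
      have := Finset.mem_filter.mp hb
      exact mu_factor_sing hA hcard hantichain hμ this.1 this.2
    rw [Finset.sum_congr rfl h2, Finset.sum_const, h1]
    simp only [nsmul_eq_mul]
    ring
  · intro hmem
    have := Finset.mem_filter.mp hmem
    exact A0_not_sing hcard this.1 i rfl

include hA hcard hantichain hμ in
lemma sum_coefC_over (i : I) :
    ∑ b ∈ A.filter (fun b => i ∈ b), coefC A μ b = 1 := by
  classical
  have hf : (A.filter (fun b => i ∈ b)) = insert {i} (A0.filter (fun a => i ∈ a)) := by
    ext b
    simp only [Finset.mem_filter, Finset.mem_insert]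
    constructor
    · rintro ⟨hbA, hib⟩
      rcases mem_A_cases hA hbA with ⟨j, rfl⟩ | hb0
      · left
        have : i = j := Finset.mem_singleton.mp hib
        rw [this]
      · exact Or.inr ⟨hb0, hib⟩
    · rintro (rfl | ⟨hb0, hib⟩)
      · exact ⟨sing_mem_A hA i, Finset.mem_singleton_self i⟩
      · exact ⟨by rw [hA]; exact Finset.mem_union_right _ hb0, hib⟩
  rw [hf, Finset.sum_insert]
  · have h2 : ∀ b ∈ A0.filter (fun a => i ∈ a), coefC A μ b = 1 := by
      intro b hb
      exact coefC_factor hA hcard hantichain hμ (Finset.mem_filter.mp hb).1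
    rw [Finset.sum_congr rfl h2, Finset.sum_const,
      coefC_sing hA hcard hantichain hμ i]
    simp only [nsmul_eq_mul]
    ring
  · intro hmem
    exact A0_not_sing hcard (Finset.mem_filter.mp hmem).1 i rfl

end Poset


section Minim
variable {I : Type} {E : I → Type} [∀ i, Fintype (E i)] [∀ i, Nonempty (E i)]
  {A : Finset (Finset I)} {μ : Finset I → Finset I → ℤ}
  {H : (c : Finset I) → Ea E c → ℝ}

open Classical in
lemma memL_uniform :
    MemL E A (fun b => prodm (↑b : Finset I) (fun j _ => (Fintype.card (E j) : ℝ)⁻¹)) := by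
  have hf : ∀ j : I, ∑ v : E j, (Fintype.card (E j) : ℝ)⁻¹ = 1 := by
    intro j
    rw [Finset.sum_const, Finset.card_univ, nsmul_eq_mul]
    exact mul_inv_cancel₀ (Nat.cast_ne_zero.mpr Fintype.card_ne_zero)
  constructor
  · intro a
    constructor
    · intro x
      exact prodm_nonneg (fun j v => by positivity) x
    · exact sum_prodm_one _ _ (fun j _ => hf j)
  · intro a b h x
    exact (prodm_marg h _ (fun j _ _ => hf j) x).symm

open Classical in
lemma bt_continuous : Continuous (BT E A μ H) := by
  unfold BT entropy
  refine continuous_finset_sum _ (fun a _ => Continuous.mul continuous_const ?_)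
  refine Continuous.sub ?_ ?_
  · exact continuous_finset_sum _
      (fun x _ => Continuous.mul (f := fun Q : Fam E A => Q a x) ((continuous_apply x).comp (continuous_apply a)) continuous_const)
  · exact (continuous_finset_sum _
      (fun x _ => Real.continuous_mul_log.comp ((continuous_apply x).comp (continuous_apply a)))).neg

open Classical in
lemma memL_isClosed : IsClosed {Q : Fam E A | MemL E A Q} := by
  have hd : {Q : Fam E A | MemL E A Q} =
      ((⋂ (a : A), ⋂ (x : Ea E (a : Finset I)), {Q : Fam E A | 0 ≤ Q a x}) ∩
       (⋂ (a : A), {Q : Fam E A | ∑ x, Q a x = 1})) ∩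
      (⋂ (a : A), ⋂ (b : A), ⋂ (h : (b : Finset I) ⊆ (a : Finset I)),
        ⋂ (x : Ea E (b : Finset I)),
        {Q : Fam E A | Q b x =
          ∑ y ∈ Finset.univ.filter (fun y : Ea E (a : Finset I) => proj E h y = x), Q a y}) := by
    ext Q
    simp only [Set.mem_inter_iff, Set.mem_iInter, Set.mem_setOf_eq, MemL]
    constructor
    · rintro ⟨h1, h2⟩
      exact ⟨⟨fun a x => (h1 a).1 x, fun a => (h1 a).2⟩, h2⟩
    · rintro ⟨⟨h1, h2⟩, h3⟩
      exact ⟨fun a => ⟨h1 a, h2 a⟩, h3⟩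
  rw [hd]
  have hev : ∀ (a : A) (x : Ea E (a : Finset I)),
      Continuous (fun Q : Fam E A => Q a x) :=
    fun a x => (continuous_apply x).comp (continuous_apply a)
  refine IsClosed.inter (IsClosed.inter ?_ ?_) ?_
  · exact isClosed_iInter (fun a => isClosed_iInter (fun x =>
      isClosed_le continuous_const (hev a x)))
  · exact isClosed_iInter (fun a => isClosed_eq
      (continuous_finset_sum _ (fun x _ => hev a x)) continuous_const)
  · exact isClosed_iInter (fun a => isClosed_iInter (fun b => isClosed_iInter (fun h =>
      isClosed_iInter (fun x => isClosed_eq (hev b x)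
        (continuous_finset_sum _ (fun y _ => hev a y))))))

open Classical in
lemma exists_minimizer_s12 :
    ∃ Q : Fam E A, MemL E A Q ∧
      ∀ Q' : Fam E A, MemL E A Q' → BT E A μ H Q ≤ BT E A μ H Q' := by
  have hne : Set.Nonempty {Q : Fam E A | MemL E A Q} :=
    ⟨_, memL_uniform⟩
  have hC : IsCompact (Set.pi Set.univ
      (fun a : A => Set.pi Set.univ (fun _x : Ea E (a : Finset I) => Set.Icc (0:ℝ) 1))) :=
    isCompact_univ_pi (fun a => isCompact_univ_pi (fun _x => isCompact_Icc))
  have hsub : {Q : Fam E A | MemL E A Q} ⊆ Set.pi Set.univ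
      (fun a : A => Set.pi Set.univ (fun _x : Ea E (a : Finset I) => Set.Icc (0:ℝ) 1)) := by
    intro Q hQ
    rw [Set.mem_univ_pi]
    intro a
    rw [Set.mem_univ_pi]
    intro x
    exact ⟨hQ.nonneg a x, hQ.le_one a x⟩
  have hcomp : IsCompact {Q : Fam E A | MemL E A Q} :=
    hC.of_isClosed_subset memL_isClosed hsub
  obtain ⟨Q, hQ, hmin⟩ := hcomp.exists_isMinOn hne (bt_continuous.continuousOn)
  exact ⟨Q, hQ, fun Q' hQ' => hmin hQ'⟩

open Classical in
lemma critical_of_min {Q : Fam E A} (hQ : MemL E A Q)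
    (hmin : ∀ Q', MemL E A Q' → BT E A μ H Q ≤ BT E A μ H Q')
    (hpos : ∀ (a : A) (x : Ea E (a : Finset I)), 0 < Q a x) (u : Fam E A)
    (hu : MemT E A u) :
    deriv (fun t : ℝ => BT E A μ H (fun a x => Q a x + t * u a x)) 0 = 0 := by
  apply IsLocalMin.deriv_eq_zero
  have hev : ∀ᶠ t : ℝ in nhds 0, ∀ (a : A) (x : Ea E (a : Finset I)),
      0 ≤ Q a x + t * u a x := by
    rw [Filter.eventually_all]
    intro a
    rw [Filter.eventually_all]
    intro x
    have hc : ContinuousAt (fun t : ℝ => Q a x + t * u a x) 0 := by fun_prop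
    have h0 : (0:ℝ) < Q a x + 0 * u a x := by
      have := hpos a x; nlinarith
    exact (hc.eventually (lt_mem_nhds h0)).mono (fun t ht => le_of_lt ht)
  have hQ0 : (fun (a : A) (x : Ea E (a : Finset I)) => Q a x + (0:ℝ) * u a x) = Q := by
    funext a x
    ring
  refine Filter.Eventually.mono hev ?_
  intro t ht
  have hmem : MemL E A (fun a x => Q a x + t * u a x) := by
    constructor
    · intro a
      constructor
      · exact ht a
      · show ∑ x, (Q a x + t * u a x) = 1
        rw [Finset.sum_add_distrib, ← Finset.mul_sum, hQ.sum_one a, hu.1 a, mul_zero, add_zero]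
    · intro a b h x
      show Q b x + t * u b x = _
      rw [Finset.sum_add_distrib, ← Finset.mul_sum, ← hQ.2 a b h x, ← hu.2 a b h x]
  show BT E A μ H (fun a x => Q a x + (0:ℝ) * u a x) ≤ _
  rw [hQ0]
  exact hmin _ hmem

end Minim

section Improve
variable {I : Type} {E : I → Type} [∀ i, Fintype (E i)] [∀ i, Nonempty (E i)]
  {A : Finset (Finset I)} {μ : Finset I → Finset I → ℤ}
  {H : (c : Finset I) → Ea E c → ℝ}

open Classical in
noncomputable def Kval (A : Finset (Finset I)) (μ : Finset I → Finset I → ℤ)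
    {E : I → Type} [∀ i, Fintype (E i)] (Q R : Fam E A) : ℝ :=
  ∑ b : A, (coefC A μ (b : Finset I) : ℝ) *
    ∑ x ∈ Finset.univ.filter (fun x => Q b x = 0), R b x

lemma philin {t r : ℝ} (ht : 0 < t) (hr : 0 ≤ r) :
    (t * r) * Real.log (t * r) = t * r * Real.log t + t * (r * Real.log r) := by
  rcases eq_or_lt_of_le hr with h | h
  · rw [← h]; simp
  · rw [Real.log_mul (ne_of_gt ht) (ne_of_gt h)]; ring

lemma phi_lip {q r t : ℝ} (hq : 0 < q) (hq1 : q ≤ 1) (hr : 0 ≤ r) (hr1 : r ≤ 1)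
    (ht : 0 ≤ t) (ht2 : t ≤ 1/2) :
    |((1-t)*q + t*r) * Real.log ((1-t)*q + t*r) - q * Real.log q|
      ≤ (|Real.log (q/2)| + 1) * t := by
  set s : Set ℝ := Set.Icc (q/2) 1 with hs
  have hmem : ((1-t)*q + t*r) ∈ s := ⟨by nlinarith, by nlinarith⟩
  have hqmem : q ∈ s := ⟨by nlinarith, hq1⟩
  have hderiv : ∀ y ∈ s, HasDerivWithinAt (fun y => y * Real.log y) (Real.log y + 1) s y := by
    intro y hy
    have hy0 : (0:ℝ) < y := lt_of_lt_of_le (by positivity) hy.1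
    exact (Real.hasDerivAt_mul_log (ne_of_gt hy0)).hasDerivWithinAt
  have hbound : ∀ y ∈ s, ‖Real.log y + 1‖ ≤ |Real.log (q/2)| + 1 := by
    intro y hy
    have hy0 : (0:ℝ) < y := lt_of_lt_of_le (by positivity) hy.1
    have h1 : Real.log y ≤ 0 := Real.log_nonpos (le_of_lt hy0) hy.2
    have h2 : Real.log (q/2) ≤ Real.log y := Real.log_le_log (by positivity) hy.1
    have h3 : Real.log (q/2) ≤ 0 := Real.log_nonpos (by positivity) (by nlinarith)
    rw [Real.norm_eq_abs]
    have h4 : |Real.log y| ≤ |Real.log (q/2)| := by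
      rw [abs_of_nonpos h1, abs_of_nonpos h3]
      linarith
    calc |Real.log y + 1| ≤ |Real.log y| + |(1:ℝ)| := abs_add_le _ _
      _ ≤ |Real.log (q/2)| + 1 := by rw [abs_one]; linarith
  have hmvt := Convex.norm_image_sub_le_of_norm_hasDerivWithin_le hderiv hbound
    (convex_Icc _ _) hqmem hmem
  rw [Real.norm_eq_abs, Real.norm_eq_abs] at hmvt
  have hyq : |((1-t)*q + t*r) - q| ≤ t := by
    have he : (1-t)*q + t*r - q = t*(r - q) := by ring
    rw [he, abs_mul, abs_of_nonneg ht]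
    have h5 : |r - q| ≤ 1 := abs_le.mpr ⟨by nlinarith, by nlinarith⟩
    nlinarith
  have hM : (0:ℝ) ≤ |Real.log (q/2)| + 1 := by positivity
  calc |((1-t)*q + t*r) * Real.log ((1-t)*q + t*r) - q * Real.log q|
      ≤ (|Real.log (q/2)| + 1) * |((1-t)*q + t*r) - q| := hmvt
    _ ≤ (|Real.log (q/2)| + 1) * t := by nlinarith

open Classical in
lemma improve {Q R : Fam E A} (hQ : MemL E A Q) (hR : MemL E A R)
    (hK : 0 < Kval A μ Q R) :
    ∃ Q', MemL E A Q' ∧ BT E A μ H Q' < BT E A μ H Q := by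
  set K := Kval A μ Q R with hKdef
  set C : ℝ := ∑ b : A, |(coefC A μ (b:Finset I) : ℝ)| *
      ((∑ x, |(R b x - Q b x) * H (b:Finset I) x|)
       + (∑ x ∈ Finset.univ.filter (fun x => Q b x = 0), |R b x * Real.log (R b x)|)
       + (∑ x ∈ Finset.univ.filter (fun x => ¬ Q b x = 0), (|Real.log (Q b x / 2)| + 1)))
    with hCdef
  set t := min (1/2 : ℝ) (Real.exp (-(C+1)/K)) with htdef
  have ht0 : 0 < t := lt_min (by norm_num) (Real.exp_pos _)
  have ht2 : t ≤ 1/2 := min_le_left _ _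
  have ht1 : t ≤ 1 := le_trans ht2 (by norm_num)
  have htlog : Real.log t * K ≤ -(C+1) := by
    have h1 : Real.log t ≤ -(C+1)/K := by
      have h2 := Real.log_le_log ht0 (min_le_right (1/2:ℝ) (Real.exp (-(C+1)/K)))
      rwa [Real.log_exp] at h2
    calc Real.log t * K ≤ (-(C+1)/K) * K :=
          mul_le_mul_of_nonneg_right h1 (le_of_lt hK)
      _ = -(C+1) := div_mul_cancel₀ _ (ne_of_gt hK)
  refine ⟨fun a x => (1-t) * Q a x + t * R a x,
    memL_convex hQ hR (le_of_lt ht0) ht1, ?_⟩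
  -- per-factor decomposition
  have key : ∀ b : A,
      ((∑ x, ((1-t)*Q b x + t*R b x) * H (b:Finset I) x)
        - entropy (fun x => (1-t)*Q b x + t*R b x))
      - ((∑ x, Q b x * H (b:Finset I) x) - entropy (Q b))
      = t * (∑ x, (R b x - Q b x) * H (b:Finset I) x)
        + (t * Real.log t * (∑ x ∈ Finset.univ.filter (fun x => Q b x = 0), R b x)
           + t * (∑ x ∈ Finset.univ.filter (fun x => Q b x = 0), R b x * Real.log (R b x))
           + (∑ x ∈ Finset.univ.filter (fun x => ¬ Q b x = 0),
               (((1-t)*Q b x + t*R b x) * Real.log ((1-t)*Q b x + t*R b x)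
                 - Q b x * Real.log (Q b x)))) := by
    intro b
    unfold entropy
    have e1 : (∑ x, ((1-t)*Q b x + t*R b x) * H (b:Finset I) x)
        - (∑ x, Q b x * H (b:Finset I) x)
        = t * (∑ x, (R b x - Q b x) * H (b:Finset I) x) := by
      rw [← Finset.sum_sub_distrib, Finset.mul_sum]
      refine Finset.sum_congr rfl (fun x _ => by ring)
    have e2 : (∑ x, ((1-t)*Q b x + t*R b x) * Real.log ((1-t)*Q b x + t*R b x))
        - (∑ x, Q b x * Real.log (Q b x))
        = t * Real.log t * (∑ x ∈ Finset.univ.filter (fun x => Q b x = 0), R b x)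
           + t * (∑ x ∈ Finset.univ.filter (fun x => Q b x = 0), R b x * Real.log (R b x))
           + (∑ x ∈ Finset.univ.filter (fun x => ¬ Q b x = 0),
               (((1-t)*Q b x + t*R b x) * Real.log ((1-t)*Q b x + t*R b x)
                 - Q b x * Real.log (Q b x))) := by
      rw [← Finset.sum_sub_distrib]
      rw [← Finset.sum_filter_add_sum_filter_not Finset.univ (fun x => Q b x = 0)
        (fun x => ((1-t)*Q b x + t*R b x) * Real.log ((1-t)*Q b x + t*R b x)
          - Q b x * Real.log (Q b x))]
      have e3 : ∑ x ∈ Finset.univ.filter (fun x => Q b x = 0),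
          (((1-t)*Q b x + t*R b x) * Real.log ((1-t)*Q b x + t*R b x)
            - Q b x * Real.log (Q b x))
          = t * Real.log t * (∑ x ∈ Finset.univ.filter (fun x => Q b x = 0), R b x)
            + t * (∑ x ∈ Finset.univ.filter (fun x => Q b x = 0), R b x * Real.log (R b x)) := by
        rw [Finset.mul_sum, Finset.mul_sum, ← Finset.sum_add_distrib]
        refine Finset.sum_congr rfl (fun x hx => ?_)
        have hx0 : Q b x = 0 := (Finset.mem_filter.mp hx).2
        have hz : (1-t)*Q b x + t*R b x = t * R b x := by rw [hx0]; ring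
        rw [hz, hx0, philin ht0 (hR.nonneg b x)]
        ring
      rw [e3]
    calc ((∑ x, ((1-t)*Q b x + t*R b x) * H (b:Finset I) x)
          - -(∑ x, ((1-t)*Q b x + t*R b x) * Real.log ((1-t)*Q b x + t*R b x)))
        - ((∑ x, Q b x * H (b:Finset I) x) - -(∑ x, Q b x * Real.log (Q b x)))
        = ((∑ x, ((1-t)*Q b x + t*R b x) * H (b:Finset I) x)
            - (∑ x, Q b x * H (b:Finset I) x))
          + ((∑ x, ((1-t)*Q b x + t*R b x) * Real.log ((1-t)*Q b x + t*R b x))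
            - (∑ x, Q b x * Real.log (Q b x))) := by ring
      _ = _ := by rw [e1, e2]
  -- the global bound
  have hmain : BT E A μ H (fun a x => (1-t) * Q a x + t * R a x) - BT E A μ H Q
      ≤ t * Real.log t * K + t * C := by
    unfold BT
    rw [← Finset.sum_sub_distrib]
    have hstep : ∀ b : A,
        (coefC A μ (b:Finset I) : ℝ) *
          ((∑ x, ((1-t)*Q b x + t*R b x) * H (b:Finset I) x)
            - entropy (fun x => (1-t)*Q b x + t*R b x))
        - (coefC A μ (b:Finset I) : ℝ) *
          ((∑ x, Q b x * H (b:Finset I) x) - entropy (Q b))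
        ≤ t * Real.log t * ((coefC A μ (b:Finset I) : ℝ) *
            ∑ x ∈ Finset.univ.filter (fun x => Q b x = 0), R b x)
          + t * (|(coefC A μ (b:Finset I) : ℝ)| *
              ((∑ x, |(R b x - Q b x) * H (b:Finset I) x|)
               + (∑ x ∈ Finset.univ.filter (fun x => Q b x = 0), |R b x * Real.log (R b x)|)
               + (∑ x ∈ Finset.univ.filter (fun x => ¬ Q b x = 0),
                   (|Real.log (Q b x / 2)| + 1)))) := by
      intro b
      rw [← mul_sub, key b]
      set c : ℝ := (coefC A μ (b:Finset I) : ℝ) with hc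
      set D := ∑ x, (R b x - Q b x) * H (b:Finset I) x with hD
      set D' := ∑ x, |(R b x - Q b x) * H (b:Finset I) x| with hD'
      set S := ∑ x ∈ Finset.univ.filter (fun x => Q b x = 0), R b x with hS
      set P := ∑ x ∈ Finset.univ.filter (fun x => Q b x = 0), R b x * Real.log (R b x) with hP
      set P' := ∑ x ∈ Finset.univ.filter (fun x => Q b x = 0), |R b x * Real.log (R b x)| with hP'
      set G := ∑ x ∈ Finset.univ.filter (fun x => ¬ Q b x = 0),
          (((1-t)*Q b x + t*R b x) * Real.log ((1-t)*Q b x + t*R b x)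
            - Q b x * Real.log (Q b x)) with hG
      set G' := ∑ x ∈ Finset.univ.filter (fun x => ¬ Q b x = 0),
          (|Real.log (Q b x / 2)| + 1) with hG'
      have hd : |D| ≤ D' := Finset.abs_sum_le_sum_abs _ _
      have hp : |P| ≤ P' := Finset.abs_sum_le_sum_abs _ _
      have hg : |G| ≤ t * G' := by
        calc |G| ≤ ∑ x ∈ Finset.univ.filter (fun x => ¬ Q b x = 0),
              |((1-t)*Q b x + t*R b x) * Real.log ((1-t)*Q b x + t*R b x)
                - Q b x * Real.log (Q b x)| := Finset.abs_sum_le_sum_abs _ _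
          _ ≤ ∑ x ∈ Finset.univ.filter (fun x => ¬ Q b x = 0),
              (|Real.log (Q b x / 2)| + 1) * t := by
            refine Finset.sum_le_sum (fun x hx => ?_)
            have hx0 : ¬ Q b x = 0 := (Finset.mem_filter.mp hx).2
            have hq0 : 0 < Q b x := lt_of_le_of_ne (hQ.nonneg b x) (Ne.symm hx0)
            exact phi_lip hq0 (hQ.le_one b x) (hR.nonneg b x) (hR.le_one b x)
              (le_of_lt ht0) ht2
          _ = t * G' := by
              rw [hG', Finset.mul_sum]
              exact Finset.sum_congr rfl (fun x _ => by ring)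
      have h1 : c * (t * D) ≤ t * (|c| * D') := by
        have := abs_nonneg c
        have h2 : c * D ≤ |c| * D' := by
          calc c * D ≤ |c * D| := le_abs_self _
            _ = |c| * |D| := abs_mul _ _
            _ ≤ |c| * D' := by nlinarith [abs_nonneg D]
        nlinarith
      have h3 : c * (t * P) ≤ t * (|c| * P') := by
        have := abs_nonneg c
        have h4 : c * P ≤ |c| * P' := by
          calc c * P ≤ |c * P| := le_abs_self _
            _ = |c| * |P| := abs_mul _ _
            _ ≤ |c| * P' := by nlinarith [abs_nonneg P]
        nlinarith
      have h5 : c * G ≤ t * (|c| * G') := by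
        calc c * G ≤ |c * G| := le_abs_self _
          _ = |c| * |G| := abs_mul _ _
          _ ≤ |c| * (t * G') := by nlinarith [abs_nonneg c, abs_nonneg G]
          _ = t * (|c| * G') := by ring
      calc c * (t * D + (t * Real.log t * S + t * P + G))
          = t * Real.log t * (c * S) + (c * (t * D) + c * (t * P) + c * G) := by ring
        _ ≤ t * Real.log t * (c * S) + (t * (|c| * D') + t * (|c| * P') + t * (|c| * G')) := by
            linarith
        _ = t * Real.log t * (c * S) + t * (|c| * (D' + P' + G')) := by ring
    calc ∑ b : A, ((coefC A μ (b:Finset I) : ℝ) *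
          ((∑ x, ((1-t)*Q b x + t*R b x) * H (b:Finset I) x)
            - entropy (fun x => (1-t)*Q b x + t*R b x))
        - (coefC A μ (b:Finset I) : ℝ) *
          ((∑ x, Q b x * H (b:Finset I) x) - entropy (Q b)))
        ≤ ∑ b : A, (t * Real.log t * ((coefC A μ (b:Finset I) : ℝ) *
            ∑ x ∈ Finset.univ.filter (fun x => Q b x = 0), R b x)
          + t * (|(coefC A μ (b:Finset I) : ℝ)| *
              ((∑ x, |(R b x - Q b x) * H (b:Finset I) x|)
               + (∑ x ∈ Finset.univ.filter (fun x => Q b x = 0), |R b x * Real.log (R b x)|)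
               + (∑ x ∈ Finset.univ.filter (fun x => ¬ Q b x = 0),
                   (|Real.log (Q b x / 2)| + 1))))) :=
          Finset.sum_le_sum (fun b _ => hstep b)
      _ = t * Real.log t * K + t * C := by
          rw [Finset.sum_add_distrib, ← Finset.mul_sum, ← Finset.mul_sum, hKdef, hCdef]
          rfl
  have hfin : t * Real.log t * K + t * C ≤ -t := by
    have : Real.log t * K + C ≤ -1 := by linarith
    calc t * Real.log t * K + t * C = t * (Real.log t * K + C) := by ring
      _ ≤ t * (-1) := by nlinarith
      _ = -t := by ring
  have : BT E A μ H (fun a x => (1-t) * Q a x + t * R a x) - BT E A μ H Q ≤ -t := by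
    linarith
  linarith

end Improve

section Cases
variable {I : Type} {E : I → Type} [∀ i, Fintype (E i)] [∀ i, Nonempty (E i)]
  {A : Finset (Finset I)} {μ : Finset I → Finset I → ℤ}

open Classical in
lemma case_fac {A0 : Finset (Finset I)}
    (hsub : ∀ a ∈ A, ∀ b ∈ A, b ⊆ a → b = a ∨ ∃ i : I, b = {i} ∧ i ∈ a ∧ a ∈ A0)
    (hSingA : ∀ i : I, ({i} : Finset I) ∈ A)
    {Q : Fam E A} (hQ : MemL E A Q)
    (hQpos : ∀ (i : I) (x : Ea E ({i} : Finset I)), 0 < Q ⟨{i}, hSingA i⟩ x)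
    {s : Finset I} (hsA : s ∈ A) (hsns : ∀ i : I, s ≠ {i})
    (hc1 : coefC A μ s = 1)
    {y0 : Ea E s} (hy0 : Q ⟨s, hsA⟩ y0 = 0) :
    ∃ R, MemL E A R ∧ 0 < Kval A μ Q R := by
  classical
  set f : (j : I) → E j → ℝ := fun j v => Q ⟨{j}, hSingA j⟩ (sing j v) with hf
  have hfpos : ∀ j v, 0 < f j v := fun j v => hQpos j _
  have hf1 : ∀ j, ∑ v, f j v = 1 := by
    intro j
    have h1 := hQ.sum_one ⟨{j}, hSingA j⟩
    rw [sum_sing j] at h1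
    exact h1
  set R : Fam E A := fun b y => if (b : Finset I) = s then prodm (b:Finset I) f y else Q b y
    with hRdef
  have hRS : ∀ (b : A) (hb : (b:Finset I) = s) (y : Ea E (b:Finset I)),
      R b y = prodm (b:Finset I) f y := fun b hb y => if_pos hb
  have hRO : ∀ (b : A), (b:Finset I) ≠ s → R b = Q b := by
    intro b hb
    funext y
    exact if_neg hb
  have hmem : MemL E A R := by
    constructor
    · intro b
      by_cases hb : (b : Finset I) = s
      · constructor
        · intro x
          rw [hRS b hb]
          exact le_of_lt (prodm_pos hfpos x)
        · rw [Finset.sum_congr rfl (fun x _ => hRS b hb x)]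
          exact sum_prodm_one _ _ (fun j _ => hf1 j)
      · rw [hRO b hb]
        exact hQ.1 b
    · intro a b h x
      rcases hsub (a:Finset I) a.2 (b:Finset I) b.2 h with heq | ⟨i, hbi, hia, haA0⟩
      · obtain ⟨av, hav⟩ := a
        obtain ⟨bv, hbv⟩ := b
        simp only at heq h
        subst heq
        exact (sum_fiber_refl h (R ⟨bv, hav⟩) x).symm
      · obtain ⟨av, hav⟩ := a
        obtain ⟨bv, hbv⟩ := b
        simp only at hbi hia h ⊢
        subst hbi
        have hbs : (({i} : Finset I)) ≠ s := fun hh => hsns i hh.symm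
        have hRb : R ⟨{i}, hbv⟩ = Q ⟨{i}, hbv⟩ := hRO ⟨{i}, hbv⟩ hbs
        rw [hRb]
        by_cases ha : av = s
        · subst ha
          rw [Finset.sum_congr rfl (fun y hy => hRS ⟨av, hav⟩ rfl y)]
          rw [prodm_marg h f (fun j _ _ => hf1 j) x]
          rw [prodm_singleton i f x]
          show Q ⟨{i}, hbv⟩ x = f i (x (imem i))
          have : f i (x (imem i)) = Q ⟨{i}, hSingA i⟩ (sing i (x (imem i))) := rfl
          rw [this, sing_eval]
        · have hRa : R ⟨av, hav⟩ = Q ⟨av, hav⟩ := hRO ⟨av, hav⟩ ha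
          rw [hRa]
          exact hQ.2 ⟨av, hav⟩ ⟨{i}, hbv⟩ h x
  refine ⟨R, hmem, ?_⟩
  have hzero : ∀ b : A, b ≠ ⟨s, hsA⟩ →
      (coefC A μ (b:Finset I) : ℝ) *
        ∑ x ∈ Finset.univ.filter (fun x => Q b x = 0), R b x = 0 := by
    intro b hb
    have hbs : (b:Finset I) ≠ s := fun hh => hb (Subtype.ext hh)
    rw [hRO b hbs]
    have hz : ∑ x ∈ Finset.univ.filter (fun x => Q b x = 0), Q b x = 0 :=
      Finset.sum_eq_zero (fun x hx => (Finset.mem_filter.mp hx).2)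
    rw [hz, mul_zero]
  have hcast : (coefC A μ s : ℝ) = 1 := by rw [hc1]; norm_num
  have hsumpos : 0 < ∑ x ∈ Finset.univ.filter (fun x => Q ⟨s,hsA⟩ x = 0), R ⟨s,hsA⟩ x := by
    have hy0mem : y0 ∈ Finset.univ.filter (fun x => Q ⟨s,hsA⟩ x = 0) :=
      Finset.mem_filter.mpr ⟨Finset.mem_univ _, hy0⟩
    have hpos' : 0 < R ⟨s,hsA⟩ y0 := by
      rw [hRS ⟨s,hsA⟩ rfl]
      exact prodm_pos hfpos y0
    refine lt_of_lt_of_le hpos' (Finset.single_le_sum (fun x _ => ?_) hy0mem)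
    rw [hRS ⟨s,hsA⟩ rfl]
    exact le_of_lt (prodm_pos hfpos x)
  unfold Kval
  refine Finset.sum_pos' (fun b _ => ?_) ⟨⟨s, hsA⟩, Finset.mem_univ _, ?_⟩
  · by_cases hb : b = ⟨s, hsA⟩
    · subst hb
      show 0 ≤ (coefC A μ s : ℝ) * _
      rw [hcast, one_mul]
      exact le_of_lt hsumpos
    · rw [hzero b hb]
  · show 0 < (coefC A μ s : ℝ) * _
    rw [hcast, one_mul]
    exact hsumpos


open Classical in
lemma case_sing {A0 : Finset (Finset I)}
    (hsub : ∀ a ∈ A, ∀ b ∈ A, b ⊆ a → b = a ∨ ∃ i : I, b = {i} ∧ i ∈ a ∧ a ∈ A0)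
    (hSingA : ∀ i : I, ({i} : Finset I) ∈ A)
    {Q : Fam E A} (hQ : MemL E A Q)
    {i : I} {x0 : Ea E ({i} : Finset I)} (h0 : Q ⟨{i}, hSingA i⟩ x0 = 0)
    (B : Finset (Finset I)) (hB : ∀ b : Finset I, b ∈ B ↔ b ∈ A ∧ i ∈ b)
    (hcsum : (∑ b ∈ B, coefC A μ b) = 1) :
    ∃ R, MemL E A R ∧ 0 < Kval A μ Q R := by
  classical
  set ε : ℝ := 1/2 with hε
  set xs : E i := x0 (imem i) with hxs
  set f : (j : I) → E j → ℝ := fun j v =>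
    if h : j = i then (if h ▸ v = xs then 1 else 0) else Q ⟨{j}, hSingA j⟩ (sing j v) with hf
  have hfi : ∀ v : E i, f i v = if v = xs then 1 else 0 := by
    intro v
    simp [hf]
  have hfj : ∀ j, j ≠ i → ∀ v, f j v = Q ⟨{j}, hSingA j⟩ (sing j v) := by
    intro j hj v
    simp only [hf]
    rw [dif_neg hj]
  have hf0 : ∀ j v, 0 ≤ f j v := by
    intro j v
    by_cases hj : j = i
    · subst hj
      rw [hfi]
      split <;> norm_num
    · rw [hfj j hj]
      exact hQ.nonneg _ _
  have hf1 : ∀ j, ∑ v, f j v = 1 := by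
    intro j
    by_cases hj : j = i
    · subst hj
      rw [Finset.sum_congr rfl (fun v _ => hfi v)]
      simp
    · rw [Finset.sum_congr rfl (fun v _ => hfj j hj v)]
      have h1 := hQ.sum_one ⟨{j}, hSingA j⟩
      rw [sum_sing j] at h1
      exact h1
  have hT0 : ∀ (c : Finset I) (hc : i ∈ c) (y : Ea E c), prodm c f y ≠ 0 → y ⟨i, hc⟩ = xs := by
    intro c hc y hy
    by_contra hne
    apply hy
    unfold prodm
    refine Finset.prod_eq_zero (Finset.mem_univ (⟨i, hc⟩ : (c : Finset I))) ?_
    show f i (y ⟨i, hc⟩) = 0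
    rw [hfi, if_neg hne]
  have hcyl : ∀ (b : A) (hib : i ∈ (b:Finset I)) (y : Ea E (b:Finset I)),
      y ⟨i, hib⟩ = xs → Q b y = 0 := by
    intro b hib y hy
    have hsubb : ({i} : Finset I) ⊆ (b:Finset I) := Finset.singleton_subset_iff.mpr hib
    have hm := hQ.2 b ⟨{i}, hSingA i⟩ hsubb x0
    rw [h0] at hm
    have hmem : y ∈ Finset.univ.filter
        (fun y : Ea E (b:Finset I) => proj E hsubb y = x0) := by
      refine Finset.mem_filter.mpr ⟨Finset.mem_univ _, ?_⟩
      funext j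
      rw [eq_imem j]
      show y ⟨i, _⟩ = x0 (imem i)
      exact hy
    exact (Finset.sum_eq_zero_iff_of_nonneg (fun z _ => hQ.nonneg b z)).mp hm.symm y hmem
  set R : Fam E A := fun b y =>
    if i ∈ (b:Finset I) then (1-ε) * Q b y + ε * prodm (b:Finset I) f y else Q b y with hRdef
  have hRin : ∀ (b : A), i ∈ (b:Finset I) → ∀ y,
      R b y = (1-ε) * Q b y + ε * prodm (b:Finset I) f y := fun b hib y => if_pos hib
  have hRout : ∀ (b : A), i ∉ (b:Finset I) → R b = Q b :=
    fun b hb => funext (fun y => if_neg hb)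
  have hmem : MemL E A R := by
    constructor
    · intro b
      by_cases hib : i ∈ (b:Finset I)
      · constructor
        · intro x
          rw [hRin b hib x]
          have h1 := hQ.nonneg b x
          have h2 := prodm_nonneg hf0 x
          rw [hε] at *
          nlinarith
        · rw [Finset.sum_congr rfl (fun x _ => hRin b hib x)]
          rw [Finset.sum_add_distrib, ← Finset.mul_sum, ← Finset.mul_sum, hQ.sum_one b,
            sum_prodm_one _ _ (fun j _ => hf1 j)]
          ring
      · rw [hRout b hib]
        exact hQ.1 b
    · intro a b h x
      rcases hsub (a:Finset I) a.2 (b:Finset I) b.2 h with heq | ⟨j, hbj, hja, haA0⟩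
      · obtain ⟨av, hav⟩ := a
        obtain ⟨bv, hbv⟩ := b
        simp only at heq h
        subst heq
        exact (sum_fiber_refl h (R ⟨bv, hav⟩) x).symm
      · obtain ⟨av, hav⟩ := a
        obtain ⟨bv, hbv⟩ := b
        simp only at hbj hja h ⊢
        subst hbj
        by_cases hia : i ∈ av
        · rw [Finset.sum_congr rfl (fun y _ => hRin ⟨av, hav⟩ hia y)]
          rw [Finset.sum_add_distrib, ← Finset.mul_sum, ← Finset.mul_sum,
            ← hQ.2 ⟨av, hav⟩ ⟨{j}, hbv⟩ h x,
            prodm_marg h f (fun k _ _ => hf1 k) x, prodm_singleton j f x]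
          by_cases hji : j = i
          · subst hji
            rw [hRin ⟨{j}, hbv⟩ (Finset.mem_singleton_self j) x]
            rw [prodm_singleton j f x]
          · rw [hRout ⟨{j}, hbv⟩ (fun hmem => hji (Finset.mem_singleton.mp hmem).symm)]
            erw [hfj j hji]
            have hsx : Q ⟨{j}, hSingA j⟩ (sing j (x (imem j))) = Q ⟨{j}, hbv⟩ x := by
              rw [sing_eval]
            rw [hsx]
            ring
        · have hji : j ≠ i := fun hh => hia (hh ▸ hja)
          rw [hRout ⟨av, hav⟩ hia,
            hRout ⟨{j}, hbv⟩ (fun hmem => hji (Finset.mem_singleton.mp hmem).symm)]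
          exact hQ.2 ⟨av, hav⟩ ⟨{j}, hbv⟩ h x
  refine ⟨R, hmem, ?_⟩
  have hinner : ∀ b : A, (∑ x ∈ Finset.univ.filter (fun x => Q b x = 0), R b x)
      = if i ∈ (b:Finset I) then ε else 0 := by
    intro b
    by_cases hib : i ∈ (b:Finset I)
    · rw [if_pos hib]
      rw [Finset.sum_congr rfl (fun x _ => hRin b hib x)]
      rw [Finset.sum_add_distrib, ← Finset.mul_sum, ← Finset.mul_sum]
      have hq0 : ∑ x ∈ Finset.univ.filter (fun x => Q b x = 0), Q b x = 0 :=
        Finset.sum_eq_zero (fun x hx => (Finset.mem_filter.mp hx).2)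
      have hp1 : ∑ x ∈ Finset.univ.filter (fun x => Q b x = 0),
          prodm (b:Finset I) f x = 1 := by
        have htot : ∑ x, prodm (b:Finset I) f x = 1 := sum_prodm_one _ _ (fun j _ => hf1 j)
        rw [← Finset.sum_filter_add_sum_filter_not Finset.univ (fun x => Q b x = 0)
          (prodm (b:Finset I) f)] at htot
        have hz : ∑ x ∈ Finset.univ.filter (fun x => ¬ Q b x = 0),
            prodm (b:Finset I) f x = 0 := by
          refine Finset.sum_eq_zero (fun x hx => ?_)
          by_contra hne
          exact (Finset.mem_filter.mp hx).2 (hcyl b hib x (hT0 (b:Finset I) hib x hne))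
        linarith
      rw [hq0, hp1, mul_zero, mul_one, zero_add]
    · rw [if_neg hib, hRout b hib]
      exact Finset.sum_eq_zero (fun x hx => (Finset.mem_filter.mp hx).2)
  have hK1 : Kval A μ Q R
      = ∑ b : A, (coefC A μ (b:Finset I) : ℝ) * (if i ∈ (b:Finset I) then ε else 0) := by
    unfold Kval
    exact Finset.sum_congr rfl (fun b _ => by rw [hinner b])
  rw [hK1]
  have hK2 : ∑ b : A, (coefC A μ (b:Finset I) : ℝ) * (if i ∈ (b:Finset I) then ε else 0)
      = ∑ b ∈ A, (coefC A μ b : ℝ) * (if i ∈ b then ε else 0) :=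
    Finset.sum_coe_sort A (fun b => (coefC A μ b : ℝ) * (if i ∈ b then ε else 0))
  rw [hK2]
  have hK3 : ∑ b ∈ A, (coefC A μ b : ℝ) * (if i ∈ b then ε else 0)
      = ∑ b ∈ A.filter (fun b => i ∈ b), (coefC A μ b : ℝ) * ε := by
    rw [Finset.sum_filter]
    refine Finset.sum_congr rfl (fun b _ => ?_)
    split <;> simp
  rw [hK3]
  have hBA : A.filter (fun b => i ∈ b) = B := by
    ext b
    rw [Finset.mem_filter, hB b]
  rw [hBA, ← Finset.sum_mul]
  have hcast : (∑ b ∈ B, (coefC A μ b : ℝ)) = ((∑ b ∈ B, coefC A μ b : ℤ) : ℝ) := by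
    push_cast
    rfl
  rw [hcast, hcsum]
  norm_num [hε]

end Cases

end Facts

section Main
open Classical in
theorem stmt12' {I : Type} [Fintype I] [DecidableEq I] [Nonempty I]
    (E : I → Type) [∀ i, Fintype (E i)] [∀ i, DecidableEq (E i)] [∀ i, Nonempty (E i)]
    (A0 : Finset (Finset I)) (hA0ne : A0.Nonempty)
    (hcard : ∀ a ∈ A0, 2 ≤ a.card)
    (hantichain : ∀ a ∈ A0, ∀ b ∈ A0, a ⊆ b → a = b)
    (A : Finset (Finset I))
    (hA : A = (Finset.univ.image fun i : I => ({i} : Finset I)) ∪ A0)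
    (μ : Finset I → Finset I → ℤ) (hμ : IsMobius A μ)
    (H : (c : Finset I) → Ea E c → ℝ) :
    ∃ Q : Fam E A, MemLInt E A Q ∧
      ∀ u : Fam E A, MemT E A u →
        deriv (fun t : ℝ => BT E A μ H (fun a x => Q a x + t * u a x)) 0 = 0 := by
  classical
  obtain ⟨Qm, hQm, hmin⟩ := exists_minimizer_s12 (E := E) (A := A) (μ := μ) (H := H)
  by_cases hint : ∀ (a : A) (x : Ea E (a : Finset I)), 0 < Qm a x
  · exact ⟨Qm, ⟨hQm, hint⟩, fun u hu => critical_of_min hQm hmin hint u hu⟩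
  · exfalso
    push_neg at hint
    obtain ⟨a, x, hax⟩ := hint
    have hax0 : Qm a x = 0 := le_antisymm hax (hQm.nonneg a x)
    have hSingA : ∀ i : I, ({i} : Finset I) ∈ A := sing_mem_A hA
    have hsub : ∀ a' ∈ A, ∀ b ∈ A, b ⊆ a' →
        b = a' ∨ ∃ i : I, b = {i} ∧ i ∈ a' ∧ a' ∈ A0 :=
      fun a' ha' b hb hba => subset_cases hA hcard hantichain ha' hb hba
    by_cases hz : ∃ (i : I) (x0 : Ea E ({i} : Finset I)), Qm ⟨{i}, hSingA i⟩ x0 = 0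
    · obtain ⟨i, x0, h0⟩ := hz
      obtain ⟨R, hR, hK⟩ := case_sing hsub hSingA hQm h0 (A.filter (fun b => i ∈ b))
        (fun b => Finset.mem_filter) (sum_coefC_over hA hcard hantichain hμ i)
      obtain ⟨Q', hQ', hlt⟩ := improve (H := H) hQm hR hK
      exact absurd (hmin Q' hQ') (not_le.mpr hlt)
    · push_neg at hz
      obtain ⟨av, hav⟩ := a
      rcases mem_A_cases hA hav with ⟨i, rfl⟩ | ha0
      · exact hz i x hax0
      · have hQpos : ∀ (i : I) (x0 : Ea E ({i} : Finset I)), 0 < Qm ⟨{i}, hSingA i⟩ x0 :=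
          fun i x0 => lt_of_le_of_ne (hQm.nonneg _ _) (Ne.symm (hz i x0))
        obtain ⟨R, hR, hK⟩ := case_fac hsub hSingA hQm hQpos hav
          (fun i => A0_not_sing hcard ha0 i)
          (coefC_factor hA hcard hantichain hμ ha0) hax0
        obtain ⟨Q', hQ', hlt⟩ := improve (H := H) hQm hR hK
        exact absurd (hmin Q' hQ') (not_le.mpr hlt)
end Main

open Classical in
-- Let `I` be a finite nonempty set, `E i` nonempty finite sets, `A₀` a nonempty antichain of
-- subsets of `I` each of cardinality at least 2, and `A = {{i} : i ∈ I} ∪ A₀`, ordered by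
-- inclusion.  For any family of Hamiltonians `H_c : E_c → ℝ` (`c ∈ A`), the generalized Bethe
-- free energy `BT_{A,H}` has at least one critical point in the interior `L(A)°`.
theorem stmt12 {I : Type} [Fintype I] [DecidableEq I] [Nonempty I]
    (E : I → Type) [∀ i, Fintype (E i)] [∀ i, DecidableEq (E i)] [∀ i, Nonempty (E i)]
    (A0 : Finset (Finset I)) (hA0ne : A0.Nonempty)
    (hcard : ∀ a ∈ A0, 2 ≤ a.card)
    (hantichain : ∀ a ∈ A0, ∀ b ∈ A0, a ⊆ b → a = b)
    (A : Finset (Finset I))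
    (hA : A = (Finset.univ.image fun i : I => ({i} : Finset I)) ∪ A0)
    (μ : Finset I → Finset I → ℤ) (hμ : IsMobius A μ)
    (H : (c : Finset I) → Ea E c → ℝ) :
    ∃ Q : Fam E A, IsCritical E A (BT E A μ H) Q := by
  have h := stmt12' E A0 hA0ne hcard hantichain A hA μ hμ H
  obtain ⟨Q, h1, h2⟩ := h
  exact ⟨Q, h1, h2⟩
end

section
/- Let A ⊆ P(I) be a finite poset under inclusion in which every chain has length at most 1, and let a ∈ A be a linear point with witness a↑ (so a ⊊ a↑). Set B = A∖{a}. Define φ : L(A) → L(B) by φ(Q)_c = Q_c for all c ∈ B, and define s : L(B) → L(A) by s(Q)_c = Q_c for c ∈ B and s(Q)_a(x) = Σ_{y ∈ E_{a↑}, y_a = x} Q_{a↑}(y) for x ∈ E_a. Then φ and s are well defined (they land in the respective local polytopes), s ∘ φ = id on L(A), and φ ∘ s = id on L(B); in particular φ is a bijection from L(A) onto L(B). -/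
-- The restriction map `φ : L(A) → L(A∖{a})`, `φ(Q)_c = Q_c`.
def phiMap {I : Type} [DecidableEq I] (E : I → Type) (A : Finset (Finset I)) (a : Finset I)
    (Q : Fam E A) : Fam E (A.erase a) :=
  fun b => Q ⟨b, Finset.mem_of_mem_erase b.2⟩

-- The section `s : L(A∖{a}) → L(A)` for a linear point `a` with witness `aUp`:
-- `s(Q)_c = Q_c` for `c ≠ a`, and `s(Q)_a(x) = ∑_{y ∈ E_{aUp}, y_a = x} Q_{aUp}(y)`.
open Classical in
noncomputable def secMap {I : Type} [DecidableEq I] (E : I → Type) [∀ i, Fintype (E i)]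
    (A : Finset (Finset I)) (a aUp : Finset I) (hsub : a ⊆ aUp) (hUp : aUp ∈ A.erase a)
    (Q : Fam E (A.erase a)) : Fam E A :=
  fun c x =>
    if h : (c : Finset I) = a then
      ∑ y ∈ Finset.univ.filter (fun y : Ea E aUp =>
          ∀ i : {w // w ∈ (c : Finset I)}, y ⟨i, hsub (h ▸ i.2)⟩ = x i),
        Q ⟨aUp, hUp⟩ y
    else Q ⟨c, Finset.mem_erase.2 ⟨h, c.2⟩⟩ x

/-!
Everything rests on the transitivity of marginalization. Each constraint of `L(A)` involving
the new entry `s(Q)_a` is checked by writing both sides as marginals of one `Q_d`, `d ∈ B`: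
below `a` take `d = a↑`, and above `a` take `d = c`, which contains `a↑` by linearity of `a`.
Conversely, for `Q ∈ L(A)` the entry `Q_a` already is the marginal of `Q_{a↑}`, so `s ∘ φ = id`.
-/

section Marginal

open Classical

variable {I : Type} {E : I → Type}

theorem proj_proj {a b c : Finset I} (hcb : c ⊆ b) (hba : b ⊆ a) (y : Ea E a) :
    proj E hcb (proj E hba y) = proj E (hcb.trans hba) y :=
  rfl

variable [∀ i, Fintype (E i)]

noncomputable def marginal {a b : Finset I} (h : b ⊆ a) (q : Ea E a → ℝ) : Ea E b → ℝ :=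
  fun x => ∑ y ∈ Finset.univ.filter (fun y => proj E h y = x), q y

theorem memL_iff {A : Finset (Finset I)} {Q : Fam E A} :
    MemL E A Q ↔ (∀ a : A, (∀ x, 0 ≤ Q a x) ∧ ∑ x, Q a x = 1) ∧
      ∀ (a b : A) (h : (b : Finset I) ⊆ a), Q b = marginal h (Q a) :=
  and_congr Iff.rfl (forall₃_congr fun _ _ _ => funext_iff.symm)

theorem marginal_nonneg {a b : Finset I} (h : b ⊆ a) {q : Ea E a → ℝ} (hq : ∀ y, 0 ≤ q y)
    (x : Ea E b) : 0 ≤ marginal h q x :=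
  Finset.sum_nonneg fun y _ => hq y

theorem sum_marginal {a b : Finset I} (h : b ⊆ a) (q : Ea E a → ℝ) :
    ∑ x, marginal h q x = ∑ y, q y :=
  Finset.sum_fiberwise Finset.univ (proj E h) q

theorem marginal_marginal {a b c : Finset I} (hcb : c ⊆ b) (hba : b ⊆ a) (q : Ea E a → ℝ) :
    marginal hcb (marginal hba q) = marginal (hcb.trans hba) q := by
  funext x
  refine (Finset.sum_fiberwise_eq_sum_filter _ _ _ q).trans (Finset.sum_congr ?_ fun _ _ => rfl)
  ext y
  simp [proj_proj]

end Marginal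

section Restriction

variable {I : Type} [DecidableEq I] {E : I → Type} [∀ i, Fintype (E i)]
  {A : Finset (Finset I)} {a aUp : Finset I}

theorem memL_phiMap {Q : Fam E A} (hQ : MemL E A Q) : MemL E (A.erase a) (phiMap E A a Q) :=
  ⟨fun c => hQ.1 ⟨c, Finset.mem_of_mem_erase c.2⟩,
    fun c b h => hQ.2 ⟨c, Finset.mem_of_mem_erase c.2⟩ ⟨b, Finset.mem_of_mem_erase b.2⟩ h⟩

variable (hsub : a ⊆ aUp) (hUp : aUp ∈ A.erase a)

theorem secMap_self (Q : Fam E (A.erase a)) (haA : a ∈ A) :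
    secMap E A a aUp hsub hUp Q ⟨a, haA⟩ = marginal hsub (Q ⟨aUp, hUp⟩) := by
  funext x
  simp only [secMap]
  refine Finset.sum_congr ?_ fun _ _ => rfl
  ext y
  simp [proj, funext_iff]

theorem secMap_of_ne (Q : Fam E (A.erase a)) (c : A) (hc : (c : Finset I) ≠ a) :
    secMap E A a aUp hsub hUp Q c = Q ⟨c, Finset.mem_erase.2 ⟨hc, c.2⟩⟩ := by
  funext x
  simp only [secMap, dif_neg hc]

theorem phiMap_secMap (Q : Fam E (A.erase a)) :
    phiMap E A a (secMap E A a aUp hsub hUp Q) = Q := by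
  funext c
  exact secMap_of_ne hsub hUp Q _ (Finset.ne_of_mem_erase c.2)

theorem secMap_phiMap {Q : Fam E A} (hQ : MemL E A Q) :
    secMap E A a aUp hsub hUp (phiMap E A a Q) = Q := by
  funext c
  by_cases hc : (c : Finset I) = a
  · obtain ⟨c, hcA⟩ := c
    subst hc
    rw [secMap_self]
    exact ((memL_iff.1 hQ).2 ⟨aUp, Finset.mem_of_mem_erase hUp⟩ ⟨c, hcA⟩ hsub).symm
  · exact secMap_of_ne hsub hUp _ c hc

theorem secMap_eq_marginal {Q : Fam E (A.erase a)} (hQ : MemL E (A.erase a) Q) (c : A)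
    {d : Finset I} (hd : d ∈ A.erase a) (hcd : (c : Finset I) ⊆ d)
    (hUpd : (c : Finset I) = a → aUp ⊆ d) :
    secMap E A a aUp hsub hUp Q c = marginal hcd (Q ⟨d, hd⟩) := by
  by_cases hc : (c : Finset I) = a
  · obtain ⟨c, hcA⟩ := c
    subst hc
    rw [secMap_self, (memL_iff.1 hQ).2 ⟨d, hd⟩ ⟨aUp, hUp⟩ (hUpd rfl), marginal_marginal]
  · rw [secMap_of_ne hsub hUp Q c hc]
    exact (memL_iff.1 hQ).2 ⟨d, hd⟩ _ hcd

theorem memL_secMap (hlin : ∀ b ∈ A, a ⊂ b → aUp ⊆ b) {Q : Fam E (A.erase a)}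
    (hQ : MemL E (A.erase a) Q) : MemL E A (secMap E A a aUp hsub hUp Q) := by
  refine memL_iff.2 ⟨fun c => ?_, fun c b hbc => ?_⟩
  · by_cases hc : (c : Finset I) = a
    · obtain ⟨c, hcA⟩ := c
      subst hc
      rw [secMap_self, sum_marginal]
      obtain ⟨hQ_nonneg, hQ_sum⟩ := (memL_iff.1 hQ).1 ⟨aUp, hUp⟩
      exact ⟨marginal_nonneg hsub hQ_nonneg, hQ_sum⟩
    · rw [secMap_of_ne hsub hUp Q c hc]
      exact (memL_iff.1 hQ).1 ⟨c, Finset.mem_erase.2 ⟨hc, c.2⟩⟩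
  · obtain ⟨d, hd, hcd, hUpd⟩ : ∃ d ∈ A.erase a, (c : Finset I) ⊆ d ∧
        ((c : Finset I) = a ∨ (b : Finset I) = a → aUp ⊆ d) := by
      by_cases hc : (c : Finset I) = a
      · exact ⟨aUp, hUp, hc ▸ hsub, fun _ => subset_rfl⟩
      · refine ⟨c, Finset.mem_erase.2 ⟨hc, c.2⟩, subset_rfl, fun hab => hlin c c.2 ?_⟩
        have hb : (b : Finset I) = a := hab.resolve_left hc
        rw [← hb]
        exact Finset.ssubset_iff_subset_ne.2 ⟨hbc, fun h => hc (h ▸ hb)⟩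
    rw [secMap_eq_marginal hsub hUp hQ b hd (hbc.trans hcd) (fun hb => hUpd (.inr hb)),
      secMap_eq_marginal hsub hUp hQ c hd hcd (fun hc => hUpd (.inl hc)), marginal_marginal]

end Restriction

open Classical in
theorem stmt13_general {I : Type} [DecidableEq I]
    (E : I → Type) [∀ i, Fintype (E i)]
    (A : Finset (Finset I))
    (a aUp : Finset I) (hlt : a ⊂ aUp)
    (hlin : ∀ b ∈ A, a ⊂ b → aUp ⊆ b)
    (hUpB : aUp ∈ A.erase a) :
    (∀ Q : Fam E A, MemL E A Q → MemL E (A.erase a) (phiMap E A a Q)) ∧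
    (∀ Q : Fam E (A.erase a), MemL E (A.erase a) Q →
      MemL E A (secMap E A a aUp hlt.subset hUpB Q)) ∧
    (∀ Q : Fam E A, MemL E A Q → secMap E A a aUp hlt.subset hUpB (phiMap E A a Q) = Q) ∧
    (∀ Q : Fam E (A.erase a), MemL E (A.erase a) Q →
      phiMap E A a (secMap E A a aUp hlt.subset hUpB Q) = Q) :=
  ⟨fun _ hQ => memL_phiMap hQ,
    fun _ hQ => memL_secMap hlt.subset hUpB hlin hQ,
    fun _ hQ => secMap_phiMap hlt.subset hUpB hQ,
    fun Q _ => phiMap_secMap hlt.subset hUpB Q⟩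

open Classical in
theorem stmt13 {I : Type} [Fintype I] [DecidableEq I]
    (E : I → Type) [∀ i, Fintype (E i)] [∀ i, DecidableEq (E i)] [∀ i, Nonempty (E i)]
    (A : Finset (Finset I)) (hchain : ChainsShort A)
    (a aUp : Finset I) (haA : a ∈ A) (hUpA : aUp ∈ A) (hlt : a ⊂ aUp)
    (hlin : ∀ b ∈ A, a ⊂ b → aUp ⊆ b)
    (hUpB : aUp ∈ A.erase a) :
    (∀ Q : Fam E A, MemL E A Q → MemL E (A.erase a) (phiMap E A a Q)) ∧
    (∀ Q : Fam E (A.erase a), MemL E (A.erase a) Q →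
      MemL E A (secMap E A a aUp hlt.subset hUpB Q)) ∧
    (∀ Q : Fam E A, MemL E A Q → secMap E A a aUp hlt.subset hUpB (phiMap E A a Q) = Q) ∧
    (∀ Q : Fam E (A.erase a), MemL E (A.erase a) Q →
      phiMap E A a (secMap E A a aUp hlt.subset hUpB Q) = Q) :=
  stmt13_general E A a aUp hlt hlin hUpB
end

section
/- Let A ⊆ P(I) be a finite poset under inclusion in which every chain has length at most 1, let H_c : E_c → ℝ (c ∈ A) be Hamiltonians, let a ∈ A be a linear point, and set B = A∖{a} with the restricted Hamiltonians i*H = (H_c)_{c∈B}. Let φ : L(A) → L(B) be the restriction map φ(Q) = (Q_c)_{c∈B}. Then for every Q ∈ L(A), BT_{A,H}(Q) = BT_{B,i*H}(φ(Q)). -/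
/- A poset whose chains have length at most 1 has Möbius function `μ(x, x) = 1` and
`μ(b, c) = -1` for `c < b`, so `c_A(x) = 1 - #{b ∈ A | x < b}`.  A linear point `a` is
minimal in such a poset and has the single strict upper bound `a↑`, hence `c_A(a) = 0`;
and removing the minimal element `a` changes no set of strict upper bounds of the other
elements, so `c_A = c_B` on `B`.  The term of `a` in the Bethe free energy thus vanishes
and all other terms agree. -/

namespace IsMobius

variable {I : Type} {A : Finset (Finset I)} {μ : Finset I → Finset I → ℤ}

lemma apply_self (hμ : IsMobius A μ) {x : Finset I} (hx : x ∈ A) : μ x x = 1 := by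
  classical
  have h := hμ.2 x hx x hx subset_rfl
  have hx' : A.filter (fun b => x ⊆ b ∧ b ⊆ x) = {x} := by
    ext y
    simp only [Finset.mem_filter, Finset.mem_singleton]
    constructor
    · rintro ⟨-, hxy, hyx⟩
      exact subset_antisymm hyx hxy
    · rintro rfl
      exact ⟨hx, subset_rfl, subset_rfl⟩
  simpa [hx'] using h

lemma apply_of_ssubset (hchain : ChainsShort A) (hμ : IsMobius A μ) {b c : Finset I}
    (hb : b ∈ A) (hc : c ∈ A) (hcb : c ⊂ b) : μ b c = -1 := by
  classical
  have h := hμ.2 b hb c hc hcb.subset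
  have hcb' : A.filter (fun y => c ⊆ y ∧ y ⊆ b) = {c, b} := by
    ext y
    simp only [Finset.mem_filter, Finset.mem_insert, Finset.mem_singleton]
    constructor
    · rintro ⟨hy, hcy, hyb⟩
      by_contra! hne
      exact hchain c hc y hy b hb (hcy.ssubset_of_ne hne.1.symm) (hyb.ssubset_of_ne hne.2)
    · rintro (rfl | rfl)
      · exact ⟨hc, subset_rfl, hcb.subset⟩
      · exact ⟨hb, hcb.subset, subset_rfl⟩
  rw [hcb', Finset.sum_pair hcb.ne, if_neg hcb.ne', hμ.apply_self hc] at h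
  omega

end IsMobius

lemma ChainsShort.mono {I : Type} {A B : Finset (Finset I)} (hBA : B ⊆ A)
    (hA : ChainsShort A) : ChainsShort B :=
  fun x hx y hy z hz => hA x (hBA hx) y (hBA hy) z (hBA hz)

lemma coefC_eq_one_sub_card {I : Type} [DecidableEq I] {A : Finset (Finset I)}
    {μ : Finset I → Finset I → ℤ} (hchain : ChainsShort A) (hμ : IsMobius A μ)
    {x : Finset I} (hx : x ∈ A) :
    coefC A μ x = 1 - (A.filter (x ⊂ ·)).card := by
  have hsplit : A.filter (x ⊆ ·) = insert x (A.filter (x ⊂ ·)) := by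
    ext b
    simp only [Finset.mem_filter, Finset.mem_insert]
    constructor
    · rintro ⟨hb, hxb⟩
      rcases eq_or_ne x b with rfl | hne
      · exact Or.inl rfl
      · exact Or.inr ⟨hb, hxb.ssubset_of_ne hne⟩
    · rintro (rfl | ⟨hb, hxb⟩)
      · exact ⟨hx, subset_rfl⟩
      · exact ⟨hb, hxb.subset⟩
  have hsucc : ∀ b ∈ A.filter (x ⊂ ·), μ b x = -1 := fun b hb =>
    hμ.apply_of_ssubset hchain (Finset.mem_filter.1 hb).1 hx (Finset.mem_filter.1 hb).2
  have hcoef : coefC A μ x = ∑ b ∈ A.filter (x ⊆ ·), μ b x := by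
    unfold coefC
    congr
  rw [hcoef, hsplit, Finset.sum_insert (by simp), hμ.apply_self hx, Finset.sum_congr rfl hsucc,
    Finset.sum_const, smul_neg, nsmul_one, sub_eq_add_neg]

lemma coefC_erase_of_minimal {I : Type} [DecidableEq I] {A : Finset (Finset I)} {a : Finset I}
    {μA μB : Finset I → Finset I → ℤ} (hchain : ChainsShort A) (hμA : IsMobius A μA)
    (hμB : IsMobius (A.erase a) μB) (hmin : ∀ c ∈ A, ¬ c ⊂ a) {c : Finset I}
    (hc : c ∈ A.erase a) : coefC A μA c = coefC (A.erase a) μB c := by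
  have ha : a ∉ A.filter (c ⊂ ·) := fun h =>
    hmin c (Finset.mem_of_mem_erase hc) (Finset.mem_filter.1 h).2
  rw [coefC_eq_one_sub_card hchain hμA (Finset.mem_of_mem_erase hc),
    coefC_eq_one_sub_card (hchain.mono (Finset.erase_subset a A)) hμB hc,
    Finset.filter_erase, Finset.erase_eq_of_notMem ha]

lemma filter_ssubset_eq_singleton_of_linear {I : Type} [DecidableEq I] {A : Finset (Finset I)}
    (hchain : ChainsShort A) {a aUp : Finset I} (haA : a ∈ A) (hUpA : aUp ∈ A) (hlt : a ⊂ aUp)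
    (hlin : ∀ b ∈ A, a ⊂ b → aUp ⊆ b) : A.filter (a ⊂ ·) = {aUp} := by
  ext b
  simp only [Finset.mem_filter, Finset.mem_singleton]
  constructor
  · rintro ⟨hb, hab⟩
    by_contra hne
    exact hchain a haA aUp hUpA b hb hlt ((hlin b hb hab).ssubset_of_ne (Ne.symm hne))
  · rintro rfl
    exact ⟨hUpA, hlt⟩

lemma BT_eq_BT_erase {I : Type} [DecidableEq I] (E : I → Type) [∀ i, Fintype (E i)]
    {A : Finset (Finset I)} {a : Finset I} {μA μB : Finset I → Finset I → ℤ}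
    (ha : coefC A μA a = 0) (hcoef : ∀ c ∈ A.erase a, coefC A μA c = coefC (A.erase a) μB c)
    (H : (c : Finset I) → Ea E c → ℝ) (Q : Fam E A) :
    BT E A μA H Q = BT E (A.erase a) μB H (phiMap E A a Q) := by
  symm
  refine Fintype.sum_of_injective (fun c : A.erase a => (⟨c.1, Finset.mem_of_mem_erase c.2⟩ : A))
    (fun c d h => Subtype.ext (Subtype.mk.inj h)) _ _ ?_ fun c => ?_
  · rintro ⟨c, hc⟩ hrange
    obtain rfl : c = a := by
      by_contra hne
      exact hrange ⟨⟨c, Finset.mem_erase.2 ⟨hne, hc⟩⟩, rfl⟩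
    simp [ha]
  · rw [hcoef c c.2]
    rfl

open Classical in
theorem stmt14_general {I : Type} [DecidableEq I]
    (E : I → Type) [∀ i, Fintype (E i)]
    (A : Finset (Finset I)) (hchain : ChainsShort A)
    (a aUp : Finset I) (haA : a ∈ A) (hUpA : aUp ∈ A) (hlt : a ⊂ aUp)
    (hlin : ∀ b ∈ A, a ⊂ b → aUp ⊆ b)
    (μA : Finset I → Finset I → ℤ) (hμA : IsMobius A μA)
    (μB : Finset I → Finset I → ℤ) (hμB : IsMobius (A.erase a) μB)
    (H : (c : Finset I) → Ea E c → ℝ)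
    (Q : Fam E A) :
    BT E A μA H Q = BT E (A.erase a) μB H (phiMap E A a Q) := by
  have hzero : coefC A μA a = 0 := by
    rw [coefC_eq_one_sub_card hchain hμA haA,
      filter_ssubset_eq_singleton_of_linear hchain haA hUpA hlt hlin]
    rfl
  have hmin : ∀ c ∈ A, ¬ c ⊂ a := fun c hc hca => hchain c hc a haA aUp hUpA hca hlt
  exact BT_eq_BT_erase E hzero (fun c hc => coefC_erase_of_minimal hchain hμA hμB hmin hc) H Q

open Classical in
theorem stmt14 {I : Type} [Fintype I] [DecidableEq I]
    (E : I → Type) [∀ i, Fintype (E i)] [∀ i, DecidableEq (E i)] [∀ i, Nonempty (E i)]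
    (A : Finset (Finset I)) (hchain : ChainsShort A)
    (a aUp : Finset I) (haA : a ∈ A) (hUpA : aUp ∈ A) (hlt : a ⊂ aUp)
    (hlin : ∀ b ∈ A, a ⊂ b → aUp ⊆ b)
    (μA : Finset I → Finset I → ℤ) (hμA : IsMobius A μA)
    (μB : Finset I → Finset I → ℤ) (hμB : IsMobius (A.erase a) μB)
    (H : (c : Finset I) → Ea E c → ℝ)
    (Q : Fam E A) (hQ : MemL E A Q) :
    BT E A μA H Q = BT E (A.erase a) μB H (phiMap E A a Q) :=
  stmt14_general E A hchain a aUp haA hUpA hlt hlin μA hμA μB hμB H Q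
end
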